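/- arXiv:2103.02426 — 11 statements merged into one kernel-verified Lean document; each statement's English description precedes it below -/
import Mathlib

section
/- Let F be a field, let X be a finite-dimensional F-vector space, let (w_i)_{i∈I} be a basis of X indexed by a finite set I, and let (v_i)_{i∈I} be an arbitrary family of vectors of X. Then the set of scalars λ ∈ F for which the family (w_i + λ·v_i)_{i∈I} is not a basis of X is finite of cardinality at most |I|. -/
/-! The scalars `λ` for which `(w i + λ • v i)` is not a basis are exactly the roots of
`λ ↦ det (1 + λ • A)`, where `A` is the matrix of `v` in the basis `w`. This is a polynomial in `λ`
of degree at most `|I|` taking the value `1` at `λ = 0`, so it has at most `|I|` roots. -/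

open Polynomial

namespace Polynomial

theorem ncard_setOf_isRoot_le_natDegree {R : Type*} [CommRing R] [IsDomain R] {p : R[X]}
    (hp : p ≠ 0) : {x | p.IsRoot x}.ncard ≤ p.natDegree := by
  classical
  have hroots : {x | p.IsRoot x} = ↑p.roots.toFinset := by
    ext x
    simp [mem_roots hp]
  rw [hroots, Set.ncard_coe_finset]
  exact p.roots.toFinset_card_le.trans (card_roots' p)

end Polynomial

namespace Matrix

variable {n R : Type*} [Fintype n] [DecidableEq n] [CommRing R]

theorem eval_det_one_add_X_smul (A : Matrix n n R) (r : R) :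
    (det (1 + (X : R[X]) • A.map C)).eval r = det (1 + r • A) := by
  rw [← coe_evalRingHom, RingHom.map_det]
  congr 1
  ext i j
  by_cases h : i = j <;> simp [h] <;> ring

theorem natDegree_det_one_add_X_smul_le (A : Matrix n n R) :
    (det (1 + (X : R[X]) • A.map C)).natDegree ≤ Fintype.card n := by
  simpa [add_comm] using natDegree_det_X_add_C_le A 1

theorem det_one_add_X_smul_ne_zero [Nontrivial R] (A : Matrix n n R) :
    det (1 + (X : R[X]) • A.map C) ≠ 0 := by
  intro h
  simpa [h] using eval_det_one_add_X_smul A 0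

theorem setOf_det_one_add_smul_eq_zero (A : Matrix n n R) :
    {r : R | det (1 + r • A) = 0} = {r | (det (1 + (X : R[X]) • A.map C)).IsRoot r} := by
  simp only [IsRoot, eval_det_one_add_X_smul]

variable [IsDomain R]

theorem finite_setOf_det_one_add_smul_eq_zero (A : Matrix n n R) :
    {r : R | det (1 + r • A) = 0}.Finite := by
  rw [setOf_det_one_add_smul_eq_zero]
  exact finite_setOfPred_isRoot (det_one_add_X_smul_ne_zero A)

theorem ncard_setOf_det_one_add_smul_eq_zero_le (A : Matrix n n R) :
    {r : R | det (1 + r • A) = 0}.ncard ≤ Fintype.card n := by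
  rw [setOf_det_one_add_smul_eq_zero]
  exact (ncard_setOf_isRoot_le_natDegree (det_one_add_X_smul_ne_zero A)).trans
    (natDegree_det_one_add_X_smul_le A)

end Matrix

namespace Module.Basis

variable {ι R M : Type*} [DecidableEq ι]

theorem toMatrix_add_smul [CommRing R] [AddCommGroup M] [Module R M] (w : Basis ι R M)
    (v : ι → M) (r : R) :
    w.toMatrix (fun i => w i + r • v i) = 1 + r • w.toMatrix v := by
  ext i j
  simp [toMatrix_apply, Matrix.one_apply, Finsupp.single_apply, eq_comm]

theorem isBasis_add_smul_iff [Fintype ι] [Field R] [AddCommGroup M] [Module R M] (w : Basis ι R M)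
    (v : ι → M) (r : R) :
    (LinearIndependent R (fun i => w i + r • v i) ∧
        Submodule.span R (Set.range fun i => w i + r • v i) = ⊤) ↔
      (1 + r • w.toMatrix v).det ≠ 0 := by
  rw [is_basis_iff_det w, det_apply, toMatrix_add_smul, isUnit_iff_ne_zero]

end Module.Basis

theorem stmt1_general (F : Type*) [Field F] (X : Type*) [AddCommGroup X] [Module F X]
    (I : Type*) [Fintype I] (w : Module.Basis I F X) (v : I → X) :
    {lam : F | ¬ (LinearIndependent F (fun i => w i + lam • v i) ∧
        Submodule.span F (Set.range fun i => w i + lam • v i) = ⊤)}.Finite ∧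
      {lam : F | ¬ (LinearIndependent F (fun i => w i + lam • v i) ∧
        Submodule.span F (Set.range fun i => w i + lam • v i) = ⊤)}.ncard ≤ Fintype.card I := by
  classical
  have hbad : {lam : F | ¬ (LinearIndependent F (fun i => w i + lam • v i) ∧
      Submodule.span F (Set.range fun i => w i + lam • v i) = ⊤)} =
      {lam | (1 + lam • w.toMatrix v).det = 0} := by
    simp only [w.isBasis_add_smul_iff, not_not]
  rw [hbad]
  exact ⟨Matrix.finite_setOf_det_one_add_smul_eq_zero _,
    Matrix.ncard_setOf_det_one_add_smul_eq_zero_le _⟩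

/-- Let `F` be a field, `X` a finite-dimensional `F`-vector space, `(w i)` a basis of `X`
indexed by a finite type `I`, and `(v i)` an arbitrary family of vectors.  Then the set of
scalars `λ` for which the family `(w i + λ • v i)` fails to be a basis is finite, of
cardinality at most `|I|`. -/
theorem stmt1 (F : Type*) [Field F] (X : Type*) [AddCommGroup X] [Module F X]
    [FiniteDimensional F X] (I : Type*) [Fintype I] (w : Module.Basis I F X) (v : I → X) :
    {lam : F | ¬ (LinearIndependent F (fun i => w i + lam • v i) ∧
        Submodule.span F (Set.range fun i => w i + lam • v i) = ⊤)}.Finite ∧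
      {lam : F | ¬ (LinearIndependent F (fun i => w i + lam • v i) ∧
        Submodule.span F (Set.range fun i => w i + lam • v i) = ⊤)}.ncard ≤ Fintype.card I :=
  stmt1_general F X I w v
end

section
/- Let F be a field, let A be a finite-dimensional unital associative F-algebra of dimension n, let a ∈ A, and let u be a unit of A. Then the set of scalars λ ∈ F for which a + λ·u is not a unit of A is finite of cardinality at most n. -/
/-!
Multiplying on the right by `u⁻¹`, the scalars in question form the spectrum of `b = -(a * u⁻¹)`.
By Cayley–Hamilton, `b` is killed by the characteristic polynomial of left multiplication by `b`,
a nonzero polynomial of degree `n`, and every spectral value of `b` is a root of it.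
-/

open Polynomial

namespace spectrum

variable {F A : Type*} [Field F] [Ring A] [Algebra F A]

theorem eq_zero_of_mem_spectrum_zero {c : F} (hc : c ∈ spectrum F (0 : A)) : c = 0 := by
  by_contra hne
  rw [mem_iff, sub_zero] at hc
  exact hc ((isUnit_iff_ne_zero.mpr hne).map (algebraMap F A))

/-- By the spectral mapping inclusion, `p(μ)` lies in the spectrum of `p(b) = 0`. -/
theorem subset_setOf_isRoot_of_aeval_eq_zero {b : A} {p : F[X]} (hb : aeval b p = 0) :
    spectrum F b ⊆ {μ | p.IsRoot μ} := by
  intro μ hμ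
  have hpμ : eval μ p ∈ spectrum F (aeval b p) := subset_polynomial_aeval b p ⟨μ, hμ, rfl⟩
  rw [hb] at hpμ
  exact eq_zero_of_mem_spectrum_zero hpμ

theorem finite_and_ncard_le_natDegree_of_aeval_eq_zero {b : A} {p : F[X]} (hp : p ≠ 0)
    (hb : aeval b p = 0) :
    (spectrum F b).Finite ∧ (spectrum F b).ncard ≤ p.natDegree := by
  classical
  have hsub : spectrum F b ⊆ (p.roots.toFinset : Set F) := fun μ hμ ↦ by
    simpa [mem_roots hp] using subset_setOf_isRoot_of_aeval_eq_zero hb hμ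
  refine ⟨p.roots.toFinset.finite_toSet.subset hsub, ?_⟩
  calc (spectrum F b).ncard
      ≤ (p.roots.toFinset : Set F).ncard := Set.ncard_le_ncard hsub (Finset.finite_toSet _)
    _ = p.roots.toFinset.card := Set.ncard_coe_finset _
    _ ≤ Multiset.card p.roots := Multiset.toFinset_card_le _
    _ ≤ p.natDegree := card_roots' p

theorem finite_and_ncard_le_finrank [FiniteDimensional F A] (b : A) :
    (spectrum F b).Finite ∧ (spectrum F b).ncard ≤ Module.finrank F A := by
  have h := finite_and_ncard_le_natDegree_of_aeval_eq_zero
    (LinearMap.charpoly_monic (Algebra.lmul F A b)).ne_zero (Algebra.aeval_self_charpoly_lmul b)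
  rwa [LinearMap.charpoly_natDegree] at h

/-- Right multiplication by `u⁻¹` turns `a + λ • u` into `λ - (-(a * u⁻¹))`. -/
theorem setOf_not_isUnit_add_smul_unit (a : A) (u : Aˣ) :
    {lam : F | ¬ IsUnit (a + lam • (u : A))} = spectrum F (-(a * ↑u⁻¹)) := by
  ext lam
  have h : (a + lam • (u : A)) * ↑u⁻¹ = algebraMap F A lam - -(a * ↑u⁻¹) := by
    rw [add_mul, smul_mul_assoc, Units.mul_inv, Algebra.algebraMap_eq_smul_one, sub_neg_eq_add,
      add_comm]
  rw [Set.mem_ofPred_eq, mem_iff, ← h, Units.isUnit_mul_units]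

end spectrum

/-- Let `F` be a field, `A` a finite-dimensional unital associative `F`-algebra of dimension
`n`, `a ∈ A` and `u` a unit of `A`.  Then the set of scalars `λ ∈ F` for which `a + λ • u`
is not a unit of `A` is finite, of cardinality at most `n`. -/
theorem stmt2 (F : Type*) [Field F] (A : Type*) [Ring A] [Algebra F A]
    [FiniteDimensional F A] (n : ℕ) (hn : Module.finrank F A = n) (a : A) (u : Aˣ) :
    {lam : F | ¬ IsUnit (a + lam • (u : A))}.Finite ∧
      {lam : F | ¬ IsUnit (a + lam • (u : A))}.ncard ≤ n := by
  rw [spectrum.setOf_not_isUnit_add_smul_unit, ← hn]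
  exact spectrum.finite_and_ncard_le_finrank _
end

section
/- Let F be an algebraically closed field, G a finite group, A a finite-dimensional unital associative F-algebra, and σ : G → A^× a group homomorphism. Then A has a unital G×G-stable basis if and only if A has a G×G-stable basis Ω such that for every w ∈ Ω there exists a unit u ∈ A^× with σ(f) u σ(g)⁻¹ = u for every pair (f,g) ∈ G×G satisfying σ(f) w σ(g)⁻¹ = w. -/
/-- A `G×G`-stable basis of the interior `G`-algebra `A` (with structural homomorphism `σ`):
an `F`-basis `Ω` with `σ(f) w σ(g)⁻¹ ∈ Ω` for all `w ∈ Ω`, `f g : G`. -/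
def IsStableBasis (F : Type*) [Field F] {G : Type*} [Group G] {A : Type*} [Ring A]
    [Algebra F A] (σ : G →* Aˣ) (Ω : Finset A) : Prop :=
  LinearIndependent F (fun x : (Ω : Set A) => (x : A)) ∧ Submodule.span F (Ω : Set A) = ⊤ ∧
    ∀ w ∈ Ω, ∀ f g : G, (σ f : A) * w * ((σ g)⁻¹ : Aˣ) ∈ Ω

namespace Stmt3Aux

variable {F : Type*} [Field F] {G : Type*} [Group G] {A : Type*} [Ring A] [Algebra F A]

def act (σ : G →* Aˣ) (p : G × G) (a : A) : A := (σ p.1 : A) * a * ((σ p.2)⁻¹ : Aˣ)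

lemma act_one (σ : G →* Aˣ) (a : A) : act σ 1 a = a := by simp [act]

lemma act_mul (σ : G →* Aˣ) (p q : G × G) (a : A) :
    act σ (p * q) a = act σ p (act σ q a) := by
  simp [act, map_mul, mul_inv_rev, mul_assoc]

lemma act_add {A' : Type*} [Ring A'] {G' : Type*}
    [Group G'] (σ : G' →* A'ˣ) (p : G' × G') (x y : A') :
    act σ p (x + y) = act σ p x + act σ p y := by
  simp [act, mul_add, add_mul]

lemma act_smul {F : Type*} [Field F] {A' : Type*} [Ring A'] [Algebra F A'] {G' : Type*}
    [Group G'] (σ : G' →* A'ˣ) (p : G' × G') (c : F) (x : A') :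
    act σ p (c • x) = c • act σ p x := by
  simp [act, mul_smul_comm, smul_mul_assoc]

lemma act_isUnit (σ : G →* Aˣ) (p : G × G) {a : A} (h : IsUnit a) : IsUnit (act σ p a) :=
  ((σ p.1).isUnit.mul h).mul ((σ p.2)⁻¹).isUnit

def actL (F : Type*) [Field F] {G : Type*} [Group G] {A : Type*} [Ring A] [Algebra F A]
    (σ : G →* Aˣ) (p : G × G) : A →ₗ[F] A :=
  (LinearMap.mulRight F (((σ p.2)⁻¹ : Aˣ) : A)).comp (LinearMap.mulLeft F ((σ p.1 : Aˣ) : A))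

lemma actL_apply (σ : G →* Aˣ) (p : G × G) (a : A) : actL F σ p a = act σ p a := rfl

def orbRel (σ : G →* Aˣ) : Setoid A where
  r a b := ∃ p : G × G, act σ p b = a
  iseqv := by
    refine ⟨fun a => ⟨1, act_one σ a⟩, ?_, ?_⟩
    · rintro a b ⟨p, rfl⟩
      exact ⟨p⁻¹, by rw [← act_mul, inv_mul_cancel, act_one]⟩
    · rintro a b c ⟨p, rfl⟩ ⟨q, rfl⟩
      exact ⟨p * q, act_mul σ p q c⟩

noncomputable def rep (σ : G →* Aˣ) (a : A) : A := (Quotient.mk (orbRel σ) a).out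

lemma rep_spec (σ : G →* Aˣ) (a : A) : ∃ p : G × G, act σ p a = rep σ a :=
  Quotient.exact (Quotient.out_eq (Quotient.mk (orbRel σ) a))

lemma rep_act (σ : G →* Aˣ) (p : G × G) (a : A) : rep σ (act σ p a) = rep σ a := by
  unfold rep
  congr 1
  exact Quotient.sound ⟨p, rfl⟩

lemma eval_charpoly_neg {n : Type*} [DecidableEq n] [Fintype n] {R : Type*} [CommRing R]
    (N : Matrix n n R) (c : R) : ((-N).charpoly).eval c = (N + c • 1).det := by
  rw [Matrix.charpoly, ← Polynomial.coe_evalRingHom, RingHom.map_det, RingHom.mapMatrix_apply]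
  congr 1
  ext i j
  by_cases h : i = j
  · subst h
    simp [Matrix.charmatrix_apply_eq, Matrix.map_apply, Matrix.one_apply, add_comm]
  · simp [Matrix.charmatrix_apply_ne _ _ _ h, Matrix.map_apply, Matrix.one_apply, h]

lemma isUnit_of_det_mulLeft_ne_zero [FiniteDimensional F A] {x : A}
    (h : LinearMap.det (LinearMap.mulLeft F x) ≠ 0) : IsUnit x := by
  have hbij : Function.Bijective (LinearMap.mulLeft F x) := by
    have hco : ((LinearMap.mulLeft F x).equivOfDetNeZero h : A →ₗ[F] A)
        = LinearMap.mulLeft F x := LinearEquiv.coe_ofIsUnitDet _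
    rw [← hco]
    exact ((LinearMap.mulLeft F x).equivOfDetNeZero h).bijective
  obtain ⟨z, hz⟩ := hbij.2 1
  simp only [LinearMap.mulLeft_apply] at hz
  have hzx : z * x = 1 := by
    have : x * (z * x) = x * 1 := by rw [← mul_assoc, hz, one_mul, mul_one]
    exact hbij.1 this
  exact ⟨⟨x, z, hz, hzx⟩, rfl⟩

end Stmt3Aux

open Stmt3Aux Polynomial

/-- Theorem 2.4: an interior `G`-algebra `A` has a unital `G×G`-stable basis if and only if
it has a `G×G`-stable basis `Ω` such that, for all `w ∈ Ω`, the stabilizer of `w` in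
`G × G` fixes a unit of `A`. -/
theorem stmt3 (F : Type*) [Field F] [IsAlgClosed F] (G : Type*) [Group G] [Finite G]
    (A : Type*) [Ring A] [Algebra F A] [FiniteDimensional F A] (σ : G →* Aˣ) :
    (∃ Ω : Finset A, IsStableBasis F σ Ω ∧ ∀ w ∈ Ω, IsUnit w) ↔
      (∃ Ω : Finset A, IsStableBasis F σ Ω ∧ ∀ w ∈ Ω, ∃ u : Aˣ,
        ∀ f g : G, (σ f : A) * w * ((σ g)⁻¹ : Aˣ) = w →
          (σ f : A) * (u : A) * ((σ g)⁻¹ : Aˣ) = (u : A)) := by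
  classical
  constructor
  · rintro ⟨Ω, hb, hu⟩
    refine ⟨Ω, hb, fun w hw => ?_⟩
    refine ⟨(hu w hw).unit, fun f g h => ?_⟩
    rw [IsUnit.unit_spec]
    exact h
  · rintro ⟨Ω, ⟨hli, hsp, hstab⟩, hu⟩
    -- restate stability in terms of `act`
    have hstab' : ∀ w ∈ Ω, ∀ p : G × G, act σ p w ∈ Ω := fun w hw p => hstab w hw p.1 p.2
    have hrepΩ : ∀ w ∈ Ω, rep σ w ∈ Ω := by
      intro w hw
      obtain ⟨p, hp⟩ := rep_spec σ w
      rw [← hp]; exact hstab' w hw p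
    -- an equivariant family of units
    have key : ∀ r : A, ∃ u : Aˣ,
        r ∈ Ω → ∀ p : G × G, act σ p r = r → act σ p (u : A) = (u : A) := by
      intro r
      by_cases hr : r ∈ Ω
      · obtain ⟨u, hu'⟩ := hu r hr
        exact ⟨u, fun _ p hp => hu' p.1 p.2 hp⟩
      · exact ⟨1, fun h => absurd h hr⟩
    choose u0 hu0 using key
    set τ : A → G × G := fun w => (rep_spec σ w).choose with hτdef
    have hτ : ∀ w : A, act σ (τ w) w = rep σ w := fun w => (rep_spec σ w).choose_spec
    set uu : A → A := fun w => act σ (τ w)⁻¹ ((u0 (rep σ w) : A)) with huudef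
    have huu_unit : ∀ w : A, IsUnit (uu w) := fun w =>
      act_isUnit σ _ (u0 (rep σ w)).isUnit
    -- equivariance of `uu` on Ω
    have huu_eq : ∀ w ∈ Ω, ∀ p : G × G, uu (act σ p w) = act σ p (uu w) := by
      intro w hw p
      have hr : rep σ (act σ p w) = rep σ w := rep_act σ p w
      set r := rep σ w with hrdef
      set u : A := (u0 r : A) with hudef
      set s := τ (act σ p w) with hsdef
      have hs : act σ (s * p) w = r := by
        rw [act_mul, hτ (act σ p w), hr]
      have hq : act σ (s * p * (τ w)⁻¹) r = r := by
        have hwr : act σ (τ w)⁻¹ r = w := by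
          rw [hrdef, ← hτ w, ← act_mul, inv_mul_cancel, act_one]
        rw [act_mul, hwr, hs]
      have hqu : act σ (s * p * (τ w)⁻¹) u = u :=
        hu0 r (hrepΩ w hw) _ hq
      have : act σ s⁻¹ u = act σ p (act σ (τ w)⁻¹ u) := by
        conv_lhs => rw [← hqu]
        rw [← act_mul, ← act_mul]
        congr 1
        group
      simpa [huudef, hr, hsdef, hrdef, hudef, act_mul] using this
    -- the basis
    let b : Module.Basis (Ω : Set A) F A := Module.Basis.mk hli (by rw [Subtype.range_coe]; exact hsp.ge)
    have hb_apply : ∀ i : (Ω : Set A), b i = (i : A) := fun i => by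
      simp [b, Module.Basis.mk_apply]
    let φ : A →ₗ[F] A := b.constr F (fun i => uu (i : A))
    have hφ : ∀ w (hw : w ∈ Ω), φ w = uu w := by
      intro w hw
      have : φ (b ⟨w, hw⟩) = uu w := b.constr_basis F _ _
      rwa [hb_apply] at this
    have hφeq : ∀ p : G × G, ∀ a : A, φ (act σ p a) = act σ p (φ a) := by
      intro p
      have : φ ∘ₗ actL F σ p = actL F σ p ∘ₗ φ := by
        refine b.ext fun i => ?_
        have hiΩ : (i : A) ∈ Ω := i.2
        have hmem : act σ p (i : A) ∈ Ω := hstab' _ hiΩ p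
        simp only [LinearMap.comp_apply, hb_apply, actL_apply]
        rw [hφ _ hmem, hφ _ hiΩ, huu_eq _ hiΩ]
      intro a
      have := congrArg (fun f => f a) this
      simpa [actL_apply] using this
    -- choose the generic scalar c
    haveI : Fintype (Ω : Set A) := FinsetCoe.fintype Ω
    set M : Matrix (Ω : Set A) (Ω : Set A) F := LinearMap.toMatrix b b φ with hMdef
    set P : Polynomial F := (1 + (X : F[X]) • M.map C).det with hPdef
    have hPeval : ∀ c : F, P.eval c = ((1 : Matrix (Ω : Set A) (Ω : Set A) F) + c • M).det := by
      intro c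
      have : (1 + (X : F[X]) • M.map C).map (evalRingHom c)
          = (1 : Matrix (Ω : Set A) (Ω : Set A) F) + c • M := by
        ext i j
        simp only [Matrix.map_apply, Matrix.add_apply, Matrix.smul_apply, smul_eq_mul,
          Matrix.one_apply, coe_evalRingHom, eval_add, eval_mul, eval_X, eval_C,
          apply_ite (eval c), eval_one, eval_zero]
      rw [hPdef, ← coe_evalRingHom, RingHom.map_det, RingHom.mapMatrix_apply, this]
    have hP0 : P ≠ 0 := by
      intro h
      have := hPeval 0
      rw [h] at this
      simp at this
    -- for each basis vector, the charpoly controlling unitality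
    set xx := fun i : (Ω : Set A) => (((huu_unit (i : A)).unit⁻¹ : Aˣ) : A) * (i : A) with hxxdef
    set q := fun i : (Ω : Set A) =>
      (-(LinearMap.toMatrix b b (LinearMap.mulLeft F (xx i)))).charpoly with hqdef
    have hqmonic : ∀ i, (q i).Monic := fun i => Matrix.charpoly_monic _
    set Q : Polynomial F := P * ∏ i : (Ω : Set A), q i with hQdef
    have hQ0 : Q ≠ 0 :=
      mul_ne_zero hP0 (monic_prod_of_monic _ _ fun i _ => hqmonic i).ne_zero
    obtain ⟨c, hc⟩ := Infinite.exists_notMem_finset Q.roots.toFinset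
    have hcQ : Q.eval c ≠ 0 := by
      intro h
      exact hc (Multiset.mem_toFinset.2 ((mem_roots hQ0).2 h))
    have hcP : P.eval c ≠ 0 := by
      intro h
      apply hcQ
      rw [hQdef, eval_mul, h, zero_mul]
    have hcq : ∀ i, (q i).eval c ≠ 0 := by
      intro i h
      apply hcQ
      rw [hQdef, eval_mul, eval_prod]
      rw [Finset.prod_eq_zero (Finset.mem_univ i) h, mul_zero]
    -- the perturbed map ψ = id + c • φ is invertible
    set ψ : A →ₗ[F] A := LinearMap.id + c • φ with hψdef
    have hψdet : LinearMap.det ψ ≠ 0 := by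
      have : LinearMap.det ψ = ((1 : Matrix (Ω : Set A) (Ω : Set A) F) + c • M).det := by
        rw [← LinearMap.det_toMatrix b, hψdef, map_add, map_smul, LinearMap.toMatrix_id, hMdef]
      rw [this, ← hPeval c]
      exact hcP
    let e : A ≃ₗ[F] A := ψ.equivOfDetNeZero hψdet
    have he : ∀ a : A, e a = ψ a := fun a => rfl
    -- each perturbed basis vector is a unit
    have hunit : ∀ w ∈ Ω, IsUnit (w + c • uu w) := by
      intro w hw
      set i : (Ω : Set A) := ⟨w, hw⟩ with hidef
      have h1 : IsUnit (xx i + c • (1 : A)) := by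
        apply isUnit_of_det_mulLeft_ne_zero (F := F)
        have hmul : LinearMap.mulLeft F (xx i + c • (1 : A))
            = LinearMap.mulLeft F (xx i) + c • LinearMap.id := by
          ext a
          simp [add_mul, smul_mul_assoc]
        have : LinearMap.det (LinearMap.mulLeft F (xx i + c • (1 : A)))
            = (q i).eval c := by
          rw [hmul, ← LinearMap.det_toMatrix b, map_add, map_smul, LinearMap.toMatrix_id,
            hqdef, eval_charpoly_neg]
        rw [this]
        exact hcq i
      have hfactor : w + c • uu w = ((huu_unit w).unit : A) * (xx i + c • (1 : A)) := by
        show w + c • uu w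
            = ((huu_unit w).unit : A) * (((huu_unit w).unit⁻¹ : Aˣ) * w + c • (1 : A))
        rw [mul_add, Units.mul_inv_cancel_left, mul_smul_comm, mul_one, IsUnit.unit_spec]
      rw [hfactor]
      exact (huu_unit w).mul h1
    -- assemble the new basis
    have hψeq : ∀ p : G × G, ∀ a : A, ψ (act σ p a) = act σ p (ψ a) := by
      intro p a
      have h2 : ψ (act σ p a) = act σ p a + c • φ (act σ p a) := by
        rw [hψdef]; rfl
      have h3 : ψ a = a + c • φ a := by rw [hψdef]; rfl
      rw [h2, h3, act_add σ p a (c • φ a), act_smul (F := F) σ p c (φ a), hφeq]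
    have hset : ((Ω.image fun w => e w : Finset A) : Set A) = ⇑e '' (Ω : Set A) :=
      Finset.coe_image
    refine ⟨Ω.image (fun w => e w), ⟨?_, ?_, ?_⟩, ?_⟩
    · rw [hset]
      refine (linearIndepOn_iff_image (e.injective.injOn)).mp ?_
      have h1 := hli.map' (e : A →ₗ[F] A) e.ker
      exact h1
    · rw [hset]
      have : ⇑e '' (Ω : Set A) = ⇑(e : A →ₗ[F] A) '' (Ω : Set A) := rfl
      rw [this, Submodule.span_image, hsp, Submodule.map_top]
      exact LinearMap.range_eq_top_of_surjective _ e.surjective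
    · intro w' hw' f g
      obtain ⟨w, hw, rfl⟩ := Finset.mem_image.mp hw'
      show act σ (f, g) (e w) ∈ _
      have : act σ (f, g) (e w) = e (act σ (f, g) w) := by
        rw [he, he, hψeq]
      rw [this]
      exact Finset.mem_image_of_mem _ (hstab' w hw (f, g))
    · intro w' hw'
      obtain ⟨w, hw, rfl⟩ := Finset.mem_image.mp hw'
      have : e w = w + c • uu w := by
        rw [he, hψdef]
        simp only [LinearMap.add_apply, LinearMap.smul_apply, LinearMap.id_apply]
        rw [hφ w hw]
      rw [this]
      exact hunit w hw
end

section
/- Let F be a field, let A be a finite-dimensional unital associative F-algebra on which a finite group D acts by F-algebra automorphisms, written (g,a) ↦ g·a, let P be a subgroup of D, and let R ⊆ D be a complete set of representatives of the left cosets of P in D. Let i and j be idempotents of A fixed by every element of P, and let r be a unit of A fixed by every element of P with i = r j r⁻¹. Suppose that for every g ∈ D with g ∉ P one has (g·i)i = 0 = i(g·i) and (g·j)j = 0 = j(g·j). Then a := Σ_{g∈R} g·i and b := Σ_{g∈R} g·j are idempotents of A fixed by every element of D; the elements u := Σ_{g∈R} g·(i r j) and v := Σ_{g∈R} g·(j r⁻¹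 i) are fixed by every element of D and satisfy u v = a and v u = b; and there exists a unit c of A fixed by every element of D such that a = c b c⁻¹. -/
open Module

set_option linter.unreachableTactic false
set_option linter.unusedTactic false


section SchurCancel
variable {R : Type*} [Ring R] {X Y T : Type*}
  [AddCommGroup X] [Module R X] [AddCommGroup Y] [Module R Y]
  [AddCommGroup T] [Module R T]

private lemma schur_cancel_aux (ψ : (X × T) ≃ₗ[R] (Y × T))
    (hbij : Function.Bijective fun t : T => (ψ (0, t)).2) :
    Nonempty (X ≃ₗ[R] Y) := by
  classical
  set α : T →ₗ[R] T := (LinearMap.snd R Y T) ∘ₗ (ψ : (X × T) →ₗ[R] Y × T) ∘ₗ (LinearMap.inr R X T) with hα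
  have hαapp : ∀ t, α t = (ψ (0, t)).2 := fun t => rfl
  have hbij' : Function.Bijective α := hbij
  let e : T ≃ₗ[R] T := LinearEquiv.ofBijective α hbij'
  set δ : X →ₗ[R] Y := (LinearMap.fst R Y T) ∘ₗ (ψ : (X × T) →ₗ[R] Y × T) ∘ₗ (LinearMap.inl R X T) with hδ
  set γ : T →ₗ[R] Y := (LinearMap.fst R Y T) ∘ₗ (ψ : (X × T) →ₗ[R] Y × T) ∘ₗ (LinearMap.inr R X T) with hγ
  set β : X →ₗ[R] T := (LinearMap.snd R Y T) ∘ₗ (ψ : (X × T) →ₗ[R] Y × T) ∘ₗ (LinearMap.inl R X T) with hβ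
  set δ' : Y →ₗ[R] X := (LinearMap.fst R X T) ∘ₗ (ψ.symm : (Y × T) →ₗ[R] X × T) ∘ₗ (LinearMap.inl R Y T) with hδ'
  set γ' : T →ₗ[R] X := (LinearMap.fst R X T) ∘ₗ (ψ.symm : (Y × T) →ₗ[R] X × T) ∘ₗ (LinearMap.inr R Y T) with hγ'
  set β' : Y →ₗ[R] T := (LinearMap.snd R X T) ∘ₗ (ψ.symm : (Y × T) →ₗ[R] X × T) ∘ₗ (LinearMap.inl R Y T) with hβ'
  set α' : T →ₗ[R] T := (LinearMap.snd R X T) ∘ₗ (ψ.symm : (Y × T) →ₗ[R] X × T) ∘ₗ (LinearMap.inr R Y T) with hα'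
  have happ : ∀ p : X × T, ψ p = (δ p.1 + γ p.2, β p.1 + α p.2) := by
    intro p
    have : p = ((p.1, 0) : X × T) + (0, p.2) := by simp
    rw [this, map_add]
    simp [hδ, hγ, hβ, hα, Prod.ext_iff]
  have happ' : ∀ p : Y × T, ψ.symm p = (δ' p.1 + γ' p.2, β' p.1 + α' p.2) := by
    intro p
    have : p = ((p.1, 0) : Y × T) + (0, p.2) := by simp
    rw [this, map_add]
    simp [hδ', hγ', hβ', hα', Prod.ext_iff]
  have key1 : ∀ y : Y, δ (δ' y) + γ (β' y) = y ∧ β (δ' y) + α (β' y) = 0 := by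
    intro y
    have h1 : ψ (ψ.symm (y, 0)) = (y, 0) := ψ.apply_symm_apply _
    rw [happ' (y, 0), happ] at h1
    simpa [Prod.ext_iff] using h1
  have key2 : ∀ x : X, δ' (δ x) + γ' (β x) = x ∧ β' (δ x) + α' (β x) = 0 := by
    intro x
    have h1 : ψ.symm (ψ (x, 0)) = (x, 0) := ψ.symm_apply_apply _
    rw [happ (x, 0), happ'] at h1
    simpa [Prod.ext_iff] using h1
  have key3 : ∀ t : T, δ' (γ t) + γ' (α t) = 0 ∧ β' (γ t) + α' (α t) = t := by
    intro t
    have h1 : ψ.symm (ψ (0, t)) = (0, t) := ψ.symm_apply_apply _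
    rw [happ (0, t), happ'] at h1
    simpa [Prod.ext_iff] using h1
  set h : X →ₗ[R] Y := δ - γ ∘ₗ (e.symm : T →ₗ[R] T) ∘ₗ β with hh
  have hesymm : ∀ t, e.symm (α t) = t := fun t => e.symm_apply_apply t
  have heα : ∀ t, α (e.symm t) = t := fun t => e.apply_symm_apply t
  have h1 : ∀ y, h (δ' y) = y := by
    intro y
    have hb : β (δ' y) = α (-β' y) := by
      have := (key1 y).2
      rw [map_neg]; linear_combination (norm := module) this
    have : e.symm (β (δ' y)) = -β' y := by rw [hb, hesymm]
    simp only [hh, LinearMap.sub_apply, LinearMap.comp_apply, LinearEquiv.coe_coe, this, map_neg]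
    have := (key1 y).1
    linear_combination (norm := module) this
  have h2 : ∀ x, δ' (h x) = x := by
    intro x
    have hd : δ' (γ (e.symm (β x))) = -γ' (β x) := by
      have := (key3 (e.symm (β x))).1
      rw [heα] at this
      linear_combination (norm := module) this
    simp only [hh, LinearMap.sub_apply, LinearMap.comp_apply, LinearEquiv.coe_coe, map_sub, hd]
    have := (key2 x).1
    linear_combination (norm := module) this
  exact ⟨LinearEquiv.ofLinear h δ' (by ext y; simp [h1 y]) (by ext x; simp [h2 x])⟩

private lemma schur_cancel [IsSimpleModule R T] (ψ : (X × T) ≃ₗ[R] (Y × T)) :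
    Nonempty (X ≃ₗ[R] Y) := by
  classical
  set α : T →ₗ[R] T := (LinearMap.snd R Y T) ∘ₗ (ψ : (X × T) →ₗ[R] Y × T) ∘ₗ (LinearMap.inr R X T) with hα
  rcases LinearMap.bijective_or_eq_zero α with hbij | hzero
  · exact schur_cancel_aux ψ hbij
  · -- α = 0 : build the swap automorphism θ
    set γ : T →ₗ[R] Y := (LinearMap.fst R Y T) ∘ₗ (ψ : (X × T) →ₗ[R] Y × T) ∘ₗ (LinearMap.inr R X T) with hγ
    set β' : Y →ₗ[R] T := (LinearMap.snd R X T) ∘ₗ (ψ.symm : (Y × T) →ₗ[R] X × T) ∘ₗ (LinearMap.inl R Y T) with hβ'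
    have hψ0 : ∀ t, ψ (0, t) = (γ t, 0) := by
      intro t
      have h2 : (ψ (0, t)).2 = α t := rfl
      rw [Prod.ext_iff]
      exact ⟨rfl, by rw [h2, hzero]; rfl⟩
    have hβγ : ∀ t, β' (γ t) = t := by
      intro t
      have h1 : ψ.symm (γ t, 0) = (0, t) := by rw [← hψ0 t]; exact ψ.symm_apply_apply _
      have h3 : β' (γ t) = (ψ.symm (γ t, 0)).2 := rfl
      rw [h3, h1]
    -- θ : (y, s) ↦ (y - γ (β' y) + γ s, β' y), an involution
    set f : (Y × T) →ₗ[R] (Y × T) :=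
      LinearMap.prod
        ((LinearMap.fst R Y T) - γ ∘ₗ β' ∘ₗ (LinearMap.fst R Y T) + γ ∘ₗ (LinearMap.snd R Y T))
        (β' ∘ₗ (LinearMap.fst R Y T)) with hf
    have hfapp : ∀ p : Y × T, f p = (p.1 - γ (β' p.1) + γ p.2, β' p.1) := fun p => rfl
    have hff : ∀ p, f (f p) = p := by
      intro p
      rw [hfapp, hfapp]
      simp only [map_add, map_sub, hβγ]
      ext <;> simp <;> abel
    set θ : (Y × T) ≃ₗ[R] (Y × T) :=
      LinearEquiv.ofLinear f f (LinearMap.ext fun p => by simp [LinearMap.comp_apply, hff p])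
        (LinearMap.ext fun p => by simp [LinearMap.comp_apply, hff p]) with hθ
    have hθapp : ∀ p, θ p = f p := fun p => rfl
    have hid : ∀ t : T, ((ψ.trans θ) (0, t)).2 = t := by
      intro t
      have h4 : (ψ.trans θ) (0, t) = θ (ψ (0, t)) := rfl
      rw [h4, hψ0 t, hθapp, hfapp]
      simp [hβγ]
    refine schur_cancel_aux (ψ.trans θ) ?_
    have : (fun t : T => ((ψ.trans θ) (0, t)).2) = id := funext hid
    rw [this]
    exact Function.bijective_id

end SchurCancel

universe uK

section Cancel
variable {F : Type*} [Field F] {R : Type*} [Ring R] [Algebra F R]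
variable {X Y : Type*} [AddCommGroup X] [Module R X] [AddCommGroup Y] [Module R Y]

private lemma prod_cancel_triv (K : Type*) [AddCommGroup K] [Module R K] [Subsingleton K]
    (ψ : (X × K) ≃ₗ[R] (Y × K)) : Nonempty (X ≃ₗ[R] Y) := by
  refine ⟨LinearEquiv.ofLinear
    ((LinearMap.fst R Y K) ∘ₗ (ψ : (X × K) →ₗ[R] (Y × K)) ∘ₗ (LinearMap.inl R X K))
    ((LinearMap.fst R X K) ∘ₗ (ψ.symm : (Y × K) →ₗ[R] (X × K)) ∘ₗ (LinearMap.inl R Y K)) ?_ ?_⟩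
  · apply LinearMap.ext; intro y
    have h1 : (((ψ.symm (y, 0)).1, (0 : K)) : X × K) = ψ.symm (y, 0) :=
      Prod.ext rfl (Subsingleton.elim _ _)
    simp only [LinearMap.comp_apply, LinearMap.inl_apply, LinearMap.fst_apply,
      LinearEquiv.coe_coe, LinearMap.id_coe, id_eq]
    rw [h1, ψ.apply_symm_apply]
  · apply LinearMap.ext; intro x
    have h1 : (((ψ (x, 0)).1, (0 : K)) : Y × K) = ψ (x, 0) :=
      Prod.ext rfl (Subsingleton.elim _ _)
    simp only [LinearMap.comp_apply, LinearMap.inl_apply, LinearMap.fst_apply,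
      LinearEquiv.coe_coe, LinearMap.id_coe, id_eq]
    rw [h1, ψ.symm_apply_apply]

private lemma prod_cancel [IsSemisimpleRing R] :
    ∀ (n : ℕ) (K : Type uK) [AddCommGroup K] [Module R K] [Module F K] [IsScalarTower F R K]
      [FiniteDimensional F K],
      Module.finrank F K ≤ n → ((X × K) ≃ₗ[R] (Y × K)) → Nonempty (X ≃ₗ[R] Y) := by
  intro n
  induction n with
  | zero =>
    intro K _ _ _ _ _ hle ψ
    have h0 : Module.finrank F K = 0 := Nat.le_zero.mp hle
    haveI : Subsingleton K := finrank_zero_iff.mp h0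
    exact prod_cancel_triv K ψ
  | succ n ih =>
    intro K _ _ _ _ _ hle ψ
    rcases subsingleton_or_nontrivial K with hs | hnt
    · exact prod_cancel_triv K ψ
    · haveI : IsArtinian R K := isArtinian_of_tower F inferInstance
      haveI : IsAtomic (Submodule R K) := isAtomic_of_orderBot_wellFounded_lt wellFounded_lt
      rcases eq_bot_or_exists_atom_le (⊤ : Submodule R K) with htop | ⟨T, hT, -⟩
      · obtain ⟨x, y, hxy⟩ := exists_pair_ne K
        have hx : x ∈ (⊥ : Submodule R K) := htop ▸ Submodule.mem_top
        have hy : y ∈ (⊥ : Submodule R K) := htop ▸ Submodule.mem_top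
        exact absurd (by rw [(Submodule.mem_bot R).mp hx, (Submodule.mem_bot R).mp hy] : x = y) hxy
      · haveI : IsSimpleModule R T := isSimpleModule_iff_isAtom.mpr hT
        obtain ⟨K₂, hcompl⟩ := exists_isCompl T
        let eK : (↥T × ↥K₂) ≃ₗ[R] K := Submodule.prodEquivOfIsCompl T K₂ hcompl
        haveI : FiniteDimensional F ↥T :=
          FiniteDimensional.of_injective ((T.subtype).restrictScalars F) T.injective_subtype
        haveI : FiniteDimensional F ↥K₂ :=
          FiniteDimensional.of_injective ((K₂.subtype).restrictScalars F) K₂.injective_subtype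
        have hrank : Module.finrank F ↥T + Module.finrank F ↥K₂ = Module.finrank F K := by
          rw [← finrank_prod]
          exact (eK.restrictScalars F).finrank_eq
        haveI : Nontrivial ↥T := Submodule.nontrivial_iff_ne_bot.mpr hT.1
        have hTpos : 0 < Module.finrank F ↥T := finrank_pos
        have hK₂ : Module.finrank F ↥K₂ ≤ n := by omega
        let shX : (X × (↥T × ↥K₂)) ≃ₗ[R] ((X × ↥K₂) × ↥T) :=
          ((LinearEquiv.refl R X).prodCongr (LinearEquiv.prodComm R ↥T ↥K₂)).trans
            (LinearEquiv.prodAssoc R X ↥K₂ ↥T).symm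
        let shY : (Y × (↥T × ↥K₂)) ≃ₗ[R] ((Y × ↥K₂) × ↥T) :=
          ((LinearEquiv.refl R Y).prodCongr (LinearEquiv.prodComm R ↥T ↥K₂)).trans
            (LinearEquiv.prodAssoc R Y ↥K₂ ↥T).symm
        let ψfull : (X × (↥T × ↥K₂)) ≃ₗ[R] (Y × (↥T × ↥K₂)) :=
          (((LinearEquiv.refl R X).prodCongr eK).trans ψ).trans
            ((LinearEquiv.refl R Y).prodCongr eK).symm
        obtain ⟨φ⟩ := schur_cancel ((shX.symm.trans ψfull).trans shY)
        exact ih ↥K₂ hK₂ φ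

end Cancel

section Brauer
variable {S : Type*} [Ring S]

private lemma idem_glue {x y : S} (hx : x * x = x) (hy : y * y = y) (hyx : y * x = 0) :
    (x + (1 - x) * y) * (x + (1 - x) * y) = x + (1 - x) * y := by
  have h1 : x * (1 - x) = 0 := by rw [mul_sub, mul_one, hx, sub_self]
  have h2 : y * (1 - x) = y := by rw [mul_sub, mul_one, hyx, sub_zero]
  have h3 : x * ((1 - x) * y) = 0 := by rw [← mul_assoc, h1, zero_mul]
  have h4 : ((1 - x) * y) * x = 0 := by rw [mul_assoc, hyx, mul_zero]
  have h5 : ((1 - x) * y) * ((1 - x) * y) = (1 - x) * y := by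
    rw [mul_assoc, ← mul_assoc y, h2, hy]
  rw [mul_add, add_mul, add_mul, hx, h3, h4, h5, add_zero, zero_add]

private lemma isCompl_span_idem {e : S} (he : e * e = e) :
    IsCompl (Submodule.span S {e}) (Submodule.span S {1 - e}) := by
  constructor
  · rw [disjoint_iff, eq_bot_iff]
    rintro x ⟨h1, h2⟩
    obtain ⟨s, rfl⟩ := Submodule.mem_span_singleton.mp h1
    obtain ⟨t, ht⟩ := Submodule.mem_span_singleton.mp h2
    simp only [smul_eq_mul] at ht ⊢
    have hx1 : s * e * e = s * e := by rw [mul_assoc, he]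
    have hx2 : s * e * e = 0 := by
      rw [← ht, mul_assoc, sub_mul, one_mul, he, sub_self, mul_zero]
    rw [Submodule.mem_bot, ← hx1, hx2]
  · rw [codisjoint_iff, eq_top_iff]
    intro x _
    have : x = x * e + x * (1 - e) := by rw [mul_sub, mul_one]; abel
    rw [this]
    exact Submodule.add_mem _
      (Submodule.mem_sup_left (Submodule.mem_span_singleton.mpr ⟨x, smul_eq_mul ..⟩))
      (Submodule.mem_sup_right (Submodule.mem_span_singleton.mpr ⟨x, smul_eq_mul ..⟩))

/-- right multiplication as a left-module endomorphism -/
private def rmul (s : S) : S →ₗ[S] S where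
  toFun x := x * s
  map_add' x y := add_mul x y s
  map_smul' c x := by simp [smul_eq_mul, mul_assoc]

private lemma atom_good [IsArtinian S S]
    (hno : ∀ N : Submodule S S, (∀ x ∈ N, ∀ s : S, x * s ∈ N) →
      (∀ x ∈ N, ∀ y ∈ N, x * y = 0) → N = ⊥)
    (M : Submodule S S) (hM : IsAtom M) :
    ∃ e : S, e * e = e ∧ M = Submodule.span S {e} := by
  classical
  -- Step 1: M is not elementwise square-zero
  have hstep1 : ¬(∀ x ∈ M, ∀ y ∈ M, x * y = 0) := by
    intro hz
    set N : Submodule S S := ⨆ s : S, M.map (rmul s) with hN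
    have hMN : M ≤ N := le_iSup_of_le 1 (by
      intro x hx
      exact ⟨x, hx, mul_one x⟩)
    have hC1 : ∀ x ∈ M, ∀ w ∈ N, x * w = 0 := by
      intro x hx w hw
      refine Submodule.iSup_induction (motive := fun z => x * z = 0) _ hw ?_ (mul_zero x) ?_
      · rintro s z ⟨m, hm, rfl⟩
        show x * (m * s) = 0
        rw [← mul_assoc, hz x hx m hm, zero_mul]
      · intro z w hz1 hw1
        rw [mul_add, hz1, hw1, add_zero]
    have hC2 : ∀ w ∈ N, ∀ w' ∈ N, w * w' = 0 := by
      intro w hw w' hw'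
      refine Submodule.iSup_induction (motive := fun z => z * w' = 0) _ hw ?_ (zero_mul w') ?_
      · rintro s z ⟨m, hm, rfl⟩
        show (m * s) * w' = 0
        rw [mul_assoc]
        exact hC1 m hm _ (Submodule.smul_mem N s hw')
      · intro z w2 h1 h2
        rw [add_mul, h1, h2, add_zero]
    have hrs : ∀ w ∈ N, ∀ s : S, w * s ∈ N := by
      intro w hw s
      refine Submodule.iSup_induction (motive := fun z => z * s ∈ N) _ hw ?_
        (by show (0:S) * s ∈ N; rw [zero_mul]; exact N.zero_mem) ?_
      · rintro t z ⟨m, hm, rfl⟩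
        show (m * t) * s ∈ N
        rw [mul_assoc]
        exact le_iSup (fun r => Submodule.map (rmul r) M) (t * s) ⟨m, hm, rfl⟩
      · intro z w2 h1 h2
        rw [add_mul]
        exact N.add_mem h1 h2
    exact hM.1 (eq_bot_iff.mpr (hMN.trans (hno N hrs hC2).le))
  push_neg at hstep1
  obtain ⟨p, hp, q, hq, hpq⟩ := hstep1
  have hq0 : q ≠ 0 := fun h => hpq (by rw [h, mul_zero])
  -- Mq = M
  have hMq : M.map (rmul q) = M := by
    have hle : M.map (rmul q) ≤ M := by
      rintro z ⟨m, hm, rfl⟩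
      exact M.smul_mem m hq
    have hne : M.map (rmul q) ≠ ⊥ := by
      intro h
      exact hpq (by
        have : p * q ∈ M.map (rmul q) := ⟨p, hp, rfl⟩
        rwa [h, Submodule.mem_bot] at this)
    rcases lt_or_eq_of_le hle with hlt | heq
    · exact absurd (hM.2 _ hlt) hne
    · exact heq
  obtain ⟨e, he, heq⟩ : ∃ e ∈ M, e * q = q := by
    have : q ∈ M.map (rmul q) := hMq.symm ▸ hq
    obtain ⟨e, he, hee⟩ := this
    exact ⟨e, he, hee⟩
  have he0 : e ≠ 0 := fun h => hq0 (by rw [← heq, h, zero_mul])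
  -- K = M ⊓ ker (· * q) is ⊥
  set K : Submodule S S := M ⊓ LinearMap.ker (LinearMap.toSpanSingleton S S q) with hK
  have hKbot : K = ⊥ := by
    have hle : K ≤ M := inf_le_left
    have hne : K ≠ M := by
      intro h
      have hek : e ∈ K := h.symm ▸ he
      have h2 : e * q = 0 := by
        have h3 := (Submodule.mem_inf.mp hek).2
        rw [LinearMap.mem_ker, LinearMap.toSpanSingleton_apply, smul_eq_mul] at h3
        exact h3
      exact hq0 (by rw [← heq, h2])
    rcases lt_or_eq_of_le hle with hlt | heq2
    · exact hM.2 _ hlt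
    · exact absurd heq2 hne
  have hee : e * e = e := by
    have hmem : e * e - e ∈ K := by
      refine Submodule.mem_inf.mpr ⟨?_, ?_⟩
      · exact M.sub_mem (M.smul_mem e he) he
      · simp only [LinearMap.mem_ker, LinearMap.toSpanSingleton_apply, smul_eq_mul]
        rw [sub_mul, mul_assoc, heq, heq, sub_self]
    rw [hKbot, Submodule.mem_bot, sub_eq_zero] at hmem
    exact hmem
  refine ⟨e, hee, ?_⟩
  have hle : Submodule.span S {e} ≤ M := Submodule.span_le.mpr (Set.singleton_subset_iff.mpr he)
  have hne : Submodule.span S {e} ≠ ⊥ := by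
    intro h
    exact he0 (by
      have : e ∈ Submodule.span S {e} := Submodule.mem_span_singleton.mpr ⟨1, one_smul _ _⟩
      rwa [h, Submodule.mem_bot] at this)
  rcases lt_or_eq_of_le hle with hlt | heq3
  · exact absurd (hM.2 _ hlt) hne
  · exact heq3.symm

private lemma all_good [IsArtinian S S]
    (hno : ∀ N : Submodule S S, (∀ x ∈ N, ∀ s : S, x * s ∈ N) →
      (∀ x ∈ N, ∀ y ∈ N, x * y = 0) → N = ⊥)
    (I : Submodule S S) : ∃ e : S, e * e = e ∧ I = Submodule.span S {e} := by
  classical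
  by_contra hbad0
  set bad : Set (Submodule S S) := {J | ¬∃ e : S, e * e = e ∧ J = Submodule.span S {e}} with hbadset
  have hne : bad.Nonempty := ⟨I, hbad0⟩
  obtain ⟨M, hMbad, hMmin⟩ := (wellFounded_lt (α := Submodule S S)).has_min bad hne
  haveI : IsAtomic (Submodule S S) := isAtomic_of_orderBot_wellFounded_lt wellFounded_lt
  have hMne : M ≠ ⊥ := by
    intro h
    exact hMbad ⟨0, by rw [mul_zero], by rw [h, Submodule.span_zero_singleton]⟩
  rcases (eq_bot_or_exists_atom_le M) with h | ⟨J, hJ, hJM⟩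
  · exact hMne h
  by_cases hJeq : J = M
  · exact hMbad (hJeq ▸ atom_good hno J hJ)
  have hJlt : J < M := lt_of_le_of_ne hJM hJeq
  obtain ⟨e₁, he₁, hJspan⟩ := atom_good hno J hJ
  have he₁M : e₁ ∈ M := hJM (hJspan ▸ Submodule.mem_span_singleton.mpr ⟨1, one_smul _ _⟩)
  have he₁0 : e₁ ≠ 0 := by
    intro h
    exact hJ.1 (by rw [hJspan, h, Submodule.span_zero_singleton])
  set M' : Submodule S S := M ⊓ LinearMap.ker (LinearMap.toSpanSingleton S S e₁) with hM'
  have hM'M : M' < M := by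
    refine lt_of_le_of_ne inf_le_left ?_
    intro h
    have hmem : e₁ ∈ M' := h.symm ▸ he₁M
    have h2 : e₁ * e₁ = 0 := by
      have h3 := (Submodule.mem_inf.mp hmem).2
      rwa [LinearMap.mem_ker, LinearMap.toSpanSingleton_apply, smul_eq_mul] at h3
    rw [he₁] at h2
    exact he₁0 h2
  have hM'good : ∃ e : S, e * e = e ∧ M' = Submodule.span S {e} := by
    by_contra h
    exact hMmin M' h hM'M
  obtain ⟨e', he', hM'span⟩ := hM'good
  have he'M' : e' ∈ M' := hM'span ▸ Submodule.mem_span_singleton.mpr ⟨1, one_smul _ _⟩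
  have he'e₁ : e' * e₁ = 0 := by
    have h3 := (Submodule.mem_inf.mp he'M').2
    rwa [LinearMap.mem_ker, LinearMap.toSpanSingleton_apply, smul_eq_mul] at h3
  set f := e₁ + (1 - e₁) * e' with hfdef
  have hf : f * f = f := idem_glue he₁ he' he'e₁
  have hfM : f ∈ M := by
    refine M.add_mem he₁M ?_
    have : (1 - e₁) * e' = (1 - e₁) • e' := rfl
    rw [this]
    exact M.smul_mem _ (Submodule.mem_inf.mp he'M').1
  have he₁f : e₁ * f = e₁ := by
    rw [hfdef, mul_add, he₁, ← mul_assoc, mul_sub, mul_one, he₁, sub_self, zero_mul, add_zero]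
  have he'f : e' * f = e' := by
    rw [hfdef, mul_add, he'e₁, ← mul_assoc, mul_sub, mul_one, he'e₁, sub_zero, he', zero_add]
  have hspan : M = Submodule.span S {f} := by
    apply le_antisymm
    · intro x hx
      have hxe₁ : x * e₁ ∈ Submodule.span S {f} := by
        have he₁mem : e₁ ∈ Submodule.span S {f} := by
          rw [← he₁f]
          exact Submodule.smul_mem _ e₁ (Submodule.mem_span_singleton.mpr ⟨1, one_smul _ _⟩)
        have : x * e₁ = x • e₁ := rfl
        rw [this]
        exact Submodule.smul_mem _ x he₁mem
      have hxM' : x - x * e₁ ∈ M' := by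
        refine Submodule.mem_inf.mpr ⟨?_, ?_⟩
        · exact M.sub_mem hx (M.smul_mem x he₁M)
        · simp only [LinearMap.mem_ker, LinearMap.toSpanSingleton_apply, smul_eq_mul]
          rw [sub_mul, mul_assoc, he₁, sub_self]
      have hxrest : x - x * e₁ ∈ Submodule.span S {f} := by
        rw [hM'span] at hxM'
        obtain ⟨s, hs⟩ := Submodule.mem_span_singleton.mp hxM'
        have he'mem : e' ∈ Submodule.span S {f} := by
          rw [← he'f]
          exact Submodule.smul_mem _ e' (Submodule.mem_span_singleton.mpr ⟨1, one_smul _ _⟩)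
        rw [← hs]
        exact Submodule.smul_mem _ s he'mem
      rw [← sub_add_cancel x (x * e₁)]
      exact Submodule.add_mem _ hxrest hxe₁
    · exact Submodule.span_le.mpr (by simpa using hfM)
  exact hMbad ⟨f, hf, hspan⟩

private lemma semisimple_of_no_sqzero [IsArtinian S S]
    (hno : ∀ N : Submodule S S, (∀ x ∈ N, ∀ s : S, x * s ∈ N) →
      (∀ x ∈ N, ∀ y ∈ N, x * y = 0) → N = ⊥) :
    IsSemisimpleRing S := by
  refine { toComplementedLattice := ⟨?_⟩ }
  intro I
  obtain ⟨e, he, hI⟩ := all_good hno I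
  exact ⟨Submodule.span S {1 - e}, hI ▸ isCompl_span_idem he⟩

end Brauer

section Key
universe uS

private lemma mem_span_idem {S : Type*} [Ring S] {e : S} (he : e * e = e) {x : S} :
    x ∈ Submodule.span S {e} ↔ x * e = x := by
  rw [Submodule.mem_span_singleton]
  constructor
  · rintro ⟨s, rfl⟩
    rw [smul_eq_mul, mul_assoc, he]
  · intro h
    exact ⟨x, by rw [smul_eq_mul, h]⟩

private lemma idem_compl {S : Type*} [Ring S] {e : S} (he : e * e = e) :
    (1 - e) * (1 - e) = 1 - e := by
  rw [mul_sub, mul_one, sub_mul, one_mul, he, sub_self, sub_zero]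

private lemma key_semisimple {F : Type*} [Field F] {S : Type*} [Ring S] [Algebra F S]
    [FiniteDimensional F S] [IsSemisimpleRing S] {a b u v : S}
    (ha : a * a = a) (hb : b * b = b)
    (huv : u * v = a) (hvu : v * u = b)
    (hau : a * u = u) (hub : u * b = u) (hbv : b * v = v) (hva : v * a = v) :
    ∃ c : Sˣ, (c : S) * b = a * (c : S) := by
  classical
  have ha' : (1 - a) * (1 - a) = 1 - a := idem_compl ha
  have hb' : (1 - b) * (1 - b) = 1 - b := idem_compl hb
  set Ka := Submodule.span S {a} with hKa
  set Kb := Submodule.span S {b} with hKb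
  set Xa := Submodule.span S {1 - a} with hXa
  set Xb := Submodule.span S {1 - b} with hXb
  let toab : ↥Ka →ₗ[S] ↥Kb :=
    { toFun := fun x => ⟨(x : S) * u, (mem_span_idem hb).mpr (by rw [mul_assoc, hub])⟩
      map_add' := fun x y => Subtype.ext (by simp [add_mul])
      map_smul' := fun s x => Subtype.ext (by simp [smul_eq_mul, mul_assoc]) }
  let toba : ↥Kb →ₗ[S] ↥Ka :=
    { toFun := fun y => ⟨(y : S) * v, (mem_span_idem ha).mpr (by rw [mul_assoc, hva])⟩
      map_add' := fun x y => Subtype.ext (by simp [add_mul])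
      map_smul' := fun s x => Subtype.ext (by simp [smul_eq_mul, mul_assoc]) }
  have hba : ∀ x : ↥Ka, toba (toab x) = x := by
    intro x
    apply Subtype.ext
    show ((x : S) * u) * v = (x : S)
    rw [mul_assoc, huv]
    exact (mem_span_idem ha).mp x.2
  have hab : ∀ y : ↥Kb, toab (toba y) = y := by
    intro y
    apply Subtype.ext
    show ((y : S) * v) * u = (y : S)
    rw [mul_assoc, hvu]
    exact (mem_span_idem hb).mp y.2
  let φab : ↥Ka ≃ₗ[S] ↥Kb :=
    LinearEquiv.ofLinear toab toba (LinearMap.ext fun y => hab y) (LinearMap.ext fun x => hba x)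
  have hcompl_a : IsCompl Xa Ka := (isCompl_span_idem ha).symm
  have hcompl_b : IsCompl Xb Kb := (isCompl_span_idem hb).symm
  let E1 := Submodule.prodEquivOfIsCompl Xa Ka hcompl_a
  let E2 := Submodule.prodEquivOfIsCompl Xb Kb hcompl_b
  let ψ : (↥Xa × ↥Ka) ≃ₗ[S] (↥Xb × ↥Ka) :=
    (E1.trans E2.symm).trans ((LinearEquiv.refl S ↥Xb).prodCongr φab.symm)
  haveI : FiniteDimensional F ↥Ka :=
    FiniteDimensional.of_injective ((Ka.subtype).restrictScalars F) Ka.injective_subtype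
  obtain ⟨φ⟩ := prod_cancel (F := F) (Module.finrank F ↥Ka) ↥Ka le_rfl ψ
  -- extract elements
  have hx₀mem : (1 - a) ∈ Xa := (mem_span_idem ha').mpr ha'
  have hw₀mem : (1 - b) ∈ Xb := (mem_span_idem hb').mpr hb'
  set x₀ : ↥Xa := ⟨1 - a, hx₀mem⟩ with hx₀
  set w₀ : ↥Xb := ⟨1 - b, hw₀mem⟩ with hw₀
  set y : S := (φ x₀ : S) with hy
  set z : S := (φ.symm w₀ : S) with hz
  have hXaeq : ∀ x : ↥Xa, x = (x : S) • x₀ := by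
    intro x
    apply Subtype.ext
    show (x : S) = (x : S) * (1 - a)
    exact ((mem_span_idem ha').mp x.2).symm
  have hXbeq : ∀ w : ↥Xb, w = (w : S) • w₀ := by
    intro w
    apply Subtype.ext
    show (w : S) = (w : S) * (1 - b)
    exact ((mem_span_idem hb').mp w.2).symm
  have hφ : ∀ x : ↥Xa, (φ x : S) = (x : S) * y := by
    intro x
    have h1 := congrArg Subtype.val (map_smul φ (x : S) x₀)
    rw [SetLike.val_smul, smul_eq_mul] at h1
    calc (φ x : S) = (φ ((x : S) • x₀) : S) := by rw [← hXaeq x]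
    _ = (x : S) * y := h1
  have hφ' : ∀ w : ↥Xb, (φ.symm w : S) = (w : S) * z := by
    intro w
    have h1 := congrArg Subtype.val (map_smul φ.symm (w : S) w₀)
    rw [SetLike.val_smul, smul_eq_mul] at h1
    calc (φ.symm w : S) = (φ.symm ((w : S) • w₀) : S) := by rw [← hXbeq w]
    _ = (w : S) * z := h1
  have hyz : y * z = 1 - a := by
    have h1 := hφ' (φ x₀)
    rw [φ.symm_apply_apply] at h1
    rw [← hy] at h1
    exact h1.symm
  have hzy : z * y = 1 - b := by
    have h1 := hφ (φ.symm w₀)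
    rw [φ.apply_symm_apply] at h1
    rw [← hz] at h1
    exact h1.symm
  have hay : a * y = 0 := by
    have h1 : ((1 - a) • x₀ : ↥Xa) = x₀ := Subtype.ext (by
      show (1 - a) * (1 - a) = 1 - a
      exact ha')
    have h2 : (1 - a) * y = y := by
      have h2a : (1 - a) • φ x₀ = φ x₀ := by rw [← map_smul, h1]
      have h2d := congrArg Subtype.val h2a
      rw [SetLike.val_smul, smul_eq_mul] at h2d
      exact h2d
    rw [sub_mul, one_mul] at h2
    exact sub_eq_self.mp h2
  have hbz : b * z = 0 := by
    have h1 : ((1 - b) • w₀ : ↥Xb) = w₀ := Subtype.ext (by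
      show (1 - b) * (1 - b) = 1 - b
      exact hb')
    have h2 : (1 - b) * z = z := by
      have h2a : (1 - b) • φ.symm w₀ = φ.symm w₀ := by rw [← map_smul, h1]
      have h2d := congrArg Subtype.val h2a
      rw [SetLike.val_smul, smul_eq_mul] at h2d
      exact h2d
    rw [sub_mul, one_mul] at h2
    exact sub_eq_self.mp h2
  have hyb : y * b = 0 := by
    have h1 : y * (1 - b) = y := (mem_span_idem hb').mp (φ x₀).2
    rw [mul_sub, mul_one] at h1
    exact sub_eq_self.mp h1
  have hza : z * a = 0 := by
    have h1 : z * (1 - a) = z := (mem_span_idem ha').mp (φ.symm w₀).2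
    rw [mul_sub, mul_one] at h1
    exact sub_eq_self.mp h1
  -- the unit
  have hcd : (u + y) * (v + z) = 1 := by
    have h1 : u * z = 0 := by rw [← hub, mul_assoc, hbz, mul_zero]
    have h2 : y * v = 0 := by rw [← hbv, ← mul_assoc, hyb, zero_mul]
    rw [mul_add, add_mul, add_mul, huv, h1, h2, hyz]
    abel
  have hdc : (v + z) * (u + y) = 1 := by
    have h1 : v * y = 0 := by rw [← hva, mul_assoc, hay, mul_zero]
    have h2 : z * u = 0 := by rw [← hau, ← mul_assoc, hza, zero_mul]
    rw [mul_add, add_mul, add_mul, hvu, h1, h2, hzy]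
    abel
  refine ⟨⟨u + y, v + z, hcd, hdc⟩, ?_⟩
  show (u + y) * b = a * (u + y)
  rw [add_mul, hub, hyb, mul_add, hau, hay]

private lemma key (F : Type*) [Field F] :
    ∀ (n : ℕ) (S : Type uS) [Ring S] [Algebra F S] [FiniteDimensional F S],
      Module.finrank F S ≤ n → ∀ a b u v : S, a * a = a → b * b = b →
      u * v = a → v * u = b → a * u = u → u * b = u → b * v = v → v * a = v →
      ∃ c : Sˣ, (c : S) * b = a * (c : S) := by
  intro n
  induction n with
  | zero =>
    intro S _ _ _ hle a b u v _ _ _ _ _ _ _ _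
    haveI : Subsingleton S := Module.finrank_zero_iff.mp (Nat.le_zero.mp hle)
    exact ⟨1, Subsingleton.elim _ _⟩
  | succ n ih =>
    intro S _ _ _ hle a b u v ha hb huv hvu hau hub hbv hva
    by_cases hN : ∃ N : Submodule S S, N ≠ ⊥ ∧ (∀ x ∈ N, ∀ s : S, x * s ∈ N) ∧
        (∀ x ∈ N, ∀ y ∈ N, x * y = 0)
    · obtain ⟨N, hNne, hNr, hNz⟩ := hN
      obtain ⟨x₁, hx₁N, hx₁ne⟩ := Submodule.exists_mem_ne_zero_of_ne_bot hNne
      set I : TwoSidedIdeal S := TwoSidedIdeal.mk' (N : Set S)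
        N.zero_mem (fun hx hy => N.add_mem hx hy) (fun hx => N.neg_mem hx)
        (fun hy => N.smul_mem _ hy)
        (fun hx => hNr _ hx _) with hI
      set Q := I.ringCon.Quotient with hQ
      set π : S →+* Q := RingCon.mk' I.ringCon with hπ
      have hπsurj : Function.Surjective π := fun q => Quotient.inductionOn' q (fun x => ⟨x, rfl⟩)
      have hker : ∀ x : S, π x = 0 ↔ x ∈ N := by
        intro x
        constructor
        · intro h
          have h2 : I.ringCon x 0 := Quotient.eq''.mp h
          have h3 := (I.rel_iff x 0).mp h2
          rw [sub_zero, hI, TwoSidedIdeal.mem_mk'] at h3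
          exact h3
        · intro h
          refine Quotient.sound' ((I.rel_iff x 0).mpr ?_)
          rw [sub_zero, hI, TwoSidedIdeal.mem_mk']
          exact h
      letI algQ : Algebra F Q := RingHom.toAlgebra' (π.comp (algebraMap F S)) (by
        intro c q
        obtain ⟨x, rfl⟩ := hπsurj q
        rw [RingHom.comp_apply, ← map_mul, ← map_mul, Algebra.commutes])
      have halg : algebraMap F Q = π.comp (algebraMap F S) := rfl
      let πₗ : S →ₗ[F] Q :=
        { toFun := π
          map_add' := map_add π
          map_smul' := by
            intro f x
            simp only [RingHom.id_apply]
            rw [Algebra.smul_def, map_mul, Algebra.smul_def, halg, RingHom.comp_apply] }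
      haveI : FiniteDimensional F Q := Module.Finite.of_surjective πₗ hπsurj
      have hrank : Module.finrank F Q < Module.finrank F S := by
        have e := LinearMap.quotKerEquivOfSurjective πₗ hπsurj
        have h1 : Module.finrank F (S ⧸ LinearMap.ker πₗ)
            + Module.finrank F (LinearMap.ker πₗ) = Module.finrank F S :=
          Submodule.finrank_quotient_add_finrank _
        have h2 : Module.finrank F (S ⧸ LinearMap.ker πₗ) = Module.finrank F Q := e.finrank_eq
        have h3 : 0 < Module.finrank F (LinearMap.ker πₗ) := by
          haveI : Nontrivial (LinearMap.ker πₗ) := by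
            refine Submodule.nontrivial_iff_ne_bot.mpr ?_
            intro hk
            apply hx₁ne
            have hmem : x₁ ∈ LinearMap.ker πₗ := by
              rw [LinearMap.mem_ker]
              show π x₁ = 0
              exact (hker x₁).mpr hx₁N
            rwa [hk, Submodule.mem_bot] at hmem
          exact Module.finrank_pos
        omega
      obtain ⟨cb, hcb⟩ := ih Q (by omega) (π a) (π b) (π u) (π v)
        (by rw [← map_mul, ha]) (by rw [← map_mul, hb]) (by rw [← map_mul, huv])
        (by rw [← map_mul, hvu]) (by rw [← map_mul, hau]) (by rw [← map_mul, hub])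
        (by rw [← map_mul, hbv]) (by rw [← map_mul, hva])
      obtain ⟨c₀, hc₀⟩ := hπsurj (cb : Q)
      obtain ⟨d₀, hd₀⟩ := hπsurj ((cb⁻¹ : Qˣ) : Q)
      have hm₁N : c₀ * d₀ - 1 ∈ N := by
        rw [← hker, map_sub, map_mul, map_one, hc₀, hd₀, Units.mul_inv, sub_self]
      have hm₂N : d₀ * c₀ - 1 ∈ N := by
        rw [← hker, map_sub, map_mul, map_one, hc₀, hd₀, Units.inv_mul, sub_self]
      set m₁ := c₀ * d₀ - 1 with hm₁def
      set m₂ := d₀ * c₀ - 1 with hm₂def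
      have hcd₀ : c₀ * d₀ = 1 + m₁ := by rw [hm₁def]; abel
      have hdc₀ : d₀ * c₀ = 1 + m₂ := by rw [hm₂def]; abel
      have hr₁ : c₀ * (d₀ * (1 - m₁)) = 1 := by
        rw [← mul_assoc, hcd₀, mul_sub, mul_one, add_mul, one_mul, hNz _ hm₁N _ hm₁N]
        abel
      have hl₁ : ((1 - m₂) * d₀) * c₀ = 1 := by
        rw [mul_assoc, hdc₀, sub_mul, one_mul, mul_add, mul_one, hNz _ hm₂N _ hm₂N]
        abel
      set c₀inv := d₀ * (1 - m₁) with hc₀inv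
      have hinv2 : c₀inv * c₀ = 1 := by
        have heq : (1 - m₂) * d₀ = c₀inv := by
          calc (1 - m₂) * d₀ = ((1 - m₂) * d₀) * (c₀ * c₀inv) := by rw [hr₁, mul_one]
          _ = (((1 - m₂) * d₀) * c₀) * c₀inv := by rw [← mul_assoc]
          _ = c₀inv := by rw [hl₁, one_mul]
        rw [← heq, hl₁]
      set cunit : Sˣ := ⟨c₀, c₀inv, hr₁, hinv2⟩ with hcunit
      set e := c₀ * b * c₀inv with he
      have hcan : ∀ x : S, c₀inv * (c₀ * x) = x := fun x => by
        rw [← mul_assoc, hinv2, one_mul]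
      have hee : e * e = e := by
        rw [he]
        simp only [mul_assoc, hcan]
        rw [← mul_assoc b b, hb]
      have hπm₁ : π m₁ = 0 := (hker m₁).mpr hm₁N
      have hπc₀inv : π c₀inv = ((cb⁻¹ : Qˣ) : Q) := by
        rw [hc₀inv, map_mul, map_sub, map_one, hπm₁, sub_zero, mul_one, hd₀]
      have hπe : π e = π a := by
        rw [he, map_mul, map_mul, hc₀, hπc₀inv, hcb]
        exact Units.mul_inv_cancel_right _ _
      have hmN : e - a ∈ N := by
        rw [← hker, map_sub, hπe, sub_self]
      set zc := e * a + (1 - e) * (1 - a) with hzc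
      have hw : zc - 1 = e * (a - e) + (e - a) * a := by
        have h1 : e * (a - e) = e * a - e := by rw [mul_sub, hee]
        have h2 : (e - a) * a = e * a - a := by rw [sub_mul, ha]
        have h3 : (1 - e) * (1 - a) = 1 - e - (a - e * a) := by
          rw [mul_sub, mul_one, sub_mul, one_mul]
        rw [h1, h2, hzc, h3]
        abel
      have hwN : zc - 1 ∈ N := by
        rw [hw]
        refine N.add_mem ?_ (hNr _ hmN a)
        have h4 : a - e = -(e - a) := by abel
        have h5 : e * (a - e) = e • (-(e - a)) := by rw [h4, smul_eq_mul]
        rw [h5]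
        exact N.smul_mem e (N.neg_mem hmN)
      set w := zc - 1 with hwdef
      have hzc1 : zc = 1 + w := by rw [hwdef]; abel
      have hww : w * w = 0 := hNz _ hwN _ hwN
      have hzu1 : zc * (1 - w) = 1 := by
        rw [hzc1, add_mul, one_mul, mul_sub, mul_one, hww]
        abel
      have hzu2 : (1 - w) * zc = 1 := by
        rw [hzc1, mul_add, mul_one, sub_mul, one_mul, hww]
        abel
      set zunit : Sˣ := ⟨zc, 1 - w, hzu1, hzu2⟩ with hzunit
      have h7 : (1 - a) * a = 0 := by rw [sub_mul, one_mul, ha, sub_self]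
      have hza2 : zc * a = e * a := by
        rw [hzc, add_mul, mul_assoc e a a, ha, mul_assoc (1 - e) (1 - a) a, h7, mul_zero, add_zero]
      have h6 : e * (1 - e) = 0 := by rw [mul_sub, mul_one, hee, sub_self]
      have hez : e * zc = e * a := by
        rw [hzc, mul_add, ← mul_assoc e e a, hee, ← mul_assoc e (1 - e) (1 - a), h6,
          zero_mul, add_zero]
      have hez' : e * zc = zc * a := by rw [hez, hza2]
      have hcb' : c₀ * b = e * c₀ := by
        rw [he, mul_assoc, hinv2, mul_one]
      refine ⟨zunit⁻¹ * cunit, ?_⟩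
      have hzinv : ((zunit⁻¹ : Sˣ) : S) * e = a * ((zunit⁻¹ : Sˣ) : S) := by
        calc ((zunit⁻¹ : Sˣ) : S) * e
            = ((zunit⁻¹ : Sˣ) : S) * e * ((zunit : Sˣ) * ((zunit⁻¹ : Sˣ) : S)) := by
              rw [Units.mul_inv, mul_one]
        _ = ((zunit⁻¹ : Sˣ) : S) * (e * (zunit : Sˣ)) * ((zunit⁻¹ : Sˣ) : S) := by
              rw [← mul_assoc, mul_assoc ((zunit⁻¹ : Sˣ) : S) e]
        _ = ((zunit⁻¹ : Sˣ) : S) * ((zunit : Sˣ) * a) * ((zunit⁻¹ : Sˣ) : S) := by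
              show _ * (e * zc) * _ = _ * (zc * a) * _
              rw [hez']
        _ = a * ((zunit⁻¹ : Sˣ) : S) := by rw [← mul_assoc, Units.inv_mul, one_mul]
      show ((zunit⁻¹ : Sˣ) : S) * c₀ * b = a * (((zunit⁻¹ : Sˣ) : S) * c₀)
      calc ((zunit⁻¹ : Sˣ) : S) * c₀ * b
          = ((zunit⁻¹ : Sˣ) : S) * (c₀ * b) := by rw [mul_assoc ((zunit⁻¹ : Sˣ) : S) c₀ b]
      _ = ((zunit⁻¹ : Sˣ) : S) * (e * c₀) := by rw [hcb']
      _ = (((zunit⁻¹ : Sˣ) : S) * e) * c₀ := by rw [mul_assoc ((zunit⁻¹ : Sˣ) : S) e c₀]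
      _ = (a * ((zunit⁻¹ : Sˣ) : S)) * c₀ := by rw [hzinv]
      _ = a * (((zunit⁻¹ : Sˣ) : S) * c₀) := by rw [mul_assoc a ((zunit⁻¹ : Sˣ) : S) c₀]
    · push_neg at hN
      have hno : ∀ N : Submodule S S, (∀ x ∈ N, ∀ s : S, x * s ∈ N) →
          (∀ x ∈ N, ∀ y ∈ N, x * y = 0) → N = ⊥ := by
        intro N h1 h2
        by_contra hne
        obtain ⟨x, hx, y, hy, hxy⟩ := hN N hne h1
        exact hxy (h2 x hx y hy)
      haveI : IsArtinian S S := isArtinian_of_tower F inferInstance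
      haveI : IsSemisimpleRing S := semisimple_of_no_sqzero hno
      exact key_semisimple (F := F) ha hb huv hvu hau hub hbv hva

end Key

section Trace
variable {A : Type*} [Ring A] {D : Type*} [Group D] [MulSemiringAction D A]
variable {P : Subgroup D} {R : Finset D}

private lemma rep_unique (hR : ∀ g : D, ∃! r : D, r ∈ R ∧ g⁻¹ * r ∈ P)
    {g h : D} (hg : g ∈ R) (hh : h ∈ R) (hP : g⁻¹ * h ∈ P) : g = h := by
  obtain ⟨r₀, _, huniq⟩ := hR g
  have h1 : g = r₀ := huniq g ⟨hg, by simpa using P.one_mem⟩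
  have h2 : h = r₀ := huniq h ⟨hh, hP⟩
  rw [h1, h2]

private lemma smul_trace (hR : ∀ g : D, ∃! r : D, r ∈ R ∧ g⁻¹ * r ∈ P)
    {x : A} (hx : ∀ p ∈ P, p • x = x) (d : D) :
    d • (∑ g ∈ R, g • x) = ∑ g ∈ R, g • x := by
  classical
  choose ρ hρ using hR
  have hρmem : ∀ g, ρ g ∈ R := fun g => (hρ g).1.1
  have hρP : ∀ g, g⁻¹ * ρ g ∈ P := fun g => (hρ g).1.2
  have hρeq : ∀ g, ∀ r, r ∈ R → g⁻¹ * r ∈ P → r = ρ g := fun g r hr hp => (hρ g).2 r ⟨hr, hp⟩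
  have hρfix : ∀ g ∈ R, ρ g = g := fun g hg =>
    (hρeq g g hg (by simpa using P.one_mem)).symm
  have hρsmul : ∀ g, ρ g • x = g • x := by
    intro g
    have h1 : ρ g = g * (g⁻¹ * ρ g) := by group
    rw [h1, mul_smul, hx _ (hρP g)]
  have hcoset : ∀ g k, g⁻¹ * k ∈ P → ρ g = ρ k := by
    intro g k hp
    refine (hρeq g (ρ k) (hρmem k) ?_).symm
    have h1 : g⁻¹ * ρ k = (g⁻¹ * k) * (k⁻¹ * ρ k) := by group
    rw [h1]
    exact P.mul_mem hp (hρP k)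
  rw [Finset.smul_sum]
  refine Finset.sum_bij' (fun g _ => ρ (d * g)) (fun g _ => ρ (d⁻¹ * g))
    (fun g _ => hρmem _) (fun g _ => hρmem _) ?_ ?_ ?_
  · intro g hg
    show ρ (d⁻¹ * ρ (d * g)) = g
    have h1 : g⁻¹ * (d⁻¹ * ρ (d * g)) = (d * g)⁻¹ * ρ (d * g) := by group
    have h2 : ρ g = ρ (d⁻¹ * ρ (d * g)) := by
      refine hcoset g (d⁻¹ * ρ (d * g)) ?_
      rw [h1]; exact hρP (d * g)
    rw [← h2, hρfix g hg]
  · intro g hg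
    show ρ (d * ρ (d⁻¹ * g)) = g
    have h1 : g⁻¹ * (d * ρ (d⁻¹ * g)) = (d⁻¹ * g)⁻¹ * ρ (d⁻¹ * g) := by group
    have h2 : ρ g = ρ (d * ρ (d⁻¹ * g)) := by
      refine hcoset g (d * ρ (d⁻¹ * g)) ?_
      rw [h1]; exact hρP (d⁻¹ * g)
    rw [← h2, hρfix g hg]
  · intro g _
    show d • (g • x) = ρ (d * g) • x
    rw [← mul_smul, hρsmul (d * g)]

private lemma trace_mul_trace (hR : ∀ g : D, ∃! r : D, r ∈ R ∧ g⁻¹ * r ∈ P)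
    {x y z : A} (h0 : ∀ k : D, k ∉ P → x * (k • y) = 0) (hxy : x * y = z) :
    (∑ g ∈ R, g • x) * (∑ g ∈ R, g • y) = ∑ g ∈ R, g • z := by
  classical
  rw [Finset.sum_mul_sum]
  refine Finset.sum_congr rfl ?_
  intro g hg
  have hzero : ∀ h ∈ R, h ≠ g → (g • x) * (h • y) = 0 := by
    intro h hh hne
    have hk : g⁻¹ * h ∉ P := fun hp => hne ((rep_unique hR hg hh hp).symm)
    have h1 : h • y = g • ((g⁻¹ * h) • y) := by
      rw [← mul_smul, mul_inv_cancel_left]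
    rw [h1, ← smul_mul', h0 _ hk, smul_zero]
  rw [Finset.sum_eq_single_of_mem g hg hzero, ← smul_mul', hxy]

end Trace

/-- Theorem 3.1 (together with the construction in its proof): let a finite group `D` act on
a finite-dimensional `F`-algebra `A` by algebra automorphisms, let `P ≤ D`, let `R` be a set
of representatives of the left cosets of `P` in `D`, let `i`, `j` be `P`-fixed idempotents
and `r` a `P`-fixed unit with `i = r j r⁻¹`, and suppose the `D`-conjugates of `i` (resp.
`j`) outside `P` are orthogonal to `i` (resp. `j`).  Then `a = tr_P^D(i)` and
`b = tr_P^D(j)` are `D`-fixed idempotents, `u = tr_P^D(irj)` and `v = tr_P^D(jr⁻¹i)` are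
`D`-fixed with `uv = a`, `vu = b`, and `a`, `b` are conjugate by a `D`-fixed unit. -/
theorem stmt5 (F : Type*) [Field F] (A : Type*) [Ring A] [Algebra F A]
    [FiniteDimensional F A] (D : Type*) [Group D] [Finite D]
    [MulSemiringAction D A] [SMulCommClass D F A]
    (P : Subgroup D) (R : Finset D)
    (hR : ∀ g : D, ∃! r : D, r ∈ R ∧ g⁻¹ * r ∈ P)
    (i j : A) (hi : i * i = i) (hj : j * j = j)
    (hiP : ∀ u ∈ P, u • i = i) (hjP : ∀ u ∈ P, u • j = j)
    (r : Aˣ) (hrP : ∀ u ∈ P, u • (r : A) = (r : A)) (hij : i = (r : A) * j * ((r⁻¹ : Aˣ) : A))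
    (horth : ∀ g : D, g ∉ P →
      (g • i) * i = 0 ∧ i * (g • i) = 0 ∧ (g • j) * j = 0 ∧ j * (g • j) = 0) :
    let a := ∑ g ∈ R, g • i
    let b := ∑ g ∈ R, g • j
    let u := ∑ g ∈ R, g • (i * (r : A) * j)
    let v := ∑ g ∈ R, g • (j * ((r⁻¹ : Aˣ) : A) * i)
    (a * a = a ∧ ∀ d : D, d • a = a) ∧
    (b * b = b ∧ ∀ d : D, d • b = b) ∧
    (∀ d : D, d • u = u) ∧ (∀ d : D, d • v = v) ∧
    u * v = a ∧ v * u = b ∧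
    ∃ c : Aˣ, (∀ d : D, d • (c : A) = (c : A)) ∧ a = (c : A) * b * ((c⁻¹ : Aˣ) : A) := by
  intro a b u v
  classical
  -- derived multiplicative identities
  have hri : (r : A) * j = i * (r : A) := by
    rw [hij, mul_assoc ((r : A) * j) ((r⁻¹ : Aˣ) : A) (r : A), Units.inv_mul, mul_one]
  have hir : ((r⁻¹ : Aˣ) : A) * i = j * ((r⁻¹ : Aˣ) : A) := by
    rw [hij, ← mul_assoc, ← mul_assoc, Units.inv_mul, one_mul]
  have hu1 : i * (r : A) * j = (r : A) * j := by
    rw [← hri, mul_assoc, hj]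
  have hv1 : j * ((r⁻¹ : Aˣ) : A) * i = ((r⁻¹ : Aˣ) : A) * i := by
    rw [← hir, mul_assoc, hi]
  have d3 : (i * (r : A) * j) * (j * ((r⁻¹ : Aˣ) : A) * i) = i := by
    rw [hu1, hv1, mul_assoc, ← mul_assoc j, ← hir, mul_assoc, hi, ← mul_assoc,
      Units.mul_inv, one_mul]
  have d4 : (j * ((r⁻¹ : Aˣ) : A) * i) * (i * (r : A) * j) = j := by
    rw [hv1, hu1, mul_assoc, ← mul_assoc i, ← hri, mul_assoc, hj, ← mul_assoc,
      Units.inv_mul, one_mul]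
  have d5 : i * (i * (r : A) * j) = i * (r : A) * j := by
    rw [← mul_assoc, ← mul_assoc, hi]
  have d6 : (i * (r : A) * j) * j = i * (r : A) * j := by rw [mul_assoc, hj]
  have d7 : j * (j * ((r⁻¹ : Aˣ) : A) * i) = j * ((r⁻¹ : Aˣ) : A) * i := by
    rw [← mul_assoc, ← mul_assoc, hj]
  have d8 : (j * ((r⁻¹ : Aˣ) : A) * i) * i = j * ((r⁻¹ : Aˣ) : A) * i := by
    rw [mul_assoc, hi]
  -- P-fixedness of the building blocks
  have hrinvP : ∀ p ∈ P, p • ((r⁻¹ : Aˣ) : A) = ((r⁻¹ : Aˣ) : A) := by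
    intro p hp
    have h1 : (r : A) * (p • ((r⁻¹ : Aˣ) : A)) = 1 := by
      rw [← hrP p hp, ← smul_mul', Units.mul_inv, smul_one]
    calc p • ((r⁻¹ : Aˣ) : A)
        = (((r⁻¹ : Aˣ) : A) * (r : A)) * (p • ((r⁻¹ : Aˣ) : A)) := by
          rw [Units.inv_mul, one_mul]
    _ = ((r⁻¹ : Aˣ) : A) * ((r : A) * (p • ((r⁻¹ : Aˣ) : A))) := by rw [mul_assoc]
    _ = ((r⁻¹ : Aˣ) : A) := by rw [h1, mul_one]
  have hirjP : ∀ p ∈ P, p • (i * (r : A) * j) = i * (r : A) * j := fun p hp => by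
    rw [smul_mul', smul_mul', hiP p hp, hrP p hp, hjP p hp]
  have hjriP : ∀ p ∈ P, p • (j * ((r⁻¹ : Aˣ) : A) * i) = j * ((r⁻¹ : Aˣ) : A) * i :=
    fun p hp => by
    rw [smul_mul', smul_mul', hjP p hp, hrinvP p hp, hiP p hp]
  -- product helpers
  have mul3 : ∀ p q t : A, p * q = 0 → p * (q * t) = 0 := fun p q t h => by
    rw [← mul_assoc, h, zero_mul]
  have mul3' : ∀ p q t : A, q * t = 0 → (p * q) * t = 0 := fun p q t h => by
    rw [mul_assoc, h, mul_zero]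
  have mul4 : ∀ p q w t : A, q * w = 0 → (p * q) * (w * t) = 0 := fun p q w t h => by
    rw [mul_assoc, ← mul_assoc q w t, h, zero_mul, mul_zero]
  have hksmul3 : ∀ (k : D) (x y z : A), k • (x * y * z) = (k • x) * ((k • y) * (k • z)) := by
    intro k x y z
    rw [smul_mul', smul_mul', mul_assoc]
  -- orthogonality consequences
  have h0_aa : ∀ k : D, k ∉ P → i * (k • i) = 0 := fun k hk => (horth k hk).2.1
  have h0_bb : ∀ k : D, k ∉ P → j * (k • j) = 0 := fun k hk => (horth k hk).2.2.2
  have h0_uv : ∀ k : D, k ∉ P → (i * (r : A) * j) * (k • (j * ((r⁻¹ : Aˣ) : A) * i)) = 0 := by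
    intro k hk
    rw [hksmul3]
    exact mul4 (i * (r : A)) j _ _ (h0_bb k hk)
  have h0_vu : ∀ k : D, k ∉ P → (j * ((r⁻¹ : Aˣ) : A) * i) * (k • (i * (r : A) * j)) = 0 := by
    intro k hk
    rw [hksmul3]
    exact mul4 (j * ((r⁻¹ : Aˣ) : A)) i _ _ (h0_aa k hk)
  have h0_au : ∀ k : D, k ∉ P → i * (k • (i * (r : A) * j)) = 0 := by
    intro k hk
    rw [hksmul3]
    exact mul3 i _ _ (h0_aa k hk)
  have h0_ub : ∀ k : D, k ∉ P → (i * (r : A) * j) * (k • j) = 0 := fun k hk =>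
    mul3' (i * (r : A)) j _ (h0_bb k hk)
  have h0_bv : ∀ k : D, k ∉ P → j * (k • (j * ((r⁻¹ : Aˣ) : A) * i)) = 0 := by
    intro k hk
    rw [hksmul3]
    exact mul3 j _ _ (h0_bb k hk)
  have h0_va : ∀ k : D, k ∉ P → (j * ((r⁻¹ : Aˣ) : A) * i) * (k • i) = 0 := fun k hk =>
    mul3' (j * ((r⁻¹ : Aˣ) : A)) i _ (h0_aa k hk)
  -- the eight trace identities
  have T1 : a * a = a := trace_mul_trace hR h0_aa hi
  have T2 : b * b = b := trace_mul_trace hR h0_bb hj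
  have T3 : u * v = a := trace_mul_trace hR h0_uv d3
  have T4 : v * u = b := trace_mul_trace hR h0_vu d4
  have T5 : a * u = u := trace_mul_trace hR h0_au d5
  have T6 : u * b = u := trace_mul_trace hR h0_ub d6
  have T7 : b * v = v := trace_mul_trace hR h0_bv d7
  have T8 : v * a = v := trace_mul_trace hR h0_va d8
  -- D-fixedness
  have fa : ∀ d : D, d • a = a := fun d => smul_trace hR hiP d
  have fb : ∀ d : D, d • b = b := fun d => smul_trace hR hjP d
  have fu : ∀ d : D, d • u = u := fun d => smul_trace hR hirjP d
  have fv : ∀ d : D, d • v = v := fun d => smul_trace hR hjriP d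
  refine ⟨⟨T1, fa⟩, ⟨T2, fb⟩, fu, fv, T3, T4, ?_⟩
  -- fixed-point subalgebra
  set Sub : Subalgebra F A :=
    { carrier := {x : A | ∀ d : D, d • x = x}
      mul_mem' := fun hx hy d => by rw [smul_mul', hx d, hy d]
      add_mem' := fun hx hy d => by rw [smul_add, hx d, hy d]
      algebraMap_mem' := fun f d => by
        rw [Algebra.algebraMap_eq_smul_one, smul_comm, smul_one] } with hSub
  haveI : FiniteDimensional F ↥Sub :=
    FiniteDimensional.of_injective (Subalgebra.val Sub).toLinearMap Subtype.val_injective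
  set aS : ↥Sub := ⟨a, fa⟩ with haS
  set bS : ↥Sub := ⟨b, fb⟩ with hbS
  set uS : ↥Sub := ⟨u, fu⟩ with huS
  set vS : ↥Sub := ⟨v, fv⟩ with hvS
  obtain ⟨c, hc⟩ := key F (Module.finrank F ↥Sub) ↥Sub le_rfl aS bS uS vS
    (Subtype.ext T1) (Subtype.ext T2) (Subtype.ext T3) (Subtype.ext T4)
    (Subtype.ext T5) (Subtype.ext T6) (Subtype.ext T7) (Subtype.ext T8)
  have hmulinv : ((c : ↥Sub) : A) * (((c⁻¹ : (↥Sub)ˣ) : ↥Sub) : A) = 1 := by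
    have h := congrArg (fun t : ↥Sub => (t : A)) c.mul_inv
    simp only [MulMemClass.coe_mul, OneMemClass.coe_one] at h
    exact h
  have hinvmul : (((c⁻¹ : (↥Sub)ˣ) : ↥Sub) : A) * ((c : ↥Sub) : A) = 1 := by
    have h := congrArg (fun t : ↥Sub => (t : A)) c.inv_mul
    simp only [MulMemClass.coe_mul, OneMemClass.coe_one] at h
    exact h
  refine ⟨⟨((c : ↥Sub) : A), (((c⁻¹ : (↥Sub)ˣ) : ↥Sub) : A), hmulinv, hinvmul⟩,
    fun d => (c : ↥Sub).2 d, ?_⟩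
  have hc' : ((c : ↥Sub) : A) * b = a * ((c : ↥Sub) : A) := by
    have h := congrArg (fun t : ↥Sub => (t : A)) hc
    simp only [MulMemClass.coe_mul] at h
    exact h
  set cA : Aˣ := ⟨((c : ↥Sub) : A), (((c⁻¹ : (↥Sub)ˣ) : ↥Sub) : A), hmulinv, hinvmul⟩ with hcA
  show a = (cA : A) * b * ((cA⁻¹ : Aˣ) : A)
  have hc'' : (cA : A) * b = a * (cA : A) := hc'
  calc a = a * (cA : A) * ((cA⁻¹ : Aˣ) : A) := (Units.mul_inv_cancel_right a cA).symm
  _ = ((cA : A) * b) * ((cA⁻¹ : Aˣ) : A) := by rw [← hc'']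
  _ = (cA : A) * b * ((cA⁻¹ : Aˣ) : A) := rfl
end

section
/- Let A be a finite-dimensional unital associative F-algebra with a group homomorphism σ : G → A^× from a finite group G, let U and V be subgroups of G, let φ : V → U be a group isomorphism, let i be an idempotent of A^U and j an idempotent of A^V. Then the following are equivalent: (a) there exists a unit r ∈ A^× such that σ(φ(v)) i = r (σ(v) j) r⁻¹ for all v ∈ V; (b) there exist s ∈ i A^φ j and s' ∈ j A^{φ⁻¹} i such that s s' = i and s' s = j. -/
/-!
If `r` conjugates `σ(v) j` to `σ(φ v) i`, then `(r j, j r⁻¹)` is a witness. Conversely a witness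
`(s, s')` makes `i` and `j` equivalent idempotents, i.e. `A i ≅ A j` as left `A`-modules. Since
`A = A i ⊕ A (1 - i) = A j ⊕ A (1 - j)` and modules of finite length cancel (Krull–Schmidt:
by Fitting's lemma the endomorphism ring of an indecomposable summand is local),
`A (1 - i) ≅ A (1 - j)` as well. Such an isomorphism is right multiplication by some `t` with an
inverse `t'`, and `r = s + t` is a unit with `r j = s` and `j r⁻¹ = s'`; the witness identities
then say exactly that `r` conjugates `σ(v) j` to `σ(φ v) i`.
-/

def IsWitness {G : Type*} [Group G] {A : Type*} [Ring A] (σ : G →* Aˣ)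
    {U V : Subgroup G} (φ : V ≃* U) (i j s s' : A) : Prop :=
  (∀ v : V, (σ ((φ v : U) : G) : A) * s = s * (σ (v : G) : A)) ∧
    i * s = s ∧ s * j = s ∧
  (∀ u : U, (σ ((φ.symm u : V) : G) : A) * s' = s' * (σ (u : G) : A)) ∧
    j * s' = s' ∧ s' * i = s' ∧
  s * s' = i ∧ s' * s = j

open Function LinearMap

section Cancellation

variable {R : Type*} [Ring R]

theorem Module.End.isUnit_or_isNilpotent_of_indecomposable {M : Type*} [AddCommGroup M] [Module R M]
    [IsArtinian R M] [IsNoetherian R M]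
    (hM : ∀ p q : Submodule R M, IsCompl p q → p = ⊥ ∨ q = ⊥) (f : Module.End R M) :
    IsUnit f ∨ IsNilpotent f := by
  obtain ⟨n, hcompl, hn⟩ :=
    (f.eventually_isCompl_ker_pow_range_pow.and (Filter.eventually_ge_atTop 1)).exists
  rcases hM _ _ hcompl with hker | hrange
  · refine .inl <| (Module.End.isUnit_iff f).mpr <|
      IsArtinian.bijective_of_injective_endomorphism f ?_
    exact injective_of_iterate_injective (by omega) (ker_eq_bot.mp hker)
  · exact .inr ⟨n, range_eq_bot.mp hrange⟩

theorem nonempty_linearEquiv_of_prod_of_bijective {M N P Q : Type*} [AddCommGroup M]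
    [AddCommGroup N] [AddCommGroup P] [AddCommGroup Q] [Module R M] [Module R N] [Module R P]
    [Module R Q] (α : (M × P) ≃ₗ[R] (N × Q))
    (ha : Bijective (fst R N Q ∘ₗ α.toLinearMap ∘ₗ inl R M P)) : Nonempty (P ≃ₗ[R] Q) := by
  set f := fst R N Q ∘ₗ α.toLinearMap
  let e := LinearEquiv.ofBijective (f ∘ₗ inl R M P) ha
  -- `g p` is the unique point of `ker f` above `p`
  let g : P →ₗ[R] M × P := inr R M P - inl R M P ∘ₗ e.symm.toLinearMap ∘ₗ f ∘ₗ inr R M P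
  have hfe : ∀ n, f (inl R M P (e.symm n)) = n := e.apply_symm_apply
  have hfg : ∀ p, f (g p) = 0 := fun p => by
    simp only [g, LinearMap.sub_apply, LinearMap.comp_apply, LinearEquiv.coe_coe, map_sub, hfe,
      sub_self]
  have hg : ∀ x : M × P, f x = 0 → g x.2 = x := by
    intro x hx
    have hsplit : f (0, x.2) = -e x.1 := by
      rw [eq_neg_iff_add_eq_zero, add_comm, ← hx]
      simp [e, ← map_add]
    ext <;> simp [g, hsplit]
  refine ⟨.ofBijective (snd R N Q ∘ₗ α.toLinearMap ∘ₗ g) ⟨?_, fun y => ?_⟩⟩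
  · refine (injective_iff_map_eq_zero _).mpr fun p hp => ?_
    have : α (g p) = 0 := Prod.ext (hfg p) hp
    simpa [g] using congrArg Prod.snd (α.map_eq_zero_iff.mp this)
  · have hx : f (α.symm (0, y)) = 0 := by simp [f]
    exact ⟨(α.symm (0, y)).2, by simp [hg _ hx]⟩

theorem nonempty_linearEquiv_of_prod_of_indecomposable {M P Q : Type*} [AddCommGroup M]
    [AddCommGroup P] [AddCommGroup Q] [Module R M] [Module R P] [Module R Q]
    [IsArtinian R M] [IsNoetherian R M]
    (hM : ∀ p q : Submodule R M, IsCompl p q → p = ⊥ ∨ q = ⊥) (α : (M × P) ≃ₗ[R] (M × Q)) :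
    Nonempty (P ≃ₗ[R] Q) := by
  set a : Module.End R M := fst R M Q ∘ₗ α.toLinearMap ∘ₗ inl R M P
  set b : P →ₗ[R] M := fst R M Q ∘ₗ α.toLinearMap ∘ₗ inr R M P
  set a' : Module.End R M := fst R M P ∘ₗ α.symm.toLinearMap ∘ₗ inl R M Q
  set d' : M →ₗ[R] P := snd R M P ∘ₗ α.symm.toLinearMap ∘ₗ inl R M Q
  by_cases ha : IsUnit a
  · exact nonempty_linearEquiv_of_prod_of_bijective α ((Module.End.isUnit_iff a).mp ha)
  have hsum : a * a' + b ∘ₗ d' = 1 := by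
    ext m
    calc (a * a' + b ∘ₗ d') m = (α (a' m, 0) + α (0, d' m)).1 := rfl
      _ = (α (α.symm (m, 0))).1 := by rw [← map_add, Prod.mk_add_mk, add_zero, zero_add]; rfl
      _ = m := by rw [α.apply_symm_apply]
  -- `End R M` is local: as `a` is not a unit, neither is `a * a'`, so `b ∘ d' = 1 - a * a'` is
  have hbd : IsUnit (b ∘ₗ d') := by
    rw [eq_sub_of_add_eq' hsum]
    refine ((Module.End.isUnit_or_isNilpotent_of_indecomposable hM _).resolve_left
      fun h => ha ?_).isUnit_one_sub
    rw [Module.End.isUnit_iff] at h ⊢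
    exact IsNoetherian.bijective_of_surjective_endomorphism a
      (show Surjective (a ∘ a') from h.2).of_comp
  set k : M →ₗ[R] P := d' ∘ₗ (hbd.unit⁻¹ : (Module.End R M)ˣ).val
  -- shearing by `k`, a right inverse of `b`, turns the corner `a` into the unit `a + 1`
  set θ := LinearEquiv.skewProd (.refl R M) (.refl R P) k
  refine nonempty_linearEquiv_of_prod_of_bijective (θ.trans α) ?_
  have hcorner : fst R M Q ∘ₗ (θ.trans α).toLinearMap ∘ₗ inl R M P = a + 1 := by
    ext m
    have hbk : b (k m) = m := congrArg (· m) hbd.mul_val_inv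
    calc (α (m, 0 + k m)).1 = (α (m, 0) + α (0, k m)).1 := by
          rw [← map_add, Prod.mk_add_mk, add_zero, zero_add]
      _ = a m + b (k m) := rfl
      _ = a m + m := by rw [hbk]
  rw [hcorner, ← Module.End.isUnit_iff]
  exact ((Module.End.isUnit_or_isNilpotent_of_indecomposable hM a).resolve_left ha).isUnit_add_one

universe u

theorem nonempty_linearEquiv_of_prod {M P Q : Type u} [AddCommGroup M] [AddCommGroup P]
    [AddCommGroup Q] [Module R M] [Module R P] [Module R Q] [IsArtinian R M] [IsNoetherian R M]
    (α : (M × P) ≃ₗ[R] (M × Q)) : Nonempty (P ≃ₗ[R] Q) := by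
  induction hn : Module.length R M using WellFoundedLT.induction generalizing M P Q with
  | ind n ih =>
  by_cases hM : ∀ p q : Submodule R M, IsCompl p q → p = ⊥ ∨ q = ⊥
  · exact nonempty_linearEquiv_of_prod_of_indecomposable hM α
  push Not at hM
  obtain ⟨p, q, hpq, hp, hq⟩ := hM
  let e := Submodule.prodEquivOfIsCompl p q hpq
  let β : (p × (q × P)) ≃ₗ[R] (p × (q × Q)) :=
    (LinearEquiv.prodAssoc R p q P).symm ≪≫ₗ e.prodCongr (.refl R P) ≪≫ₗ α ≪≫ₗ
      e.symm.prodCongr (.refl R Q) ≪≫ₗ LinearEquiv.prodAssoc R p q Q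
  have hp_lt : Module.length R p < n :=
    hn ▸ Submodule.length_lt fun h => hq (hpq.disjoint.eq_bot_of_ge (h ▸ le_top))
  have hq_lt : Module.length R q < n :=
    hn ▸ Submodule.length_lt fun h => hp (hpq.disjoint.eq_bot_of_le (h ▸ le_top))
  obtain ⟨γ⟩ := ih _ hp_lt β rfl
  exact ih _ hq_lt γ rfl

end Cancellation

section Idempotents

variable {A : Type*} [Ring A]

theorem isIdempotentElem_toSpanSingleton {e : A} (he : IsIdempotentElem e) :
    IsIdempotentElem (toSpanSingleton A A e) := by
  ext
  simp [he.eq]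

theorem mem_range_toSpanSingleton_iff {e x : A} (he : IsIdempotentElem e) :
    x ∈ range (toSpanSingleton A A e) ↔ x * e = x :=
  (isIdempotentElem_toSpanSingleton he).mem_range_iff

theorem isCompl_range_toSpanSingleton_one_sub {e : A} (he : IsIdempotentElem e) :
    IsCompl (range (toSpanSingleton A A e)) (range (toSpanSingleton A A (1 - e))) := by
  have hsub : toSpanSingleton A A (1 - e) = 1 - toSpanSingleton A A e := by
    ext
    simp [mul_sub]
  rw [hsub, ← (isIdempotentElem_toSpanSingleton he).ker_eq_range_one_sub]
  exact (isIdempotentElem_toSpanSingleton he).isCompl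

theorem map_range_toSpanSingleton {M : Type*} [AddCommGroup M] [Module A M] {e : A}
    (he : IsIdempotentElem e) (φ : range (toSpanSingleton A A e) →ₗ[A] M)
    (x : range (toSpanSingleton A A e)) :
    φ x = (x : A) • φ ⟨e, (mem_range_toSpanSingleton_iff he).mpr he.eq⟩ := by
  rw [← map_smul]
  congr
  exact Subtype.ext ((mem_range_toSpanSingleton_iff he).mp x.2).symm

/-- `e` and `f` are equivalent idempotents via `a ∈ e A f` and `b ∈ f A e`. -/
structure IsIdempotentEquiv (e f a b : A) : Prop where
  mul_eq : a * b = e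
  mul_eq' : b * a = f
  mul_right : a * f = a
  mul_right' : b * e = b

namespace IsIdempotentEquiv

variable {e f a b : A}

theorem mul_left (h : IsIdempotentEquiv e f a b) : e * a = a := by
  rw [← h.mul_eq, mul_assoc, h.mul_eq', h.mul_right]

theorem mul_left' (h : IsIdempotentEquiv e f a b) : f * b = b := by
  rw [← h.mul_eq', mul_assoc, h.mul_eq, h.mul_right']

theorem isIdempotentElem_left (h : IsIdempotentEquiv e f a b) : IsIdempotentElem e := by
  rw [IsIdempotentElem, ← h.mul_eq, mul_assoc, ← mul_assoc b, h.mul_eq', h.mul_left']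

theorem isIdempotentElem_right (h : IsIdempotentEquiv e f a b) : IsIdempotentElem f := by
  rw [IsIdempotentElem, ← h.mul_eq', mul_assoc, ← mul_assoc a, h.mul_eq, h.mul_left]

theorem exists_unit_of_one_sub {c d : A} (h : IsIdempotentEquiv e f a b)
    (h' : IsIdempotentEquiv (1 - e) (1 - f) c d) : ∃ u : Aˣ, ↑u * f = a ∧ f * ↑u⁻¹ = b := by
  have hcf : c * f = 0 := by simpa [mul_sub] using h'.mul_right
  have hde : d * e = 0 := by simpa [mul_sub] using h'.mul_right'
  have hec : e * c = 0 := by simpa [sub_mul] using h'.mul_left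
  have hfd : f * d = 0 := by simpa [sub_mul] using h'.mul_left'
  have had : a * d = 0 := by rw [← h.mul_right, mul_assoc, hfd, mul_zero]
  have hcb : c * b = 0 := by rw [← h.mul_left', ← mul_assoc, hcf, zero_mul]
  have hbc : b * c = 0 := by rw [← h.mul_right', mul_assoc, hec, mul_zero]
  have hda : d * a = 0 := by rw [← h.mul_left, ← mul_assoc, hde, zero_mul]
  have hu : (a + c) * (b + d) = 1 := by
    rw [add_mul, mul_add, mul_add, h.mul_eq, had, hcb, h'.mul_eq]; abel
  have hu' : (b + d) * (a + c) = 1 := by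
    rw [add_mul, mul_add, mul_add, h.mul_eq', hbc, hda, h'.mul_eq']; abel
  refine ⟨⟨a + c, b + d, hu, hu'⟩, ?_, ?_⟩
  · simp [add_mul, h.mul_right, hcf]
  · simp [mul_add, h.mul_left', hfd]

end IsIdempotentEquiv

theorem nonempty_linearEquiv_range_toSpanSingleton_iff {e f : A} (he : IsIdempotentElem e)
    (hf : IsIdempotentElem f) :
    Nonempty (range (toSpanSingleton A A e) ≃ₗ[A] range (toSpanSingleton A A f)) ↔
      ∃ a b : A, IsIdempotentEquiv e f a b := by
  constructor
  · rintro ⟨g⟩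
    set e' : range (toSpanSingleton A A e) := ⟨e, (mem_range_toSpanSingleton_iff he).mpr he.eq⟩
    set f' : range (toSpanSingleton A A f) := ⟨f, (mem_range_toSpanSingleton_iff hf).mpr hf.eq⟩
    refine ⟨g e', g.symm f', ⟨?_, ?_, (mem_range_toSpanSingleton_iff hf).mp (g e').2,
      (mem_range_toSpanSingleton_iff he).mp (g.symm f').2⟩⟩
    · have := congrArg Subtype.val (map_range_toSpanSingleton hf g.symm.toLinearMap (g e'))
      rwa [LinearEquiv.coe_coe, g.symm_apply_apply, eq_comm] at this
    · have := congrArg Subtype.val (map_range_toSpanSingleton he g.toLinearMap (g.symm f'))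
      rwa [LinearEquiv.coe_coe, g.apply_symm_apply, eq_comm] at this
  · rintro ⟨a, b, h⟩
    refine ⟨.ofLinearMap
      ((toSpanSingleton A A a).restrict fun x _ => (mem_range_toSpanSingleton_iff hf).mpr
        (by simp [mul_assoc, h.mul_right]))
      ((toSpanSingleton A A b).restrict fun y _ => (mem_range_toSpanSingleton_iff he).mpr
        (by simp [mul_assoc, h.mul_right']))
      ?_ ?_⟩ <;> ext ⟨x, hx⟩
    · simpa [mul_assoc, h.mul_eq'] using (mem_range_toSpanSingleton_iff hf).mp hx
    · simpa [mul_assoc, h.mul_eq] using (mem_range_toSpanSingleton_iff he).mp hx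

theorem IsIdempotentEquiv.exists_unit [IsArtinianRing A] [IsNoetherianRing A]
    {e f a b : A} (h : IsIdempotentEquiv e f a b) : ∃ u : Aˣ, ↑u * f = a ∧ f * ↑u⁻¹ = b := by
  have he := h.isIdempotentElem_left
  have hf := h.isIdempotentElem_right
  obtain ⟨g⟩ := (nonempty_linearEquiv_range_toSpanSingleton_iff he hf).mpr ⟨a, b, h⟩
  -- cancel `A e ≅ A f` from `A e ⊕ A (1 - e) ≅ A ≅ A f ⊕ A (1 - f)`
  obtain ⟨g'⟩ := nonempty_linearEquiv_of_prod <|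
    g.symm.prodCongr (.refl A _) ≪≫ₗ
      Submodule.prodEquivOfIsCompl _ _ (isCompl_range_toSpanSingleton_one_sub he) ≪≫ₗ
      (Submodule.prodEquivOfIsCompl _ _ (isCompl_range_toSpanSingleton_one_sub hf)).symm
  obtain ⟨c, d, h'⟩ :=
    (nonempty_linearEquiv_range_toSpanSingleton_iff he.one_sub hf.one_sub).mp ⟨g'⟩
  exact h.exists_unit_of_one_sub h'

end Idempotents

section Witness

variable {G : Type*} [Group G] {A : Type*} [Ring A] {σ : G →* Aˣ} {U V : Subgroup G}
  {φ : V ≃* U} {i j s s' : A}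

theorem IsWitness.isIdempotentEquiv (hw : IsWitness σ φ i j s s') :
    IsIdempotentEquiv i j s s' :=
  ⟨hw.2.2.2.2.2.2.1, hw.2.2.2.2.2.2.2, hw.2.2.1, hw.2.2.2.2.2.1⟩

theorem conj_iff_isWitness (hj : IsIdempotentElem j)
    (hiU : ∀ u : U, (σ (u : G) : A) * i = i * (σ (u : G) : A))
    (hjV : ∀ v : V, (σ (v : G) : A) * j = j * (σ (v : G) : A)) (r : Aˣ) :
    (∀ v : V, (σ ((φ v : U) : G) : A) * i = r * ((σ (v : G) : A) * j) * ↑r⁻¹) ↔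
      IsWitness σ φ i j (r * j) (j * ↑r⁻¹) := by
  constructor
  · intro h
    have hi : i = r * j * ↑r⁻¹ := by simpa using h 1
    have hir : i * r = r * j := by simp [hi, mul_assoc]
    have hri : ↑r⁻¹ * i = j * ↑r⁻¹ := by simp [hi, mul_assoc]
    refine ⟨fun v => ?_, ?_, by rw [mul_assoc, hj.eq], fun u => ?_, by rw [← mul_assoc, hj.eq],
      by rw [mul_assoc, hri, ← mul_assoc, hj.eq],
      by rw [mul_assoc, ← mul_assoc j, hj.eq, ← mul_assoc, hi], by simp [mul_assoc, hj.eq]⟩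
    · calc (σ ((φ v : U) : G) : A) * (r * j) = σ ((φ v : U) : G) * i * r := by
            rw [mul_assoc, hir]
        _ = r * (σ (v : G) * j) := by simp [h v, mul_assoc]
        _ = r * j * σ (v : G) := by rw [hjV v, mul_assoc]
    · rw [← mul_assoc, hir, mul_assoc, hj.eq]
    · have hu := h (φ.symm u)
      rw [φ.apply_symm_apply] at hu
      calc (σ ((φ.symm u : V) : G) : A) * (j * ↑r⁻¹) = ↑r⁻¹ * (σ (u : G) * i) := by
            simp [hu, mul_assoc]
        _ = j * ↑r⁻¹ * σ (u : G) := by rw [hiU u, ← mul_assoc, hri]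
  · intro hw v
    have hi : i = r * j * ↑r⁻¹ := by
      rw [← hw.isIdempotentEquiv.mul_eq, mul_assoc, ← mul_assoc j, hj.eq, mul_assoc]
    rw [hi, ← mul_assoc, ← mul_assoc, mul_assoc _ _ j, hw.1 v, mul_assoc _ j, ← hjV v]

end Witness

theorem stmt6_general (F : Type*) [Field F] (A : Type*) [Ring A] [Algebra F A]
    [FiniteDimensional F A] (G : Type*) [Group G] (σ : G →* Aˣ)
    (U V : Subgroup G) (φ : V ≃* U) (i j : A)
    (hiU : ∀ u : U, (σ (u : G) : A) * i = i * (σ (u : G) : A))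
    (hj : j * j = j) (hjV : ∀ v : V, (σ (v : G) : A) * j = j * (σ (v : G) : A)) :
    (∃ r : Aˣ, ∀ v : V,
        (σ ((φ v : U) : G) : A) * i = (r : A) * ((σ (v : G) : A) * j) * ((r⁻¹ : Aˣ) : A)) ↔
      (∃ s s' : A, IsWitness σ φ i j s s') := by
  have : IsArtinianRing A := isArtinian_of_tower F inferInstance
  have : IsNoetherianRing A := isNoetherian_of_tower F inferInstance
  constructor
  · rintro ⟨r, hr⟩
    exact ⟨_, _, (conj_iff_isWitness hj hiU hjV r).mp hr⟩
  · rintro ⟨s, s', hw⟩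
    obtain ⟨u, rfl, rfl⟩ := hw.isIdempotentEquiv.exists_unit
    exact ⟨u, (conj_iff_isWitness hj hiU hjV u).mpr hw⟩

/-- Lemma 4.1: for idempotents `i ∈ A^U`, `j ∈ A^V` and a group isomorphism `φ : V → U`,
the following are equivalent: (a) there is a unit `r ∈ Aˣ` with
`σ(φ(v)) i = r (σ(v) j) r⁻¹` for all `v ∈ V`; (b) there is a `φ`-witness `j ↦ i`. -/
theorem stmt6 (F : Type*) [Field F] (A : Type*) [Ring A] [Algebra F A]
    [FiniteDimensional F A] (G : Type*) [Group G] [Finite G] (σ : G →* Aˣ)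
    (U V : Subgroup G) (φ : V ≃* U) (i j : A)
    (hi : i * i = i) (hiU : ∀ u : U, (σ (u : G) : A) * i = i * (σ (u : G) : A))
    (hj : j * j = j) (hjV : ∀ v : V, (σ (v : G) : A) * j = j * (σ (v : G) : A)) :
    (∃ r : Aˣ, ∀ v : V,
        (σ ((φ v : U) : G) : A) * i = (r : A) * ((σ (v : G) : A) * j) * ((r⁻¹ : Aˣ) : A)) ↔
      (∃ s s' : A, IsWitness σ φ i j s s') :=
  stmt6_general F A G σ U V φ i j hiU hj hjV
end

section
/- Let A be a finite-dimensional unital associative F-algebra with a group homomorphism σ : G → A^× from a finite group G, let U and V be subgroups of G, let φ : V → U be a group isomorphism, let i and i' be idempotents of A^U, and let j be an idempotent of A^V. If there exist a φ-witness j ↦ i and a φ-witness j ↦ i', then there exists a unit r ∈ A^× with σ(u) r = r σ(u) for all u ∈ U such that i = r i' r⁻¹. -/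
open LinearMap Submodule

universe u

section Fitting

variable {R M : Type*} [Ring R] [AddCommGroup M] [Module R M]

theorem Module.End.isNilpotent_or_isUnit_of_isCompl [IsArtinian R M] [IsNoetherian R M]
    (hM : ∀ N N' : Submodule R M, IsCompl N N' → N = ⊥ ∨ N' = ⊥) (f : Module.End R M) :
    IsNilpotent f ∨ IsUnit f := by
  obtain ⟨n, hcompl, hn⟩ :=
    (f.eventually_isCompl_ker_pow_range_pow.and (Filter.eventually_ge_atTop 1)).exists
  rcases hM _ _ hcompl with hker | hrange
  · have hunit : IsUnit (f ^ n) := (Module.End.isUnit_iff _).mpr <|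
      IsArtinian.bijective_of_injective_endomorphism _ (LinearMap.ker_eq_bot.mp hker)
    exact Or.inr ((isUnit_pow_iff (by omega)).mp hunit)
  · exact Or.inl ⟨n, LinearMap.range_eq_bot.mp hrange⟩

instance Module.End.isDedekindFiniteMonoid [IsNoetherian R M] :
    IsDedekindFiniteMonoid (Module.End R M) where
  mul_eq_one_symm {f g} h := by
    obtain ⟨u, rfl⟩ : IsUnit f := (Module.End.isUnit_iff f).mpr <|
      IsNoetherian.bijective_of_surjective_endomorphism f fun y => ⟨g y, congr($h y)⟩
    rw [← Units.mul_eq_one_iff_inv_eq.mp h, u.inv_mul]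

end Fitting

theorem exists_isUnit_add_mul_of_isNilpotent_or_isUnit {S : Type*} [Ring S]
    [IsDedekindFiniteMonoid S] (hS : ∀ a : S, IsNilpotent a ∨ IsUnit a) (a x : S) :
    ∃ e, IsUnit (a + (1 - a * x) * e) := by
  by_cases ha : IsUnit a
  · exact ⟨0, by simpa using ha⟩
  obtain ⟨c, hc⟩ := ((hS (a * x)).resolve_right (mt isUnit_of_mul_isUnit_left ha)).isUnit_one_sub
  refine ⟨↑c⁻¹ * (1 - a), ?_⟩
  rw [← mul_assoc, ← hc, c.mul_inv, one_mul, add_sub_cancel]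
  exact isUnit_one

section Cancellation

variable {R : Type*} [Ring R]

theorem LinearMap.isCompl_range_ker_of_isUnit_comp {M N : Type*} [AddCommGroup M] [Module R M]
    [AddCommGroup N] [Module R N] {k : M →ₗ[R] N} {g : N →ₗ[R] M} (h : IsUnit (g ∘ₗ k)) :
    IsCompl (range k) (ker g) := by
  obtain ⟨u, hu⟩ := h
  set v : Module.End R M := ↑u⁻¹
  have hgk : ∀ m, g (k (v m)) = m := fun m => by
    rw [← LinearMap.comp_apply, ← hu, ← Module.End.mul_apply, u.mul_inv, Module.End.one_apply]
  have hkg : ∀ m, v (g (k m)) = m := fun m => by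
    rw [← LinearMap.comp_apply g, ← hu, ← Module.End.mul_apply, u.inv_mul, Module.End.one_apply]
  refine ⟨Submodule.disjoint_def.mpr ?_, Submodule.codisjoint_iff_exists_add_eq.mpr ?_⟩
  · rintro _ ⟨m, rfl⟩ hm
    rw [← hkg m, mem_ker.mp hm, map_zero, map_zero]
  · intro x
    exact ⟨k (v (g x)), x - k (v (g x)), mem_range_self _ _, by simp [hgk], add_sub_cancel _ _⟩

/-- Both kernels are complements of `range k`, hence isomorphic to the quotient by it. -/
theorem LinearMap.nonempty_ker_equiv_ker_of_isUnit_comp {M N : Type*} [AddCommGroup M]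
    [Module R M] [AddCommGroup N] [Module R N] {k : M →ₗ[R] N} {p q : N →ₗ[R] M}
    (hp : IsUnit (p ∘ₗ k)) (hq : IsUnit (q ∘ₗ k)) : Nonempty (ker p ≃ₗ[R] ker q) :=
  ⟨(quotientEquivOfIsCompl _ _ (isCompl_range_ker_of_isUnit_comp hp)).symm ≪≫ₗ
    quotientEquivOfIsCompl _ _ (isCompl_range_ker_of_isUnit_comp hq)⟩

variable (R) in
/-- `X` and `Y` live in the universe of `M`, so that the induction over decompositions of `M` can
feed `M' × X` back in. -/
def Module.IsCancellable (M : Type u) [AddCommGroup M] [Module R M] : Prop :=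
  ∀ (X Y : Type u) [AddCommGroup X] [Module R X] [AddCommGroup Y] [Module R Y],
    Nonempty ((M × X) ≃ₗ[R] (M × Y)) → Nonempty (X ≃ₗ[R] Y)

namespace Module.IsCancellable

variable {M M' : Type u} [AddCommGroup M] [Module R M] [AddCommGroup M'] [Module R M']

theorem of_linearEquiv (e : M ≃ₗ[R] M') (h : IsCancellable R M) : IsCancellable R M' := by
  rintro X Y _ _ _ _ ⟨ω⟩
  exact h X Y ⟨e.prodCongr (.refl R X) ≪≫ₗ ω ≪≫ₗ (e.prodCongr (.refl R Y)).symm⟩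

theorem prod (h : IsCancellable R M) (h' : IsCancellable R M') : IsCancellable R (M × M') := by
  rintro X Y _ _ _ _ ⟨ω⟩
  exact h' X Y <| h _ _
    ⟨(LinearEquiv.prodAssoc R M M' X).symm ≪≫ₗ ω ≪≫ₗ LinearEquiv.prodAssoc R M M' Y⟩

/-- Evans' cancellation theorem: `M` cancels as soon as `End M` has stable range one. -/
theorem of_exists_isUnit_add_mul
    (hM : ∀ a x : Module.End R M, ∃ e, IsUnit (a + (1 - a * x) * e)) : IsCancellable R M := by
  rintro X Y _ _ _ _ ⟨ω⟩
  set g : M × X →ₗ[R] M := fst R M Y ∘ₗ ω.toLinearMap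
  set g' : M →ₗ[R] M × X := ω.symm.toLinearMap ∘ₗ inl R M Y
  have hgg' : g ∘ₗ g' = LinearMap.id := by ext; simp [g, g']
  set a : Module.End R M := fst R M X ∘ₗ g'
  set x : Module.End R M := g ∘ₗ inl R M X
  obtain ⟨e, he⟩ := hM a x
  set k : M →ₗ[R] M × X := g' + (inl R M X - g' ∘ₗ x) ∘ₗ e
  have hgk : g ∘ₗ k = 1 := by
    simp only [k, x, comp_add, comp_sub, ← comp_assoc, hgg', id_comp, sub_self, zero_comp,
      add_zero]
    rfl
  have hfk : fst R M X ∘ₗ k = a + (1 - a * x) * e := by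
    ext m
    simp [k, a, x]
  obtain ⟨φ⟩ := nonempty_ker_equiv_ker_of_isUnit_comp (hfk ▸ he) (hgk ▸ isUnit_one)
  have hkerX : ker (fst R M X) = range (inr R M X) := ker_fst R M X
  have hkerY : map ω.toLinearMap (ker g) = range (inr R M Y) := by
    rw [ker_comp, map_comap_eq_of_surjective ω.surjective, ker_fst]
  exact ⟨LinearEquiv.ofInjective _ inr_injective ≪≫ₗ LinearEquiv.ofEq _ _ hkerX.symm ≪≫ₗ φ ≪≫ₗ
    ω.ofSubmodules _ _ hkerY ≪≫ₗ (LinearEquiv.ofInjective _ inr_injective).symm⟩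

end Module.IsCancellable

end Cancellation

namespace Module.IsCancellable

variable {R : Type*} [Ring R] {M : Type u} [AddCommGroup M] [Module R M]
  [IsArtinian R M] [IsNoetherian R M]

theorem of_isCompl_eq_bot (hM : ∀ N N' : Submodule R M, IsCompl N N' → N = ⊥ ∨ N' = ⊥) :
    IsCancellable R M :=
  of_exists_isUnit_add_mul <| exists_isUnit_add_mul_of_isNilpotent_or_isUnit <|
    Module.End.isNilpotent_or_isUnit_of_isCompl hM

theorem of_isArtinian_of_isNoetherian : IsCancellable R M := by
  suffices ∀ n : ℕ, ∀ (M : Type u) [AddCommGroup M] [Module R M] [IsArtinian R M]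
      [IsNoetherian R M], Module.length R M ≤ n → IsCancellable R M from
    this _ M (ENat.natCast_toNat Module.length_ne_top).ge
  intro n
  induction n with
  | zero =>
    intro M _ _ _ _ hlen
    have : Subsingleton M := Module.length_eq_zero_iff.mp (nonpos_iff_eq_zero.mp hlen)
    exact of_isCompl_eq_bot fun N _ _ => Or.inl (Subsingleton.elim N ⊥)
  | succ n ih =>
    intro M _ _ _ _ hlen
    by_cases hM : ∀ N N' : Submodule R M, IsCompl N N' → N = ⊥ ∨ N' = ⊥
    · exact of_isCompl_eq_bot hM
    push Not at hM
    obtain ⟨N, N', hNN', hN, hN'⟩ := hM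
    have hlen' : ∀ P : Submodule R M, P ≠ ⊤ → Module.length R P ≤ n := fun P hP =>
      (ENat.lt_add_one_iff (ENat.natCast_ne_top n)).mp ((Submodule.length_lt hP).trans_le hlen)
    have ih_N := ih N (hlen' N fun h => hN' (eq_bot_of_top_isCompl (h ▸ hNN')))
    have ih_N' := ih N' (hlen' N' fun h => hN (eq_bot_of_top_isCompl (h ▸ hNN'.symm)))
    exact (ih_N.prod ih_N').of_linearEquiv (prodEquivOfIsCompl N N' hNN')

end Module.IsCancellable

section Idempotents

variable {R : Type*} [Ring R]

theorem mem_span_singleton_iff_mul_eq_self {e x : R} (he : IsIdempotentElem e) :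
    x ∈ span R {e} ↔ x * e = x := by
  refine ⟨fun hx => ?_, fun hx => mem_span_singleton.mpr ⟨x, hx⟩⟩
  obtain ⟨r, rfl⟩ := mem_span_singleton.mp hx
  rw [smul_eq_mul, mul_assoc, he.eq]

theorem isCompl_span_singleton_one_sub {e : R} (he : IsIdempotentElem e) :
    IsCompl (span R {e}) (span R {1 - e}) := by
  refine ⟨Submodule.disjoint_def.mpr fun x hx hx' => ?_,
    Submodule.codisjoint_iff_exists_add_eq.mpr fun x => ?_⟩
  · rw [mem_span_singleton_iff_mul_eq_self he] at hx
    rw [mem_span_singleton_iff_mul_eq_self he.one_sub, mul_sub, mul_one, hx, sub_self] at hx'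
    exact hx'.symm
  · refine ⟨x * e, x * (1 - e), smul_mem _ x (mem_span_singleton_self e),
      smul_mem _ x (mem_span_singleton_self _), by rw [← mul_add, add_sub_cancel, mul_one]⟩

theorem nonempty_span_mul_equiv_span_mul {a b : R} (ha : a * b * a = a) (hb : b * a * b = b) :
    Nonempty (span R {a * b} ≃ₗ[R] span R {b * a}) := by
  have hab : IsIdempotentElem (a * b) := by rw [IsIdempotentElem, ← mul_assoc, ha]
  have hba : IsIdempotentElem (b * a) := by rw [IsIdempotentElem, ← mul_assoc, hb]
  refine ⟨.ofLinearMap ((toSpanSingleton R R a).restrict fun x hx => ?_)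
    ((toSpanSingleton R R b).restrict fun x hx => ?_) ?_ ?_⟩
  · rw [mem_span_singleton_iff_mul_eq_self hba]
    simp [mul_assoc, ← mul_assoc a, ha]
  · rw [mem_span_singleton_iff_mul_eq_self hab]
    simp [mul_assoc, ← mul_assoc b, hb]
  · ext ⟨x, hx⟩
    simpa [mul_assoc] using (mem_span_singleton_iff_mul_eq_self hba).mp hx
  · ext ⟨x, hx⟩
    simpa [mul_assoc] using (mem_span_singleton_iff_mul_eq_self hab).mp hx

theorem LinearMap.apply_eq_smul_of_isIdempotentElem {M : Type*} [AddCommGroup M] [Module R M]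
    {e : R} (he : IsIdempotentElem e) (φ : span R {e} →ₗ[R] M) (x : span R {e}) :
    φ x = (x : R) • φ ⟨e, mem_span_singleton_self e⟩ := by
  rw [← map_smul]
  congr
  ext
  exact ((mem_span_singleton_iff_mul_eq_self he).mp x.2).symm

/-- A module isomorphism `R e ≃ R f` is right multiplication by `c = φ e`, with inverse right
multiplication by `d = φ⁻¹ f`. -/
theorem exists_mul_eq_of_linearEquiv_span {e f : R} (he : IsIdempotentElem e)
    (hf : IsIdempotentElem f) (φ : span R {e} ≃ₗ[R] span R {f}) :
    ∃ c d : R, c * d * c = c ∧ d * c * d = d ∧ c * d = e ∧ d * c = f := by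
  set x : span R {e} := ⟨e, mem_span_singleton_self e⟩
  set y : span R {f} := ⟨f, mem_span_singleton_self f⟩
  set c : R := (φ x : R)
  set d : R := (φ.symm y : R)
  have hcd : c * d = e := by
    have h := congr_arg Subtype.val (apply_eq_smul_of_isIdempotentElem hf φ.symm.toLinearMap (φ x))
    simp only [LinearEquiv.coe_coe, LinearEquiv.symm_apply_apply, SetLike.val_smul] at h
    exact h.symm
  have hdc : d * c = f := by
    have h := congr_arg Subtype.val (apply_eq_smul_of_isIdempotentElem he φ.toLinearMap (φ.symm y))
    simp only [LinearEquiv.coe_coe, LinearEquiv.apply_symm_apply, SetLike.val_smul] at h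
    exact h.symm
  refine ⟨c, d, ?_, ?_, hcd, hdc⟩
  · rw [mul_assoc, hdc, ← mem_span_singleton_iff_mul_eq_self hf]
    exact (φ _).2
  · rw [mul_assoc, hcd, ← mem_span_singleton_iff_mul_eq_self he]
    exact (φ.symm _).2

theorem exists_unit_mul_eq_of_add_eq_one {a b c d : R} (ha : a * b * a = a) (hb : b * a * b = b)
    (hc : c * d * c = c) (hd : d * c * d = d) (habcd : a * b + c * d = 1)
    (hbadc : b * a + d * c = 1) : ∃ u : Rˣ, a * b = u * (b * a) * ↑u⁻¹ := by
  have orth {p q : R} (hp : p * p = p) (hpq : p + q = 1) : p * q = 0 ∧ q * p = 0 := by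
    obtain rfl : q = 1 - p := eq_sub_of_add_eq' hpq
    simp [mul_sub, sub_mul, hp]
  obtain ⟨h₁, h₂⟩ := orth (by rw [← mul_assoc, ha]) habcd
  obtain ⟨h₃, h₄⟩ := orth (by rw [← mul_assoc, hb]) hbadc
  have had : a * d = 0 := by
    rw [← ha, ← hd, show a * b * a * (d * c * d) = a * (b * a * (d * c)) * d by noncomm_ring, h₃]
    simp
  have hcb : c * b = 0 := by
    rw [← hc, ← hb, show c * d * c * (b * a * b) = c * (d * c * (b * a)) * b by noncomm_ring, h₄]
    simp
  have hbc : b * c = 0 := by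
    rw [← hb, ← hc, show b * a * b * (c * d * c) = b * (a * b * (c * d)) * c by noncomm_ring, h₁]
    simp
  have hda : d * a = 0 := by
    rw [← hd, ← ha, show d * c * d * (a * b * a) = d * (c * d * (a * b)) * a by noncomm_ring, h₂]
    simp
  let u : Rˣ := ⟨a + c, b + d, by simp [add_mul, mul_add, had, hcb, habcd],
    by simp [add_mul, mul_add, hbc, hda, hbadc]⟩
  have habc : a * b * c = 0 := by
    rw [← hc, show a * b * (c * d * c) = a * b * (c * d) * c by noncomm_ring, h₁, zero_mul]
  have hcba : c * (b * a) = 0 := by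
    rw [← hc, show c * d * c * (b * a) = c * (d * c * (b * a)) by noncomm_ring, h₄, mul_zero]
  refine ⟨u, (Units.eq_mul_inv_iff_mul_eq u).mpr ?_⟩
  change a * b * (a + c) = (a + c) * (b * a)
  rw [mul_add, add_mul, habc, hcba, ← mul_assoc a b a]

theorem IsArtinianRing.exists_unit_mul_eq_mul_mul_inv [IsArtinianRing R] {a b : R}
    (ha : a * b * a = a) (hb : b * a * b = b) : ∃ u : Rˣ, a * b = u * (b * a) * ↑u⁻¹ := by
  have hab : IsIdempotentElem (a * b) := by rw [IsIdempotentElem, ← mul_assoc, ha]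
  have hba : IsIdempotentElem (b * a) := by rw [IsIdempotentElem, ← mul_assoc, hb]
  obtain ⟨φ⟩ := nonempty_span_mul_equiv_span_mul ha hb
  have hR : (span R {b * a} × span R {1 - a * b}) ≃ₗ[R] (span R {b * a} × span R {1 - b * a}) :=
    φ.symm.prodCongr (.refl _ _) ≪≫ₗ prodEquivOfIsCompl _ _ (isCompl_span_singleton_one_sub hab)
      ≪≫ₗ (prodEquivOfIsCompl _ _ (isCompl_span_singleton_one_sub hba)).symm
  obtain ⟨ψ⟩ := Module.IsCancellable.of_isArtinian_of_isNoetherian _ _ ⟨hR⟩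
  obtain ⟨c, d, hc, hd, hcd, hdc⟩ := exists_mul_eq_of_linearEquiv_span hab.one_sub hba.one_sub ψ
  exact exists_unit_mul_eq_of_add_eq_one ha hb hc hd (by rw [hcd, add_sub_cancel])
    (by rw [hdc, add_sub_cancel])

end Idempotents

namespace IsWitness

variable {G : Type*} [Group G] {A : Type*} [Ring A] {σ : G →* Aˣ} {U V : Subgroup G}
  {φ : V ≃* U} {i i' j s s' t t' : A}

theorem mul_mul_eq (hs : IsWitness σ φ i j s s') (ht : IsWitness σ φ i' j t t') :
    s * t' * (t * s') = i := by
  obtain ⟨-, -, -, -, hjs', -, hss', -⟩ := hs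
  obtain ⟨-, -, -, -, -, -, -, ht't⟩ := ht
  rw [mul_assoc, ← mul_assoc t', ht't, hjs', hss']

theorem mul_mul_mul_eq (hs : IsWitness σ φ i j s s') (ht : IsWitness σ φ i' j t t') :
    s * t' * (t * s') * (s * t') = s * t' := by
  rw [hs.mul_mul_eq ht, ← mul_assoc, hs.2.1]

theorem commute_mul (hs : IsWitness σ φ i j s s') (ht : IsWitness σ φ i' j t t') (u : U) :
    (σ (u : G) : A) * (s * t') = s * t' * σ (u : G) := by
  obtain ⟨hsφ, -⟩ := hs
  obtain ⟨-, -, -, ht'φ, -⟩ := ht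
  have hsu := hsφ (φ.symm u)
  rw [MulEquiv.apply_symm_apply] at hsu
  rw [← mul_assoc, hsu, mul_assoc, ht'φ u, mul_assoc]

end IsWitness

theorem stmt7_general (F : Type*) [Field F] (A : Type*) [Ring A] [Algebra F A]
    [FiniteDimensional F A] (G : Type*) [Group G] (σ : G →* Aˣ)
    (U V : Subgroup G) (φ : V ≃* U) (i i' j : A)
    (hw : ∃ s s' : A, IsWitness σ φ i j s s')
    (hw' : ∃ t t' : A, IsWitness σ φ i' j t t') :
    ∃ r : Aˣ, (∀ u : U, (σ (u : G) : A) * (r : A) = (r : A) * (σ (u : G) : A)) ∧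
      i = (r : A) * i' * ((r⁻¹ : Aˣ) : A) := by
  obtain ⟨s, s', hs⟩ := hw
  obtain ⟨t, t', ht⟩ := hw'
  let B := Subalgebra.centralizer F (Set.range fun u : U => (σ (u : G) : A))
  have mem_B {x : A} (hx : ∀ u : U, (σ (u : G) : A) * x = x * σ (u : G)) : x ∈ B := by
    rintro _ ⟨u, rfl⟩
    exact hx u
  have : IsArtinianRing B := IsArtinianRing.of_finite F B
  let a : B := ⟨s * t', mem_B (hs.commute_mul ht)⟩
  let b : B := ⟨t * s', mem_B (ht.commute_mul hs)⟩
  obtain ⟨r, hr⟩ := IsArtinianRing.exists_unit_mul_eq_mul_mul_inv (a := a) (b := b)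
    (Subtype.ext (hs.mul_mul_mul_eq ht)) (Subtype.ext (ht.mul_mul_mul_eq hs))
  refine ⟨Units.map (B.val : B →* A) r, fun u => (r : B).2 _ ⟨u, rfl⟩, ?_⟩
  rw [← hs.mul_mul_eq ht, ← ht.mul_mul_eq hs]
  exact congr_arg Subtype.val hr

/-- Lemma 4.2 (uniqueness of the point up to conjugacy): if idempotents `i, i' ∈ A^U` are
both witnessed from the same idempotent `j ∈ A^V` along `φ`, then `i` and `i'` are
conjugate by a unit of `A` commuting with `σ(u)` for all `u ∈ U`. -/
theorem stmt7 (F : Type*) [Field F] (A : Type*) [Ring A] [Algebra F A]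
    [FiniteDimensional F A] (G : Type*) [Group G] [Finite G] (σ : G →* Aˣ)
    (U V : Subgroup G) (φ : V ≃* U) (i i' j : A)
    (hi : i * i = i) (hiU : ∀ u : U, (σ (u : G) : A) * i = i * (σ (u : G) : A))
    (hi' : i' * i' = i') (hi'U : ∀ u : U, (σ (u : G) : A) * i' = i' * (σ (u : G) : A))
    (hj : j * j = j) (hjV : ∀ v : V, (σ (v : G) : A) * j = j * (σ (v : G) : A))
    (hw : ∃ s s' : A, IsWitness σ φ i j s s')
    (hw' : ∃ t t' : A, IsWitness σ φ i' j t t') :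
    ∃ r : Aˣ, (∀ u : U, (σ (u : G) : A) * (r : A) = (r : A) * (σ (u : G) : A)) ∧
      i = (r : A) * i' * ((r⁻¹ : Aˣ) : A) :=
  stmt7_general F A G σ U V φ i i' j hw hw'
end

section
/- Let A be a unital associative F-algebra with a group homomorphism σ : G → A^× from a finite group G, let U and V be subgroups of G, let φ : V → U be a group isomorphism, let i and j be idempotents of A^U and A^V respectively, and let (c, d) be a φ-witness j ↦ i. Let T be a subgroup of V, let S = φ(T), and let k be an idempotent of A^T with j k = k = k j. Then: c k d is an idempotent of A^S satisfying i (c k d) = c k d = (c k d) i; the pair (c k, k d) is a witness k ↦ c k d for the restriction of φ to an isomorphism T → S; if k' is another idempotent of A^T with j k' = k' = k' j and k k' = 0 = k' k, then (c k d)(c k' d) = 0 = (c k' d)(c k d); and if k is a primitive idempotent of A^T, then c k d is a primitive idempotent of A^S. -/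
/-- An idempotent `e` of a ring, lying in the subset `S`, is primitive in `S` if `e ≠ 0`
and `e` is not the sum of two nonzero orthogonal idempotents lying in `S`. -/
def IsPrimitiveIdemOn {A : Type*} [Ring A] (S : Set A) (e : A) : Prop :=
  e * e = e ∧ e ≠ 0 ∧ ∀ e₁ e₂ : A, e₁ ∈ S → e₂ ∈ S → e₁ * e₁ = e₁ → e₂ * e₂ = e₂ →
    e₁ * e₂ = 0 → e₂ * e₁ = 0 → e = e₁ + e₂ → e₁ = 0 ∨ e₂ = 0

/-!
Conjugation by the witness, `x ↦ c x d` and `y ↦ d y c`, gives mutually inverse bijections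
between the corner of `A` cut out by the idempotent `d c = j` and the one cut out by `c d = i`,
and these bijections are multiplicative on the corners. Since `σ(φ t) c = c σ(t)` and
`σ(t) d = d σ(φ t)`, they also exchange the elements commuting with `σ(T)` and those commuting
with `σ(φ(T))`. Idempotents, orthogonality and decompositions into orthogonal idempotents are
therefore carried back and forth.
-/

section Conjugation

variable {M : Type*} [Semigroup M] {c d x : M}

theorem mul_conj_mul_conj (hx : x * (d * c) = x) (y : M) :
    c * x * d * (c * y * d) = c * (x * y) * d := by
  rw [show c * x * d * (c * y * d) = c * (x * (d * c)) * y * d by simp only [mul_assoc], hx,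
    mul_assoc c x y]

theorem conj_conj_eq_self (hl : d * c * x = x) (hr : x * (d * c) = x) :
    d * (c * x * d) * c = x := by
  rw [show d * (c * x * d) * c = d * c * x * (d * c) by simp only [mul_assoc], hl, hr]

theorem conj_mul_mul_eq_conj (hr : x * (d * c) = x) : c * x * d * (c * d) = c * x * d := by
  rw [show c * x * d * (c * d) = c * (x * (d * c)) * d by simp only [mul_assoc], hr]

theorem mul_mul_conj_eq_conj (hl : d * c * x = x) : c * d * (c * x * d) = c * x * d := by
  rw [show c * d * (c * x * d) = c * (d * c * x) * d by simp only [mul_assoc], hl]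

theorem SemiconjBy.conj {a b : M} (hc : SemiconjBy c b a) (hx : SemiconjBy x b b)
    (hd : SemiconjBy d a b) : SemiconjBy (c * x * d) a a :=
  (hc.mul_left hx).mul_left hd

end Conjugation

section Primitive

variable {A : Type*} [Ring A]

theorem IsPrimitiveIdemOn.conj {S S' : Set A} {c d k : A} (hl : d * c * k = k)
    (hr : k * (d * c) = k) (hS : ∀ y ∈ S', d * y * c ∈ S) (hk : IsPrimitiveIdemOn S k) :
    IsPrimitiveIdemOn S' (c * k * d) := by
  obtain ⟨hkk, hk0, hsplit⟩ := hk
  refine ⟨by rw [mul_conj_mul_conj hr, hkk], fun h ↦ hk0 ?_, ?_⟩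
  · rw [← conj_conj_eq_self hl hr, h, mul_zero, zero_mul]
  intro e₁ e₂ he₁S he₂S he₁ he₂ h₁₂ h₂₁ hsum
  set e := c * k * d
  have corner : ∀ e', e * e' = e' → e' * e = e' → c * d * e' = e' ∧ e' * (c * d) = e' :=
    fun e' hl' hr' ↦
      ⟨by rw [← hl', ← mul_assoc, mul_mul_conj_eq_conj hl],
        by rw [← hr', mul_assoc, conj_mul_mul_eq_conj hr]⟩
  obtain ⟨hl₁, hr₁⟩ := corner e₁ (by rw [hsum, add_mul, he₁, h₂₁, add_zero])
    (by rw [hsum, mul_add, he₁, h₁₂, add_zero])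
  obtain ⟨hl₂, hr₂⟩ := corner e₂ (by rw [hsum, add_mul, h₁₂, he₂, zero_add])
    (by rw [hsum, mul_add, h₂₁, he₂, zero_add])
  have hsum' : k = d * e₁ * c + d * e₂ * c := by
    rw [← add_mul, ← mul_add, ← hsum, conj_conj_eq_self hl hr]
  refine (hsplit _ _ (hS _ he₁S) (hS _ he₂S) (by rw [mul_conj_mul_conj hr₁, he₁])
    (by rw [mul_conj_mul_conj hr₂, he₂]) (by rw [mul_conj_mul_conj hr₁, h₁₂, mul_zero, zero_mul])
    (by rw [mul_conj_mul_conj hr₂, h₂₁, mul_zero, zero_mul]) hsum').imp (fun h ↦ ?_) (fun h ↦ ?_)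
  · rw [← conj_conj_eq_self hl₁ hr₁, h, mul_zero, zero_mul]
  · rw [← conj_conj_eq_self hl₂ hr₂, h, mul_zero, zero_mul]

end Primitive

theorem stmt9_general (A : Type*) [Ring A]
    (G : Type*) [Group G] (σ : G →* Aˣ)
    (U V : Subgroup G) (φ : V ≃* U) (i j : A)
    (c d : A) (hcd : IsWitness σ φ i j c d)
    (T : Subgroup G) (hT : T ≤ V) (k : A) (hk : k * k = k)
    (hkT : ∀ t : T, (σ (t : G) : A) * k = k * (σ (t : G) : A))
    (hjk : j * k = k) (hkj : k * j = k) :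
    ((c * k * d) * (c * k * d) = c * k * d ∧
      ∀ t : T, (σ ((φ ⟨(t : G), hT t.2⟩ : U) : G) : A) * (c * k * d)
        = (c * k * d) * (σ ((φ ⟨(t : G), hT t.2⟩ : U) : G) : A)) ∧
    (i * (c * k * d) = c * k * d ∧ (c * k * d) * i = c * k * d) ∧
    ((∀ t : T, (σ ((φ ⟨(t : G), hT t.2⟩ : U) : G) : A) * (c * k) = (c * k) * (σ (t : G) : A)) ∧
      (c * k * d) * (c * k) = c * k ∧ (c * k) * k = c * k ∧
      (∀ t : T, (σ (t : G) : A) * (k * d) = (k * d) * (σ ((φ ⟨(t : G), hT t.2⟩ : U) : G) : A)) ∧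
      k * (k * d) = k * d ∧ (k * d) * (c * k * d) = k * d ∧
      (c * k) * (k * d) = c * k * d ∧ (k * d) * (c * k) = k) ∧
    (∀ k' : A, k' * k' = k' →
      (∀ t : T, (σ (t : G) : A) * k' = k' * (σ (t : G) : A)) →
      j * k' = k' → k' * j = k' → k * k' = 0 → k' * k = 0 →
      (c * k * d) * (c * k' * d) = 0 ∧ (c * k' * d) * (c * k * d) = 0) ∧
    (IsPrimitiveIdemOn {a : A | ∀ t : T, (σ (t : G) : A) * a = a * (σ (t : G) : A)} k →
      IsPrimitiveIdemOn
        {a : A | ∀ t : T, (σ ((φ ⟨(t : G), hT t.2⟩ : U) : G) : A) * a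
          = a * (σ ((φ ⟨(t : G), hT t.2⟩ : U) : G) : A)} (c * k * d)) := by
  obtain ⟨hc, hic, -, hd, -, hdi, -, rfl⟩ := hcd
  have hcT (t : T) : SemiconjBy c (σ t) (σ (φ ⟨t, hT t.2⟩)) :=
    (hc ⟨t, hT t.2⟩).symm
  have hdT (t : T) : SemiconjBy d (σ (φ ⟨t, hT t.2⟩)) (σ t) := by
    have h := (hd (φ ⟨t, hT t.2⟩)).symm
    rwa [MulEquiv.symm_apply_apply] at h
  have hkT' (t : T) : SemiconjBy k (σ t) (σ t) := (hkT t).symm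
  refine ⟨⟨by rw [mul_conj_mul_conj hkj, hk], fun t ↦ ((hcT t).conj (hkT' t) (hdT t)).eq.symm⟩,
    ⟨by simp only [← mul_assoc, hic], by rw [mul_assoc, hdi]⟩,
    ⟨fun t ↦ ((hcT t).mul_left (hkT' t)).eq.symm, ?_, by rw [mul_assoc, hk],
      fun t ↦ ((hkT' t).mul_left (hdT t)).eq.symm, by rw [← mul_assoc, hk], ?_,
      by rw [mul_assoc, ← mul_assoc k, hk, ← mul_assoc], ?_⟩,
    fun k' _ _ _ hk'j hkk' hk'k ↦ ⟨?_, ?_⟩,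
    IsPrimitiveIdemOn.conj hjk hkj fun y hy t ↦ ((hdT t).conj (hy t).symm (hcT t)).eq.symm⟩
  · rw [show c * k * d * (c * k) = c * (k * (d * c) * k) by simp only [mul_assoc], hkj, hk]
  · rw [show k * d * (c * k * d) = k * (d * c) * k * d by simp only [mul_assoc], hkj, hk]
  · rw [show k * d * (c * k) = k * (d * c) * k by simp only [mul_assoc], hkj, hk]
  · rw [mul_conj_mul_conj hkj, hkk', mul_zero, zero_mul]
  · rw [mul_conj_mul_conj hk'j, hk'k, mul_zero, zero_mul]

/-- Restriction of witnesses to pointed subgroups (from the proof of Lemma 4.4): given a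
`φ`-witness `(c, d) : j ↦ i`, a subgroup `T ≤ V` with `S = φ(T)`, and an idempotent
`k ∈ A^T` with `k ≤ j`, then `c k d` is an idempotent of `A^S` with `c k d ≤ i`,
`(c k, k d)` is a witness `k ↦ c k d` for the restriction of `φ` to `T → S`, orthogonal
choices of `k` yield orthogonal idempotents, and `c k d` is primitive in `A^S` whenever `k`
is primitive in `A^T`. -/
theorem stmt9 (F : Type*) [Field F] (A : Type*) [Ring A] [Algebra F A]
    (G : Type*) [Group G] [Finite G] (σ : G →* Aˣ)
    (U V : Subgroup G) (φ : V ≃* U) (i j : A)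
    (hi : i * i = i) (hiU : ∀ u : U, (σ (u : G) : A) * i = i * (σ (u : G) : A))
    (hj : j * j = j) (hjV : ∀ v : V, (σ (v : G) : A) * j = j * (σ (v : G) : A))
    (c d : A) (hcd : IsWitness σ φ i j c d)
    (T : Subgroup G) (hT : T ≤ V) (k : A) (hk : k * k = k)
    (hkT : ∀ t : T, (σ (t : G) : A) * k = k * (σ (t : G) : A))
    (hjk : j * k = k) (hkj : k * j = k) :
    ((c * k * d) * (c * k * d) = c * k * d ∧
      ∀ t : T, (σ ((φ ⟨(t : G), hT t.2⟩ : U) : G) : A) * (c * k * d)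
        = (c * k * d) * (σ ((φ ⟨(t : G), hT t.2⟩ : U) : G) : A)) ∧
    (i * (c * k * d) = c * k * d ∧ (c * k * d) * i = c * k * d) ∧
    ((∀ t : T, (σ ((φ ⟨(t : G), hT t.2⟩ : U) : G) : A) * (c * k) = (c * k) * (σ (t : G) : A)) ∧
      (c * k * d) * (c * k) = c * k ∧ (c * k) * k = c * k ∧
      (∀ t : T, (σ (t : G) : A) * (k * d) = (k * d) * (σ ((φ ⟨(t : G), hT t.2⟩ : U) : G) : A)) ∧
      k * (k * d) = k * d ∧ (k * d) * (c * k * d) = k * d ∧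
      (c * k) * (k * d) = c * k * d ∧ (k * d) * (c * k) = k) ∧
    (∀ k' : A, k' * k' = k' →
      (∀ t : T, (σ (t : G) : A) * k' = k' * (σ (t : G) : A)) →
      j * k' = k' → k' * j = k' → k * k' = 0 → k' * k = 0 →
      (c * k * d) * (c * k' * d) = 0 ∧ (c * k' * d) * (c * k * d) = 0) ∧
    (IsPrimitiveIdemOn {a : A | ∀ t : T, (σ (t : G) : A) * a = a * (σ (t : G) : A)} k →
      IsPrimitiveIdemOn
        {a : A | ∀ t : T, (σ ((φ ⟨(t : G), hT t.2⟩ : U) : G) : A) * a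
          = a * (σ ((φ ⟨(t : G), hT t.2⟩ : U) : G) : A)} (c * k * d)) :=
  stmt9_general A G σ U V φ i j c d hcd T hT k hk hkT hjk hkj
end

section
/- Let A be a unital associative F-algebra with a group homomorphism σ : G → A^× from a finite group G, let U and V be subgroups of G, and let φ : V → U be a group isomorphism. Let J be a finite index set, let (e_t)_{t∈J} be pairwise orthogonal idempotents of A^V with Σ_{t∈J} e_t = 1, let (f_t)_{t∈J} be pairwise orthogonal idempotents of A^U with Σ_{t∈J} f_t = 1, and suppose that for each t ∈ J there is a φ-witness (s_t, s'_t) : e_t ↦ f_t. Then s := Σ_{t∈J} s_t is a unit of A with inverse Σ_{t∈J} s'_t, and σ(φ(v)) s = s σ(v) for all v ∈ V. -/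
-- Cross terms `a t * b t'` vanish because they factor through `e t * e t' = 0`.
theorem Finset.sum_mul_sum_eq_sum_mul_of_orthogonal {R ι : Type*} [NonUnitalSemiring R]
    (S : Finset ι) {a b e : ι → R} (ha : ∀ t, a t * e t = a t) (hb : ∀ t, e t * b t = b t)
    (he : Pairwise fun t t' => e t * e t' = 0) :
    (∑ t ∈ S, a t) * (∑ t ∈ S, b t) = ∑ t ∈ S, a t * b t := by
  rw [Finset.sum_mul_sum]
  refine Finset.sum_congr rfl fun t ht => Finset.sum_eq_single_of_mem t ht fun t' _ hne => ?_
  calc a t * b t' = a t * e t * (e t' * b t') := by rw [ha, hb]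
    _ = a t * (e t * e t') * b t' := by simp only [mul_assoc]
    _ = 0 := by rw [he hne.symm, mul_zero, zero_mul]

namespace IsWitness

variable {G A : Type*} [Group G] [Ring A] {σ : G →* Aˣ} {U V : Subgroup G} {φ : V ≃* U}
  {i j s s' : A}

theorem intertwines (h : IsWitness σ φ i j s s') (v : V) :
    (σ ((φ v : U) : G) : A) * s = s * (σ (v : G) : A) := h.1 v

theorem idem_mul (h : IsWitness σ φ i j s s') : i * s = s := h.2.1

theorem mul_idem (h : IsWitness σ φ i j s s') : s * j = s := h.2.2.1

theorem idem_mul_inv (h : IsWitness σ φ i j s s') : j * s' = s' := h.2.2.2.2.1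

theorem inv_mul_idem (h : IsWitness σ φ i j s s') : s' * i = s' := h.2.2.2.2.2.1

theorem mul_inv (h : IsWitness σ φ i j s s') : s * s' = i := h.2.2.2.2.2.2.1

theorem inv_mul (h : IsWitness σ φ i j s s') : s' * s = j := h.2.2.2.2.2.2.2

end IsWitness

theorem stmt10_general (A : Type*) [Ring A]
    (G : Type*) [Group G] (σ : G →* Aˣ)
    (U V : Subgroup G) (φ : V ≃* U) (J : Type*) [Fintype J] (e f : J → A)
    (heo : ∀ t t', t ≠ t' → e t * e t' = 0) (hesum : ∑ t, e t = 1)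
    (hfo : ∀ t t', t ≠ t' → f t * f t' = 0) (hfsum : ∑ t, f t = 1)
    (s s' : J → A) (hw : ∀ t, IsWitness σ φ (f t) (e t) (s t) (s' t)) :
    IsUnit (∑ t, s t) ∧ (∑ t, s t) * (∑ t, s' t) = 1 ∧ (∑ t, s' t) * (∑ t, s t) = 1 ∧
      ∀ v : V, (σ ((φ v : U) : G) : A) * (∑ t, s t) = (∑ t, s t) * (σ (v : G) : A) := by
  have hss' : (∑ t, s t) * (∑ t, s' t) = 1 := by
    rw [Finset.sum_mul_sum_eq_sum_mul_of_orthogonal _ (fun t => (hw t).mul_idem)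
      (fun t => (hw t).idem_mul_inv) heo, ← hfsum]
    exact Finset.sum_congr rfl fun t _ => (hw t).mul_inv
  have hs's : (∑ t, s' t) * (∑ t, s t) = 1 := by
    rw [Finset.sum_mul_sum_eq_sum_mul_of_orthogonal _ (fun t => (hw t).inv_mul_idem)
      (fun t => (hw t).idem_mul) hfo, ← hesum]
    exact Finset.sum_congr rfl fun t _ => (hw t).inv_mul
  refine ⟨(Units.mk _ _ hss' hs's).isUnit, hss', hs's, fun v => ?_⟩
  rw [Finset.mul_sum, Finset.sum_mul]
  exact Finset.sum_congr rfl fun t _ => (hw t).intertwines v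

/-- Summing witnesses (from the proof of Theorem 5.2, (b) ⇒ (c)): given primitive
idempotent decompositions `1 = Σ_t e_t` in `A^V` and `1 = Σ_t f_t` in `A^U`, with a
`φ`-witness `(s_t, s'_t) : e_t ↦ f_t` for each `t`, the element `s = Σ_t s_t` is a unit of
`A` with inverse `Σ_t s'_t`, and `σ(φ(v)) s = s σ(v)` for all `v ∈ V`. -/
theorem stmt10 (F : Type*) [Field F] (A : Type*) [Ring A] [Algebra F A]
    (G : Type*) [Group G] [Finite G] (σ : G →* Aˣ)
    (U V : Subgroup G) (φ : V ≃* U) (J : Type*) [Fintype J] (e f : J → A)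
    (he : ∀ t, e t * e t = e t) (heV : ∀ t, ∀ v : V, (σ (v : G) : A) * e t = e t * (σ (v : G) : A))
    (heo : ∀ t t', t ≠ t' → e t * e t' = 0) (hesum : ∑ t, e t = 1)
    (hf : ∀ t, f t * f t = f t) (hfU : ∀ t, ∀ u : U, (σ (u : G) : A) * f t = f t * (σ (u : G) : A))
    (hfo : ∀ t t', t ≠ t' → f t * f t' = 0) (hfsum : ∑ t, f t = 1)
    (s s' : J → A) (hw : ∀ t, IsWitness σ φ (f t) (e t) (s t) (s' t)) :
    IsUnit (∑ t, s t) ∧ (∑ t, s t) * (∑ t, s' t) = 1 ∧ (∑ t, s' t) * (∑ t, s t) = 1 ∧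
      ∀ v : V, (σ ((φ v : U) : G) : A) * (∑ t, s t) = (∑ t, s t) * (σ (v : G) : A) :=
  stmt10_general A G σ U V φ J e f heo hesum hfo hfsum s s' hw
end

section
/- Let F be a field of prime characteristic p, let D be a finite p-group, let A be a finite-dimensional unital associative F-algebra, let σ : D → A^× be a group homomorphism, and let Ω be a D×D-stable basis of A. Let P and Q be subgroups of D, let φ : Q → P be a group isomorphism, and suppose there is a unit u ∈ A^× with σ(φ(q)) u = u σ(q) for all q ∈ Q. Then the three cardinalities |{w ∈ Ω : σ(φ(q)) w σ(q)⁻¹ = w for all q ∈ Q}|, |{w ∈ Ω : σ(q) w = w σ(q) for all q ∈ Q}|, and |{w ∈ Ω : σ(p) w = w σ(p) for all p ∈ P}| are all equal. -/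
/-!
Let a `p`-group `G` act linearly on a vector space `V` over a field of characteristic `p`,
permuting a basis `Ω`. Write `I` for the span of the vectors `g • v - v`. The coordinates at the
fixed basis vectors vanish on `I`, and inside `V^G` they cut out exactly `V^G ∩ I`: an invariant
vector is constant on each orbit of `Ω`, and the sum over a non-trivial orbit lies in `I` because
the orbit has `p`-power length. Hence the number of fixed basis vectors is
`dim V^G - dim (V^G ∩ I)`, which only depends on the isomorphism class of the representation.

The three counts are the fixed points of the representations
`σ(φ q) a σ(q)⁻¹`, `σ(q) a σ(q)⁻¹` and `σ(φ q) a σ(φ q)⁻¹` of `Q` on `A`, all permuting `Ω`, and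
`a ↦ u⁻¹ a`, resp. `a ↦ a u⁻¹`, is an isomorphism from the first to the second, resp. the third.
-/

open Module MulAction Finset

theorem IsPGroup.natCast_card_orbit_eq_zero {p : ℕ} [Fact p.Prime] {G α R : Type*} [Group G]
    [MulAction G α] [AddMonoidWithOne R] [CharP R p] (hG : IsPGroup p G) {a : α}
    [Finite (orbit G a)] (ha : a ∉ fixedPoints G α) : (Nat.card (orbit G a) : R) = 0 := by
  obtain ⟨n, hn⟩ := hG.card_orbit a
  have hn0 : n ≠ 0 := by
    rintro rfl
    refine ha (subsingleton_orbit_iff_mem_fixedPoints.1 ?_)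
    rw [pow_zero, Nat.card_eq_one_iff_unique] at hn
    exact Set.subsingleton_coe _ |>.1 hn.1
  rw [CharP.cast_eq_zero_iff R p, hn]
  exact dvd_pow_self p hn0

namespace Representation

section Permutation

variable {k G V ι : Type*} [CommRing k] [Group G] [AddCommGroup V] [Module k V] [MulAction G ι]
  {ρ : Representation k G V} {b : Basis ι k V}

theorem repr_apply_smul (hb : ∀ g i, ρ g (b i) = b (g • i)) (g : G) (v : V) (i : ι) :
    b.repr (ρ g v) (g • i) = b.repr v i := by
  suffices Finsupp.lapply (g • i) ∘ₗ b.repr.toLinearMap ∘ₗ ρ g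
      = Finsupp.lapply i ∘ₗ b.repr.toLinearMap from LinearMap.congr_fun this v
  refine b.ext fun j => ?_
  simp [hb, Finsupp.single_apply_left (MulAction.injective g)]

theorem repr_apply_eq_of_mem_invariants (hb : ∀ g i, ρ g (b i) = b (g • i)) {v : V}
    (hv : v ∈ invariants ρ) (g : G) (i : ι) : b.repr v (g • i) = b.repr v i := by
  conv_lhs => rw [← hv g]
  exact repr_apply_smul hb g v i

theorem repr_apply_eq_zero_of_mem_coinvariantsKer (hb : ∀ g i, ρ g (b i) = b (g • i)) {i : ι}
    (hi : i ∈ fixedPoints G ι) {v : V} (hv : v ∈ Coinvariants.ker ρ) : b.repr v i = 0 := by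
  suffices Coinvariants.ker ρ ≤ LinearMap.ker (Finsupp.lapply i ∘ₗ b.repr.toLinearMap) from this hv
  refine Submodule.span_le.2 ?_
  rintro _ ⟨⟨g, x⟩, rfl⟩
  have := repr_apply_smul hb g x i
  rw [hi g] at this
  simp [this]

theorem sum_sub_card_smul_mem_coinvariantsKer (hb : ∀ g i, ρ g (b i) = b (g • i)) (i : ι)
    {s : Finset ι} (hs : ↑s ⊆ orbit G i) : ∑ j ∈ s, b j - #s • b i ∈ Coinvariants.ker ρ := by
  rw [← sum_const, ← sum_sub_distrib]
  refine Submodule.sum_mem _ fun j hj => ?_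
  obtain ⟨g, rfl⟩ := hs hj
  rw [← hb]
  exact Coinvariants.sub_mem_ker g (b i)

theorem exists_mem_invariants_repr_eq [Finite ι] (hb : ∀ g i, ρ g (b i) = b (g • i))
    (f : fixedPoints G ι → k) : ∃ v ∈ invariants ρ, ∀ i : fixedPoints G ι, b.repr v i = f i := by
  classical
  cases nonempty_fintype ι
  refine ⟨∑ i : fixedPoints G ι, f i • b i, fun g => ?_, fun j => ?_⟩
  · simp only [map_sum, map_smul, hb]
    refine sum_congr rfl fun i _ => ?_
    rw [i.2 g]
  · simp [Finsupp.single_apply, Subtype.coe_inj]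

variable {p : ℕ} [Fact p.Prime] [CharP k p]

theorem sum_repr_smul_mem_coinvariantsKer_of_coe_eq_orbit (hG : IsPGroup p G)
    (hb : ∀ g i, ρ g (b i) = b (g • i)) {v : V} (hv : v ∈ invariants ρ) {i : ι}
    (hfix : i ∈ fixedPoints G ι → b.repr v i = 0) {s : Finset ι} (hs : ↑s = orbit G i) :
    ∑ j ∈ s, b.repr v j • b j ∈ Coinvariants.ker ρ := by
  have hconst : ∑ j ∈ s, b.repr v j • b j = b.repr v i • ∑ j ∈ s, b j := by
    rw [smul_sum]
    refine sum_congr rfl fun j hj => ?_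
    obtain ⟨g, rfl⟩ := (hs ▸ hj : j ∈ orbit G i)
    rw [repr_apply_eq_of_mem_invariants hb hv]
  rw [hconst]
  by_cases hi : i ∈ fixedPoints G ι
  · simp [hfix hi]
  have : Finite (orbit G i) := hs ▸ s.finite_toSet
  have hcard : (#s : k) = 0 := by
    rw [← IsPGroup.natCast_card_orbit_eq_zero hG hi, ← hs, Nat.card_coe_set_eq,
      Set.ncard_coe_finset]
  have hsum : ∑ j ∈ s, b j = ∑ j ∈ s, b j - #s • b i := by
    rw [← Nat.cast_smul_eq_nsmul k, hcard, zero_smul, sub_zero]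
  rw [hsum]
  exact Submodule.smul_mem _ _ (sum_sub_card_smul_mem_coinvariantsKer hb i hs.subset)

theorem mem_coinvariantsKer_of_mem_invariants [Finite ι] (hG : IsPGroup p G)
    (hb : ∀ g i, ρ g (b i) = b (g • i)) {v : V} (hv : v ∈ invariants ρ)
    (hfix : ∀ i ∈ fixedPoints G ι, b.repr v i = 0) : v ∈ Coinvariants.ker ρ := by
  classical
  cases nonempty_fintype ι
  rw [← b.sum_repr v, ← sum_fiberwise univ (Quotient.mk (orbitRel G ι))]
  refine Submodule.sum_mem _ fun O _ => ?_
  refine sum_repr_smul_mem_coinvariantsKer_of_coe_eq_orbit hG hb hv (hfix O.out) ?_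
  ext j
  rw [← orbitRel.Quotient.orbit_eq_orbit_out O Quotient.out_eq']
  simp [orbitRel.Quotient.mem_orbit]

end Permutation

namespace Equiv

variable {k G V W : Type*} [CommRing k] [Group G] [AddCommGroup V] [Module k V] [AddCommGroup W]
  [Module k W] {ρ : Representation k G V} {τ : Representation k G W}

theorem map_invariants (e : ρ.Equiv τ) :
    (invariants ρ).map (e.toLinearEquiv : V →ₗ[k] W) = invariants τ := by
  ext w
  rw [Submodule.mem_map_equiv, mem_invariants, mem_invariants]
  refine forall_congr' fun g => ?_
  rw [← e.toLinearEquiv.injective.eq_iff, LinearEquiv.apply_symm_apply, toLinearEquiv_apply,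
    IntertwiningMap.isIntertwining, ← toLinearEquiv_apply, LinearEquiv.apply_symm_apply]

theorem map_coinvariantsKer (e : ρ.Equiv τ) :
    (Coinvariants.ker ρ).map (e.toLinearEquiv : V →ₗ[k] W) = Coinvariants.ker τ := by
  rw [Coinvariants.ker, Submodule.map_span, Coinvariants.ker, ← Set.range_comp]
  have : Function.Surjective (Prod.map id e.toLinearEquiv : G × V → G × W) :=
    Function.surjective_id.prodMap e.toLinearEquiv.surjective
  rw [← this.range_comp]
  congr 2
  ext ⟨g, v⟩
  simpa using IntertwiningMap.isIntertwining ρ τ e.toIntertwiningMap g v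

def compOfSemiconjBy {H : Type*} [Group H] (π : Representation k H V) {f f' : G →* H}
    (h : H) (hf : ∀ g, SemiconjBy h (f g) (f' g)) :
    Representation.Equiv (π.comp f) (π.comp f') :=
  Equiv.mk (LinearEquiv.ofLinearMap (f := π h) (g := π h⁻¹)
    (by rw [← Module.End.mul_eq_comp, ← map_mul, mul_inv_cancel, map_one]; rfl)
    (by rw [← Module.End.mul_eq_comp, ← map_mul, inv_mul_cancel, map_one]; rfl))
    fun g => by
      change π h ∘ₗ π (f g) = π (f' g) ∘ₗ π h
      rw [← Module.End.mul_eq_comp, ← Module.End.mul_eq_comp, ← map_mul, ← map_mul, (hf g).eq]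

end Equiv

section Count

variable {k G V ι : Type*} [Field k] [Group G] [AddCommGroup V] [Module k V] [MulAction G ι]
  {ρ : Representation k G V} {b : Basis ι k V}

theorem card_fixedPoints_add_finrank_inf_coinvariantsKer [Finite ι] {p : ℕ} [Fact p.Prime]
    [CharP k p] (hG : IsPGroup p G) (hb : ∀ g i, ρ g (b i) = b (g • i)) :
    Nat.card (fixedPoints G ι) + finrank k ↥(invariants ρ ⊓ Coinvariants.ker ρ)
      = finrank k (invariants ρ) := by
  classical
  cases nonempty_fintype ι
  have := b.finiteDimensional_of_finite
  let π : invariants ρ →ₗ[k] fixedPoints G ι → k := LinearMap.pi fun i =>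
    Finsupp.lapply (i : ι) ∘ₗ b.repr.toLinearMap ∘ₗ (invariants ρ).subtype
  have hπ : LinearMap.range π = ⊤ := LinearMap.range_eq_top.2 fun f => by
    obtain ⟨v, hv, hvf⟩ := exists_mem_invariants_repr_eq hb f
    exact ⟨⟨v, hv⟩, funext hvf⟩
  have hker :
      LinearMap.ker π = (invariants ρ ⊓ Coinvariants.ker ρ).comap (invariants ρ).subtype := by
    ext ⟨v, hv⟩
    simp only [LinearMap.mem_ker, Submodule.mem_comap, Submodule.subtype_apply, Submodule.mem_inf,
      hv, true_and, funext_iff]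
    exact ⟨fun h => mem_coinvariantsKer_of_mem_invariants hG hb hv fun i hi => h ⟨i, hi⟩,
      fun h i => repr_apply_eq_zero_of_mem_coinvariantsKer hb i.2 h⟩
  have := π.finrank_range_add_finrank_ker
  rwa [hπ, hker, finrank_top, Module.finrank_fintype_fun_eq_card, ← Nat.card_eq_fintype_card,
    (Submodule.comapSubtypeEquivOfLe inf_le_left).finrank_eq] at this

theorem ncard_fixed_add_finrank_inf_coinvariantsKer {p : ℕ} [Fact p.Prime] [CharP k p]
    (hG : IsPGroup p G) {Ω : Finset V} (hli : LinearIndependent k (fun x : (Ω : Set V) => (x : V)))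
    (hsp : Submodule.span k (Ω : Set V) = ⊤) (hΩ : ∀ g, ∀ w ∈ Ω, ρ g w ∈ Ω) :
    {w ∈ (Ω : Set V) | ∀ g, ρ g w = w}.ncard + finrank k ↥(invariants ρ ⊓ Coinvariants.ker ρ)
      = finrank k (invariants ρ) := by
  let : MulAction G (Ω : Set V) :=
    { smul g w := ⟨ρ g w, hΩ g w w.2⟩
      one_smul w := Subtype.ext (show ρ 1 w = w by simp)
      mul_smul g h w := Subtype.ext (show ρ (g * h) w = ρ g (ρ h w) by simp) }
  have hsmul (g : G) (w : (Ω : Set V)) : ((g • w : (Ω : Set V)) : V) = ρ g w := rfl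
  let b := Basis.mk hli (by rw [Subtype.range_coe, hsp])
  have hfix : {w ∈ (Ω : Set V) | ∀ g, ρ g w = w} = Subtype.val '' fixedPoints G (Ω : Set V) := by
    ext w
    simp [Subtype.ext_iff, hsmul, and_comm]
  rw [hfix, Set.ncard_image_of_injective _ Subtype.val_injective, ← Nat.card_coe_set_eq]
  exact card_fixedPoints_add_finrank_inf_coinvariantsKer (b := b) hG fun g i => by
    simp [b, hsmul]

theorem ncard_fixed_eq_of_equiv {p : ℕ} [Fact p.Prime] [CharP k p] (hG : IsPGroup p G)
    {τ : Representation k G V} (e : ρ.Equiv τ) {Ω : Finset V}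
    (hli : LinearIndependent k (fun x : (Ω : Set V) => (x : V)))
    (hsp : Submodule.span k (Ω : Set V) = ⊤) (hρΩ : ∀ g, ∀ w ∈ Ω, ρ g w ∈ Ω)
    (hτΩ : ∀ g, ∀ w ∈ Ω, τ g w ∈ Ω) :
    {w ∈ (Ω : Set V) | ∀ g, ρ g w = w}.ncard = {w ∈ (Ω : Set V) | ∀ g, τ g w = w}.ncard := by
  have hρ := ncard_fixed_add_finrank_inf_coinvariantsKer hG hli hsp hρΩ
  have hτ := ncard_fixed_add_finrank_inf_coinvariantsKer hG hli hsp hτΩ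
  rw [← e.map_invariants, ← e.map_coinvariantsKer,
    ← Submodule.map_inf _ e.toLinearEquiv.injective, LinearEquiv.finrank_map_eq,
    LinearEquiv.finrank_map_eq] at hτ
  omega

end Count

section UnitsBimul

variable (k A : Type*) [CommRing k] [Ring A] [Algebra k A]

def unitsBimul : Representation k (Aˣ × Aˣ) A where
  toFun a :=
    { toFun x := a.1 * x * ↑a.2⁻¹
      map_add' x y := by simp [mul_add, add_mul]
      map_smul' r x := by simp }
  map_one' := by ext; simp
  map_mul' a b := by ext; simp [mul_assoc]

@[simp]
theorem unitsBimul_apply (a : Aˣ × Aˣ) (x : A) : unitsBimul k A a x = a.1 * x * ↑a.2⁻¹ := rfl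

end UnitsBimul

end Representation

open Representation in
theorem stmt12_general (F : Type*) [Field F] (p : ℕ) [Fact p.Prime] [CharP F p]
    (D : Type*) [Group D] (hD : IsPGroup p D)
    (A : Type*) [Ring A] [Algebra F A] (σ : D →* Aˣ)
    (Ω : Finset A)
    (hbasis : LinearIndependent F (fun x : (Ω : Set A) => (x : A)) ∧
      Submodule.span F (Ω : Set A) = ⊤)
    (hstable : ∀ w ∈ Ω, ∀ f g : D, (σ f : A) * w * ((σ g)⁻¹ : Aˣ) ∈ Ω)
    (P Q : Subgroup D) (φ : Q ≃* P) (u : Aˣ)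
    (hu : ∀ q : Q, (σ ((φ q : P) : D) : A) * (u : A) = (u : A) * (σ (q : D) : A)) :
    {w ∈ (Ω : Set A) | ∀ q : Q,
        (σ ((φ q : P) : D) : A) * w * (((σ (q : D))⁻¹ : Aˣ) : A) = w}.ncard
      = {w ∈ (Ω : Set A) | ∀ q : Q, (σ (q : D) : A) * w = w * (σ (q : D) : A)}.ncard ∧
    {w ∈ (Ω : Set A) | ∀ q : Q,
        (σ ((φ q : P) : D) : A) * w * (((σ (q : D))⁻¹ : Aˣ) : A) = w}.ncard
      = {w ∈ (Ω : Set A) | ∀ g : P, (σ (g : D) : A) * w = w * (σ (g : D) : A)}.ncard := by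
  obtain ⟨hli, hsp⟩ := hbasis
  let α : Q →* Aˣ := σ.comp (P.subtype.comp φ.toMonoidHom)
  let β : Q →* Aˣ := σ.comp Q.subtype
  have hαβ (q : Q) : SemiconjBy u (β q) (α q) := (Units.ext (hu q)).symm
  have hQ := hD.to_subgroup Q
  have h₁ := ncard_fixed_eq_of_equiv hQ
    (Equiv.compOfSemiconjBy (unitsBimul F A) (f := α.prod β) (f' := β.prod β) (u⁻¹, 1)
      fun q => (hαβ q).inv_symm_left.prod (SemiconjBy.one_left _)) hli hsp
    (fun q w hw => hstable w hw _ _) (fun q w hw => hstable w hw _ _)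
  have h₂ := ncard_fixed_eq_of_equiv hQ
    (Equiv.compOfSemiconjBy (unitsBimul F A) (f := α.prod β) (f' := α.prod α) (1, u)
      fun q => (SemiconjBy.one_left _).prod (hαβ q)) hli hsp
    (fun q w hw => hstable w hw _ _) (fun q w hw => hstable w hw _ _)
  refine ⟨h₁.trans ?_, h₂.trans ?_⟩
  · congr! 3 with w
    simp [β, Units.mul_inv_eq_iff_eq_mul]
  · congr! 3 with w
    rw [φ.surjective.forall]
    simp [α, Units.mul_inv_eq_iff_eq_mul]

/-- From the proof of Theorem 6.4: let `Ω` be a `D×D`-stable basis of the interior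
`D`-algebra `A` over a field of characteristic `p` (`D` a finite `p`-group), let
`φ : Q → P` be an isomorphism between subgroups of `D`, and suppose there is a unit `u`
with `σ(φ(q)) u = u σ(q)` for all `q ∈ Q`.  Then `|Ω^{Δφ}| = |Ω^{ΔQ}| = |Ω^{ΔP}|`. -/
theorem stmt12 (F : Type*) [Field F] (p : ℕ) [Fact p.Prime] [CharP F p]
    (D : Type*) [Group D] [Finite D] (hD : IsPGroup p D)
    (A : Type*) [Ring A] [Algebra F A] [FiniteDimensional F A] (σ : D →* Aˣ)
    (Ω : Finset A)
    (hbasis : LinearIndependent F (fun x : (Ω : Set A) => (x : A)) ∧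
      Submodule.span F (Ω : Set A) = ⊤)
    (hstable : ∀ w ∈ Ω, ∀ f g : D, (σ f : A) * w * ((σ g)⁻¹ : Aˣ) ∈ Ω)
    (P Q : Subgroup D) (φ : Q ≃* P) (u : Aˣ)
    (hu : ∀ q : Q, (σ ((φ q : P) : D) : A) * (u : A) = (u : A) * (σ (q : D) : A)) :
    {w ∈ (Ω : Set A) | ∀ q : Q,
        (σ ((φ q : P) : D) : A) * w * (((σ (q : D))⁻¹ : Aˣ) : A) = w}.ncard
      = {w ∈ (Ω : Set A) | ∀ q : Q, (σ (q : D) : A) * w = w * (σ (q : D) : A)}.ncard ∧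
    {w ∈ (Ω : Set A) | ∀ q : Q,
        (σ ((φ q : P) : D) : A) * w * (((σ (q : D))⁻¹ : Aˣ) : A) = w}.ncard
      = {w ∈ (Ω : Set A) | ∀ g : P, (σ (g : D) : A) * w = w * (σ (g : D) : A)}.ncard :=
  stmt12_general F p D hD A σ Ω hbasis hstable P Q φ u hu
end

section
/- Let F be an algebraically closed field of prime characteristic p, let D be a finite p-group, let A be a finite-dimensional unital associative F-algebra, let σ : D → A^× be a group homomorphism, and let Ω be a D×D-stable basis of A that is bifree, i.e., for all w ∈ Ω and f, g ∈ D, σ(f) w = w implies f = 1 and w σ(g) = w implies g = 1. Then the following are equivalent: (a) for all subgroups P, Q of D and every group isomorphism φ : Q → P such that some w ∈ Ω satisfies σ(φ(q)) w σ(q)⁻¹ = w for all q ∈ Q, there exists a unit u ∈ A^× with σ(φ(q)) u = u σ(q) for all q ∈ Q; (b) A has a unital D×D-stable basis. -/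
/-!
(a) ⇒ (b): bifreeness makes the stabilizer of each `w ∈ Ω` in `D × D` the graph `Δφ` of an
isomorphism `φ : Q → P`, so (a) yields a unit fixed by it. Choosing such units on orbit
representatives gives a `D × D`-equivariant map `Φ` from `Ω` to the units. The linear maps
`w ↦ w + τ (Φ w - w)` are equivariant; being invertible and sending each `w` to a unit are
polynomial conditions in `τ` that hold at `τ = 0` and `τ = 1` respectively, so over the infinite
field `F` some `τ` satisfies all of them, and the image of `Ω` is a unital stable basis.

(b) ⇒ (a): let `Ω'` be a unital stable basis and `w ∈ Ω` fixed by `Δφ`. Writing `[v : b]_B` for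
the coefficient of `b` in `v` with respect to the basis `B`, the sum over `x ∈ Ω'` of
`[w : x]_{Ω'} [x : w]_Ω` is `[w : w]_Ω = 1`, and its terms are invariant under the `p`-group
`Δφ ≅ Q`. In characteristic `p` the non-trivial orbits contribute `0`, so some `x ∈ Ω'` is fixed
by `Δφ`, and the unit `x` intertwines as required.
-/

open MulAction

theorem MulAction.exists_mulActionHom_mem_of_stabilizer_le {G X Y : Type*} [Group G]
    [MulAction G X] [MulAction G Y] {t : Set Y} (ht : ∀ g : G, ∀ y ∈ t, g • y ∈ t)
    (h : ∀ x : X, ∃ y ∈ t, stabilizer G x ≤ stabilizer G y) :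
    ∃ Φ : X →[G] Y, ∀ x, Φ x ∈ t := by
  choose y hyt hy using h
  let rep : X → X := fun x => (⟦x⟧ : orbitRel.Quotient G X).out
  have rep_smul (a : G) (x : X) : rep (a • x) = rep x :=
    congrArg Quotient.out (Quotient.sound (mem_orbit x a))
  have mem_orbit_rep (x : X) : ∃ g : G, g • x = rep x := Quotient.mk_out (s := orbitRel G X) x
  choose g hg using mem_orbit_rep
  refine ⟨⟨fun x => (g x)⁻¹ • y (rep x), fun a x => ?_⟩, fun x => ht _ _ (hyt _)⟩
  have hfix : g (a • x) * a * (g x)⁻¹ ∈ stabilizer G (rep x) := by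
    rw [mem_stabilizer_iff, mul_smul, mul_smul, inv_smul_eq_iff.mpr (hg x).symm, hg, rep_smul]
  conv_lhs => rw [rep_smul, ← mem_stabilizer_iff.mp (hy _ hfix)]
  simp [mul_smul]

theorem Subgroup.exists_mulEquiv_graph {G₁ G₂ : Type*} [Group G₁] [Group G₂]
    (H : Subgroup (G₁ × G₂)) (h₁ : ∀ a : G₁, (a, 1) ∈ H → a = 1)
    (h₂ : ∀ b : G₂, (1, b) ∈ H → b = 1) :
    ∃ (P : Subgroup G₁) (Q : Subgroup G₂) (φ : Q ≃* P),
      ∀ x : G₁ × G₂, x ∈ H ↔ ∃ q : Q, ((φ q : G₁), (q : G₂)) = x := by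
  let e₁ := (MonoidHom.fst G₁ G₂).comp H.subtype
  let e₂ := (MonoidHom.snd G₁ G₂).comp H.subtype
  have he₁ : Function.Injective e₁ := (injective_iff_map_eq_one e₁).mpr fun s hs => by
    have hs₁ : (s : G₁ × G₂).1 = 1 := hs
    have hs₂ := h₂ _ (hs₁ ▸ s.2 : ((1 : G₁), (s : G₁ × G₂).2) ∈ H)
    exact Subtype.ext (Prod.ext hs₁ hs₂)
  have he₂ : Function.Injective e₂ := (injective_iff_map_eq_one e₂).mpr fun s hs => by
    have hs₂ : (s : G₁ × G₂).2 = 1 := hs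
    have hs₁ := h₁ _ (hs₂ ▸ s.2 : ((s : G₁ × G₂).1, (1 : G₂)) ∈ H)
    exact Subtype.ext (Prod.ext hs₁ hs₂)
  refine ⟨e₁.range, e₂.range, (MonoidHom.ofInjective he₂).symm.trans (MonoidHom.ofInjective he₁),
    fun x => ⟨fun hx => ⟨MonoidHom.ofInjective he₂ ⟨x, hx⟩, ?_⟩, ?_⟩⟩
  · simp only [MulEquiv.trans_apply, MulEquiv.symm_apply_apply, MonoidHom.ofInjective_apply]
    rfl
  · rintro ⟨q, rfl⟩
    obtain ⟨s, rfl⟩ := (MonoidHom.ofInjective he₂).surjective q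
    simp only [MulEquiv.trans_apply, MulEquiv.symm_apply_apply, MonoidHom.ofInjective_apply]
    exact s.2

theorem Module.Basis.repr_smul_smul {G R M : Type*} [Group G] [Semiring R] [AddCommMonoid M]
    [Module R M] [DistribMulAction G M] [SMulCommClass G R M] {S : SubMulAction G M}
    (b : Module.Basis S R M) (hb : ∀ i, b i = i) (g : G) (v : M) (i : S) :
    b.repr (g • v) (g • i) = b.repr v i := by
  have : b.repr.toLinearMap ∘ₗ DistribSMul.toLinearMap R M g =
      Finsupp.lmapDomain R R (g • ·) ∘ₗ b.repr.toLinearMap :=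
    b.ext fun j => by
      have : g • b j = b (g • j) := by rw [hb, hb, SubMulAction.val_smul]
      simp [this]
  rw [← Finsupp.mapDomain_apply (MulAction.injective g) _ i]
  exact DFunLike.congr_fun (LinearMap.congr_fun this v) (g • i)

namespace IsPGroup

variable {p : ℕ} [Fact p.Prime] {G : Type*} [Group G] (hG : IsPGroup p G)
include hG

theorem dvd_card_of_forall_exists_smul_ne {X : Type*} [MulAction G X] {s : Finset X}
    (hs : ∀ g : G, ∀ x ∈ s, g • x ∈ s) (hfree : ∀ x ∈ s, ∃ g : G, g • x ≠ x) :
    p ∣ s.card := by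
  let S : SubMulAction G X := ⟨s, fun g {x} hx => hs g x hx⟩
  have card_S : Nat.card S = s.card := (Nat.card_coe_set_eq _).trans (Set.ncard_coe_finset s)
  by_contra hp
  obtain ⟨x, hx⟩ := hG.nonempty_fixed_point_of_prime_not_dvd_card S (by rwa [card_S])
  obtain ⟨g, hg⟩ := hfree x x.2
  exact hg (congrArg Subtype.val (hx g))

theorem exists_fixed_point_of_sum_ne_zero {X R : Type*} [MulAction G X] [Fintype X]
    [Semiring R] [CharP R p] (f : X → R) (hf : ∀ (g : G) (x : X), f (g • x) = f x)
    (hsum : ∑ x, f x ≠ 0) : ∃ x : X, ∀ g : G, g • x = x := by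
  classical
  by_contra! hfree
  refine hsum ((Finset.sum_comp (fun r => r) f).trans (Finset.sum_eq_zero fun r _ => ?_))
  have hdvd := hG.dvd_card_of_forall_exists_smul_ne (s := {x | f x = r})
    (by simp [hf]) (fun x _ => hfree x)
  rw [nsmul_eq_mul, (CharP.cast_eq_zero_iff R p _).mpr hdvd, zero_mul]

theorem exists_fixed_mem_of_fixed_mem_basis {R V : Type*} [Ring R] [CharP R p]
    [AddCommGroup V] [Module R V] [DistribMulAction G V] [SMulCommClass G R V] {S T : Finset V}
    (hS : LinearIndepOn R id (S : Set V)) (hSspan : Submodule.span R (S : Set V) = ⊤)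
    (hSG : ∀ g : G, ∀ x ∈ S, g • x ∈ S)
    (hT : LinearIndepOn R id (T : Set V)) (hTspan : Submodule.span R (T : Set V) = ⊤)
    (hTG : ∀ g : G, ∀ x ∈ T, g • x ∈ T) {w : V} (hw : w ∈ S) (hwfix : ∀ g : G, g • w = w) :
    ∃ x ∈ T, ∀ g : G, g • x = x := by
  classical
  have : Nontrivial R := CharP.nontrivial_of_char_ne_one (Fact.out : p.Prime).one_lt.ne'
  let S' : SubMulAction G V := ⟨S, fun g {x} hx => hSG g x hx⟩
  let T' : SubMulAction G V := ⟨T, fun g {x} hx => hTG g x hx⟩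
  have : Finite T' := T.finite_toSet.to_subtype
  have := Fintype.ofFinite T'
  let bS : Module.Basis S' R V :=
    .mk (v := Subtype.val) hS (by rw [Subtype.range_coe]; exact hSspan.ge)
  let bT : Module.Basis T' R V :=
    .mk (v := Subtype.val) hT (by rw [Subtype.range_coe]; exact hTspan.ge)
  have hbS : ∀ i, bS i = i := Module.Basis.mk_apply _ _
  have hbT : ∀ i, bT i = i := Module.Basis.mk_apply _ _
  let iw : S' := ⟨w, hw⟩
  have hiw (g : G) : g • iw = iw := Subtype.ext (hwfix g)
  have hsum : ∑ t : T', bT.repr w t * bS.repr t iw = 1 := by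
    have := congrArg (fun v => bS.repr v iw) (bT.sum_repr w)
    simp only [map_sum, map_smul, Finsupp.coe_finsetSum, Finset.sum_apply, Finsupp.smul_apply,
      smul_eq_mul, hbT] at this
    rw [this, show w = bS iw from (hbS iw).symm, bS.repr_self, Finsupp.single_eq_same]
  obtain ⟨x, hx⟩ := hG.exists_fixed_point_of_sum_ne_zero
    (fun t : T' => bT.repr w t * bS.repr t iw) (fun g t => by
      rw [← bT.repr_smul_smul hbT g w t, hwfix, ← hiw g, SubMulAction.val_smul,
        bS.repr_smul_smul hbS, hiw])
    (by rw [hsum]; exact one_ne_zero)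
  exact ⟨x, x.2, fun g => congrArg Subtype.val (hx g)⟩

end IsPGroup

open Polynomial in
theorem LinearMap.finite_setOf_det_add_smul_eq_zero {R M : Type*} [CommRing R] [IsDomain R]
    [AddCommGroup M] [Module R M] [Module.Free R M] [Module.Finite R M] (f g : M →ₗ[R] M)
    {r₀ : R} (h : (f + r₀ • g).det ≠ 0) : {r : R | (f + r • g).det = 0}.Finite := by
  let b := Module.Free.chooseBasis R M
  let P : R[X] := ((toMatrix b b f).map C + (X : R[X]) • (toMatrix b b g).map C).det
  have eval_P (r : R) : P.eval r = (f + r • g).det := by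
    rw [← LinearMap.det_toMatrix b, ← coe_evalRingHom, RingHom.map_det]
    congr 1
    ext i j
    simp [mul_comm r]
  have hP : P ≠ 0 := fun hP => h (by rw [← eval_P, hP, eval_zero])
  simpa only [IsRoot, eval_P] using finite_setOfPred_isRoot hP

theorem finite_setOf_not_isUnit_add_smul_sub {F A : Type*} [Field F] [Ring A] [Algebra F A]
    [FiniteDimensional F A] (a : A) {u : A} (hu : IsUnit u) :
    {τ : F | ¬IsUnit (a + τ • (u - a))}.Finite := by
  have isUnit_iff (y : A) : IsUnit y ↔ (Algebra.lmul F A y).det ≠ 0 := by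
    rw [← Algebra.lmul_isUnit_iff (R := F), LinearMap.isUnit_iff_isUnit_det, isUnit_iff_ne_zero]
  simp_rw [isUnit_iff, not_not, map_add, map_smul]
  exact LinearMap.finite_setOf_det_add_smul_eq_zero _ _ (r₀ := 1)
    (by rwa [one_smul, ← map_add, add_sub_cancel, ← isUnit_iff])

theorem exists_bijective_id_add_smul_and_isUnit {F A ι : Type*} [Field F] [Infinite F]
    [Ring A] [Algebra F A] [FiniteDimensional F A] [Finite ι] (Δ : A →ₗ[F] A) (a : ι → A)
    {u : ι → A} (hu : ∀ i, IsUnit (u i)) :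
    ∃ τ : F, Function.Bijective (LinearMap.id + τ • Δ : A →ₗ[F] A) ∧
      ∀ i, IsUnit (a i + τ • (u i - a i)) := by
  have hbad : ({τ : F | (LinearMap.id + τ • Δ : A →ₗ[F] A).det = 0} ∪
      ⋃ i, {τ : F | ¬IsUnit (a i + τ • (u i - a i))}).Finite :=
    (LinearMap.finite_setOf_det_add_smul_eq_zero _ _ (r₀ := 0) (by simp)).union
      (Set.finite_iUnion fun i => finite_setOf_not_isUnit_add_smul_sub _ (hu i))
  obtain ⟨τ, hτ⟩ := hbad.infinite_compl.nonempty
  simp only [Set.mem_compl_iff, Set.mem_union, Set.mem_ofPred_eq, Set.mem_iUnion, not_or,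
    not_exists, not_not] at hτ
  refine ⟨τ, ?_, hτ.2⟩
  rw [← Module.End.isUnit_iff, LinearMap.isUnit_iff_isUnit_det]
  exact isUnit_iff_ne_zero.mpr hτ.1

theorem exists_isUnit_basis_of_stabilizer_le {F G A : Type*} [Field F] [Infinite F] [Ring A]
    [Algebra F A] [FiniteDimensional F A] [Group G] [DistribMulAction G A] [SMulCommClass G F A]
    (isUnit_smul : ∀ (g : G) {a : A}, IsUnit a → IsUnit (g • a)) {Ω : Finset A}
    (hli : LinearIndepOn F id (Ω : Set A)) (hspan : Submodule.span F (Ω : Set A) = ⊤)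
    (hΩ : ∀ g : G, ∀ x ∈ Ω, g • x ∈ Ω)
    (hstab : ∀ x ∈ Ω, ∃ u : A, IsUnit u ∧ stabilizer G x ≤ stabilizer G u) :
    ∃ Ω' : Finset A, (LinearIndepOn F id (Ω' : Set A) ∧ Submodule.span F (Ω' : Set A) = ⊤) ∧
      (∀ g : G, ∀ x ∈ Ω', g • x ∈ Ω') ∧ ∀ x ∈ Ω', IsUnit x := by
  classical
  let S : SubMulAction G A := ⟨Ω, fun g {x} hx => hΩ g x hx⟩
  have : Finite S := Ω.finite_toSet.to_subtype
  obtain ⟨Φ, hΦ⟩ := exists_mulActionHom_mem_of_stabilizer_le (t := {u : A | IsUnit u})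
    (fun g _ hu => isUnit_smul g hu) fun x : S => by
      obtain ⟨u, hu, hxu⟩ := hstab x x.2
      exact ⟨u, hu, by rwa [SubMulAction.stabilizer_of_subMul]⟩
  let b : Module.Basis S F A :=
    .mk (v := Subtype.val) hli (by rw [Subtype.range_coe]; exact hspan.ge)
  obtain ⟨τ, hbij, hunit⟩ := exists_bijective_id_add_smul_and_isUnit
    (b.constr F fun x => Φ x - x) (fun x : S => (x : A)) hΦ
  let T : A →ₗ[F] A := LinearMap.id + τ • b.constr F fun x => Φ x - x
  have T_apply (x : S) : T x = x + τ • (Φ x - x) := by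
    have := b.constr_basis F (fun x => Φ x - x) x
    rw [show b x = x from Module.Basis.mk_apply _ _ x] at this
    simp [T, this]
  have T_smul (g : G) (x : S) : T (g • x) = g • T x := by
    rw [← SubMulAction.val_smul, T_apply, T_apply, map_smul, SubMulAction.val_smul]
    simp only [smul_add, smul_sub, smul_comm g τ]
  refine ⟨Ω.image T, ⟨?_, ?_⟩, ?_, ?_⟩
  · rw [Finset.coe_image]
    exact hli.image (by rw [LinearMap.ker_eq_bot.mpr hbij.1]; exact disjoint_bot_right)
  · rw [Finset.coe_image, Submodule.span_image, hspan, Submodule.map_top,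
      LinearMap.range_eq_top.mpr hbij.2]
  · simp only [Finset.mem_image]
    rintro g _ ⟨x, hx, rfl⟩
    exact ⟨g • x, hΩ g x hx, T_smul g ⟨x, hx⟩⟩
  · simp only [Finset.mem_image]
    rintro _ ⟨x, hx, rfl⟩
    rw [T_apply ⟨x, hx⟩]
    exact hunit _

abbrev biAction {D A : Type*} [Group D] [Ring A] (σ : D →* Aˣ) :
    DistribMulAction (D × D) A where
  smul fg a := σ fg.1 * a * ↑(σ fg.2)⁻¹
  one_smul a := show (σ 1 : A) * a * ↑(σ 1)⁻¹ = a by simp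
  mul_smul x y a := show (σ (x * y).1 : A) * a * ↑(σ (x * y).2)⁻¹ =
      σ x.1 * (σ y.1 * a * ↑(σ y.2)⁻¹) * ↑(σ x.2)⁻¹ by simp [mul_assoc]
  smul_zero fg := show (σ fg.1 : A) * 0 * ↑(σ fg.2)⁻¹ = 0 by simp
  smul_add fg a b := show (σ fg.1 : A) * (a + b) * ↑(σ fg.2)⁻¹ =
      σ fg.1 * a * ↑(σ fg.2)⁻¹ + σ fg.1 * b * ↑(σ fg.2)⁻¹ by simp [mul_add, add_mul]

theorem stmt13_general (F : Type*) [Field F] [IsAlgClosed F] (p : ℕ) [Fact p.Prime] [CharP F p]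
    (D : Type*) [Group D] (hD : IsPGroup p D)
    (A : Type*) [Ring A] [Algebra F A] [FiniteDimensional F A] (σ : D →* Aˣ)
    (Ω : Finset A)
    (hbasis : LinearIndependent F (fun x : (Ω : Set A) => (x : A)) ∧
      Submodule.span F (Ω : Set A) = ⊤)
    (hstable : ∀ w ∈ Ω, ∀ f g : D, (σ f : A) * w * ((σ g)⁻¹ : Aˣ) ∈ Ω)
    (hbifree : ∀ w ∈ Ω, (∀ f : D, (σ f : A) * w = w → f = 1) ∧
      (∀ g : D, w * (σ g : A) = w → g = 1)) :
    (∀ (P Q : Subgroup D) (φ : Q ≃* P),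
        (∃ w ∈ Ω, ∀ q : Q,
          (σ ((φ q : P) : D) : A) * w * (((σ (q : D))⁻¹ : Aˣ) : A) = w) →
        ∃ u : Aˣ, ∀ q : Q, (σ ((φ q : P) : D) : A) * (u : A) = (u : A) * (σ (q : D) : A)) ↔
      (∃ Ω' : Finset A,
        (LinearIndependent F (fun x : (Ω' : Set A) => (x : A)) ∧
          Submodule.span F (Ω' : Set A) = ⊤) ∧
        (∀ w ∈ Ω', ∀ f g : D, (σ f : A) * w * ((σ g)⁻¹ : Aˣ) ∈ Ω') ∧
        ∀ w ∈ Ω', IsUnit w) := by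
  let _ : DistribMulAction (D × D) A := biAction σ
  have smul_def (fg : D × D) (a : A) : fg • a = (σ fg.1 : A) * a * ↑(σ fg.2)⁻¹ := rfl
  have : SMulCommClass (D × D) F A :=
    ⟨fun fg c a => by simp only [smul_def, Algebra.mul_smul_comm, Algebra.smul_mul_assoc]⟩
  constructor
  · intro ha
    have hstab (x : A) (hx : x ∈ Ω) :
        ∃ u : A, IsUnit u ∧ stabilizer (D × D) x ≤ stabilizer (D × D) u := by
      obtain ⟨P, Q, φ, hφ⟩ := (stabilizer (D × D) x).exists_mulEquiv_graph
        (fun a ha => (hbifree x hx).1 a (by simpa [smul_def] using ha))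
        (fun b hb => inv_eq_one.mp ((hbifree x hx).2 b⁻¹ (by simpa [smul_def] using hb)))
      obtain ⟨u, hu⟩ := ha P Q φ ⟨x, hx, fun q => (hφ _).mpr ⟨q, rfl⟩⟩
      refine ⟨u, u.isUnit, fun y hy => ?_⟩
      obtain ⟨q, rfl⟩ := (hφ y).mp hy
      rw [mem_stabilizer_iff, smul_def, hu q, Units.mul_inv_cancel_right]
    obtain ⟨Ω', hbasis', hstable', hunit'⟩ := exists_isUnit_basis_of_stabilizer_le
      (fun (fg : D × D) a ha => ((σ fg.1).isUnit.mul ha).mul (σ fg.2)⁻¹.isUnit)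
      hbasis.1 hbasis.2 (fun (fg : D × D) x hx => hstable x hx fg.1 fg.2) hstab
    exact ⟨Ω', hbasis', fun w hw f g => hstable' (f, g) w hw, hunit'⟩
  · rintro ⟨Ω', ⟨hli', hspan'⟩, hstable', hunit'⟩ P Q φ ⟨w, hw, hwfix⟩
    let Δφ := ((P.subtype.comp φ.toMonoidHom).prod Q.subtype).range
    obtain ⟨x, hx, hxfix⟩ := IsPGroup.exists_fixed_mem_of_fixed_mem_basis (G := Δφ)
      ((hD.to_subgroup Q).of_surjective _ (MonoidHom.rangeRestrict_surjective _))
      hbasis.1 hbasis.2 (fun g y hy => hstable y hy _ _)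
      hli' hspan' (fun g y hy => hstable' y hy _ _) hw (by rintro ⟨_, q, rfl⟩; exact hwfix q)
    refine ⟨(hunit' x hx).unit, fun q => ?_⟩
    rw [IsUnit.unit_spec, ← Units.mul_inv_eq_iff_eq_mul]
    exact hxfix ⟨_, q, rfl⟩

/-- Theorem 6.1: let `A` be a bifree bipermutation `D`-algebra (with `D×D`-stable basis
`Ω` on which `D×1` and `1×D` act freely).  Then the following are equivalent:
(a) whenever `φ : Q → P` is an isomorphism between subgroups of `D` with
`Ω^{Δφ} ≠ ∅`, there is a unit `u ∈ Aˣ` with `σ(φ(q)) u = u σ(q)` for all `q ∈ Q`;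
(b) `A` has a unital `D×D`-stable basis. -/
theorem stmt13 (F : Type*) [Field F] [IsAlgClosed F] (p : ℕ) [Fact p.Prime] [CharP F p]
    (D : Type*) [Group D] [Finite D] (hD : IsPGroup p D)
    (A : Type*) [Ring A] [Algebra F A] [FiniteDimensional F A] (σ : D →* Aˣ)
    (Ω : Finset A)
    (hbasis : LinearIndependent F (fun x : (Ω : Set A) => (x : A)) ∧
      Submodule.span F (Ω : Set A) = ⊤)
    (hstable : ∀ w ∈ Ω, ∀ f g : D, (σ f : A) * w * ((σ g)⁻¹ : Aˣ) ∈ Ω)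
    (hbifree : ∀ w ∈ Ω, (∀ f : D, (σ f : A) * w = w → f = 1) ∧
      (∀ g : D, w * (σ g : A) = w → g = 1)) :
    (∀ (P Q : Subgroup D) (φ : Q ≃* P),
        (∃ w ∈ Ω, ∀ q : Q,
          (σ ((φ q : P) : D) : A) * w * (((σ (q : D))⁻¹ : Aˣ) : A) = w) →
        ∃ u : Aˣ, ∀ q : Q, (σ ((φ q : P) : D) : A) * (u : A) = (u : A) * (σ (q : D) : A)) ↔
      (∃ Ω' : Finset A,
        (LinearIndependent F (fun x : (Ω' : Set A) => (x : A)) ∧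
          Submodule.span F (Ω' : Set A) = ⊤) ∧
        (∀ w ∈ Ω', ∀ f g : D, (σ f : A) * w * ((σ g)⁻¹ : Aˣ) ∈ Ω') ∧
        ∀ w ∈ Ω', IsUnit w) :=
  stmt13_general F p D hD A σ Ω hbasis hstable hbifree
end

section
/- Let F be a field of prime characteristic p, let G be a finite group, let P be a subgroup of G that is a p-group, and let x be an element of the group algebra FG such that u x u⁻¹ = x for every u ∈ P (where elements of G are identified with their images in FG). Then Σ_{g∈G} x_g = Σ_{g∈C_G(P)} x_g in F, where x_g denotes the coefficient of g in x and C_G(P) is the centralizer of P in G. -/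
/-!
Conjugation by `P` permutes `G` and preserves the coefficients of `x`, so the coefficient sum
splits into sums over `P`-orbits, each a multiple of the orbit's size. Orbits of a `p`-group
have `p`-power size, so in characteristic `p` only the one-point orbits survive, and these are
exactly the elements of `C_G(P)`.
-/

open MulAction Set

theorem MulAction.eq_of_mem_orbit_of_mem_fixedPoints {G α : Type*} [Group G] [MulAction G α]
    {a b : α} (hb : b ∈ orbit G a) (hfix : b ∈ fixedPoints G α) : b = a := by
  obtain ⟨g, rfl⟩ := mem_orbit_symm.mp hb
  exact (hfix g).symm

namespace IsPGroup

variable {p : ℕ} [Fact p.Prime] {G α : Type*} [Group G] [MulAction G α]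

theorem dvd_card_orbit_of_notMem_fixedPoints (hG : IsPGroup p G) {a : α} [Finite (orbit G a)]
    (ha : a ∉ fixedPoints G α) : p ∣ Nat.card (orbit G a) := by
  obtain ⟨_ | n, hn⟩ := hG.card_orbit a
  · refine absurd ?_ ha
    rw [← subsingleton_orbit_iff_mem_fixedPoints, ← subsingleton_coe]
    exact (Nat.card_eq_one_iff_unique.mp hn).1
  · exact hn ▸ dvd_pow_self p n.succ_ne_zero

variable {R : Type*} [NonAssocSemiring R] [CharP R p]

theorem sum_orbit_eq_sum_orbit_inter_fixedPoints [Finite α] (hG : IsPGroup p G) {f : α → R}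
    (hf : ∀ (g : G) (a : α), f (g • a) = f a) (a : α) :
    ∑ b ∈ (toFinite (orbit G a)).toFinset, f b =
      ∑ b ∈ (toFinite (orbit G a ∩ fixedPoints G α)).toFinset, f b := by
  by_cases ha : a ∈ fixedPoints G α
  · have horbit : orbit G a = {a} :=
      (subsingleton_orbit_iff_mem_fixedPoints.mpr ha).eq_singleton_of_mem (mem_orbit_self a)
    simp [horbit, ha]
  · have hconst : ∀ b ∈ (toFinite (orbit G a)).toFinset, f b = f a := by
      rintro b hb
      obtain ⟨g, rfl⟩ := (Finite.mem_toFinset _).mp hb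
      exact hf g a
    have hcard : ((toFinite (orbit G a)).toFinset.card : R) = 0 := by
      rw [← ncard_eq_toFinset_card, ← Nat.card_coe_set_eq, CharP.cast_eq_zero_iff R p]
      exact hG.dvd_card_orbit_of_notMem_fixedPoints ha
    rw [Finset.sum_eq_card_nsmul hconst, nsmul_eq_mul, hcard, zero_mul, eq_comm]
    refine Finset.sum_eq_zero fun b hb => absurd ?_ ha
    obtain ⟨hb, hfix⟩ := (Finite.mem_toFinset _).mp hb
    exact eq_of_mem_orbit_of_mem_fixedPoints hb hfix ▸ hfix

theorem sum_eq_sum_fixedPoints [Fintype α] (hG : IsPGroup p G) {f : α → R}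
    (hf : ∀ (g : G) (a : α), f (g • a) = f a) :
    ∑ a, f a = ∑ a ∈ (toFinite (fixedPoints G α)).toFinset, f a := by
  classical
  rw [← Finset.sum_fiberwise _ (Quotient.mk (orbitRel G α)),
    ← Finset.sum_fiberwise _ (Quotient.mk (orbitRel G α))]
  refine Finset.sum_congr rfl fun ω _ => ?_
  induction ω using Quotient.inductionOn with | h a => ?_
  have hfiber (b : α) : Quotient.mk (orbitRel G α) b = ⟦a⟧ ↔ b ∈ orbit G a :=
    Quotient.eq.trans orbitRel_apply
  convert hG.sum_orbit_eq_sum_orbit_inter_fixedPoints hf a using 2 <;> ext b <;>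
    simp [hfiber, and_comm]

end IsPGroup

theorem MonoidAlgebra.coeff_of_mul_mul_of_inv {k G : Type*} [Semiring k] [Group G]
    (x : MonoidAlgebra k G) (u g : G) :
    (of k G u * x * of k G u⁻¹).coeff (u * g * u⁻¹) = x.coeff g := by
  simp [of_apply, mul_assoc]

namespace Subgroup

variable {G : Type*} [Group G]

-- `P` inside `ConjAct G`, so that it acts on `G` by conjugation rather than by multiplication.
abbrev conjAct (P : Subgroup G) : Subgroup (ConjAct G) :=
  P.comap (ConjAct.ofConjAct : ConjAct G ≃* G).toMonoidHom

theorem fixedPoints_conjAct (P : Subgroup G) :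
    fixedPoints P.conjAct G = centralizer (P : Set G) := by
  ext g
  simp only [mem_fixedPoints, SetLike.mem_coe, mem_centralizer_iff]
  refine ⟨fun h u hu => ?_, fun h q => ?_⟩
  · have : u * g * u⁻¹ = g := h ⟨ConjAct.toConjAct u, hu⟩
    rwa [mul_inv_eq_iff_eq_mul] at this
  · change ConjAct.ofConjAct (q : ConjAct G) * g * (ConjAct.ofConjAct (q : ConjAct G))⁻¹ = g
    rw [mul_inv_eq_iff_eq_mul]
    exact h _ q.2

end Subgroup

theorem IsPGroup.conjAct {p : ℕ} {G : Type*} [Group G] {P : Subgroup G} (hP : IsPGroup p P) :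
    IsPGroup p P.conjAct :=
  hP.comap_of_injective _ ConjAct.ofConjAct.injective

/-- From the proof of Theorem 7.5: if `P` is a `p`-subgroup of the finite group `G`, `F`
has characteristic `p`, and `x ∈ FG` is fixed under conjugation by every element of `P`,
then the sum of all coefficients of `x` equals the sum of the coefficients of `x` over the
centralizer `C_G(P)`. -/
theorem stmt16 (F : Type*) [Field F] (p : ℕ) [Fact p.Prime] [CharP F p]
    (G : Type*) [Group G] [Fintype G] (P : Subgroup G) (hP : IsPGroup p P)
    (x : MonoidAlgebra F G)
    (hx : ∀ u ∈ P, MonoidAlgebra.of F G u * x * MonoidAlgebra.of F G u⁻¹ = x) :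
    ∑ g : G, x.coeff g = ∑ g ∈ (Set.toFinite ((Subgroup.centralizer (P : Set G) : Subgroup G) : Set G)).toFinset, x.coeff g := by
  have hinv (q : P.conjAct) (g : G) : x.coeff (q • g) = x.coeff g := by
    nth_rewrite 1 [← hx (ConjAct.ofConjAct q) q.2]
    exact x.coeff_of_mul_mul_of_inv _ g
  rw [hP.conjAct.sum_eq_sum_fixedPoints hinv, Subgroup.fixedPoints_conjAct]
end
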